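/- arXiv:2104.00434 — 8 statements merged into one kernel-verified Lean document; each statement's English description precedes it below -/
import Mathlib

section
/- Let G be a finite group with property (P) and let x, y ∈ G with x of order 2 and x·y ≠ y·x. Then y has order 3 and x · (y⁻¹xy) · (y⁻²xy²) = 1. In particular, any two elements of order 2 in G commute. -/
set_option maxRecDepth 10000 in
lemma A4_key : ∀ a b : alternatingGroup (Fin 4),
    a ^ 2 = 1 → a ≠ 1 → a * b ≠ b * a →
    (b ^ 3 = 1 ∧ b ≠ 1) ∧ a * (b⁻¹ * a * b) * (b⁻¹ * b⁻¹ * a * b * b) = 1 := by decide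



/-- A finite group `G` has property (P) if it has even order and for all `x y : G`
with `x` of order 2, the subgroup generated by `x` and `y` is isomorphic to one of
`ℤ/2`, `ℤ/2 × ℤ/2`, `ℤ/4`, `ℤ/6`, `ℤ/2 × ℤ/4`, `ℤ/2 × ℤ/6` or `A₄`. -/
def PropertyP (G : Type*) [Group G] : Prop :=
  Even (Nat.card G) ∧
  ∀ x y : G, orderOf x = 2 →
    Nonempty (↥(Subgroup.closure {x, y}) ≃* Multiplicative (ZMod 2)) ∨
    Nonempty (↥(Subgroup.closure {x, y}) ≃*
      Multiplicative (ZMod 2) × Multiplicative (ZMod 2)) ∨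
    Nonempty (↥(Subgroup.closure {x, y}) ≃* Multiplicative (ZMod 4)) ∨
    Nonempty (↥(Subgroup.closure {x, y}) ≃* Multiplicative (ZMod 6)) ∨
    Nonempty (↥(Subgroup.closure {x, y}) ≃*
      Multiplicative (ZMod 2) × Multiplicative (ZMod 4)) ∨
    Nonempty (↥(Subgroup.closure {x, y}) ≃*
      Multiplicative (ZMod 2) × Multiplicative (ZMod 6)) ∨
    Nonempty (↥(Subgroup.closure {x, y}) ≃* alternatingGroup (Fin 4))


lemma commute_of_comm_iso {G : Type*} [Group G] (x y : G) {K : Type*} [CommGroup K]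
    (e : ↥(Subgroup.closure {x, y}) ≃* K) : x * y = y * x := by
  have hx : x ∈ Subgroup.closure {x, y} := Subgroup.subset_closure (by simp)
  have hy : y ∈ Subgroup.closure {x, y} := Subgroup.subset_closure (by simp)
  have h : e (⟨x, hx⟩ * ⟨y, hy⟩) = e (⟨y, hy⟩ * ⟨x, hx⟩) := by
    rw [map_mul, map_mul, mul_comm]
  exact Subtype.ext_iff.mp (e.injective h)

/-- if `G` has property (P), `x` has order 2 and `x` does not commute with
`y`, then `y` has order 3 and `x ⬝ (y⁻¹xy) ⬝ (y⁻²xy²) = 1`; in particular any two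
elements of order 2 commute. -/
theorem stmt1 (G : Type*) [Group G] [Finite G] (hP : PropertyP G) :
    (∀ x y : G, orderOf x = 2 → x * y ≠ y * x →
      orderOf y = 3 ∧ x * (y⁻¹ * x * y) * (y⁻¹ * y⁻¹ * x * y * y) = 1) ∧
    (∀ x y : G, orderOf x = 2 → orderOf y = 2 → x * y = y * x) := by
  have key : ∀ x y : G, orderOf x = 2 → x * y ≠ y * x →
      orderOf y = 3 ∧ x * (y⁻¹ * x * y) * (y⁻¹ * y⁻¹ * x * y * y) = 1 := by
    intro x y hx2 hxy
    rcases hP.2 x y hx2 with h | h | h | h | h | h | h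
    · obtain ⟨e⟩ := h; exact absurd (commute_of_comm_iso x y e) hxy
    · obtain ⟨e⟩ := h; exact absurd (commute_of_comm_iso x y e) hxy
    · obtain ⟨e⟩ := h; exact absurd (commute_of_comm_iso x y e) hxy
    · obtain ⟨e⟩ := h; exact absurd (commute_of_comm_iso x y e) hxy
    · obtain ⟨e⟩ := h; exact absurd (commute_of_comm_iso x y e) hxy
    · obtain ⟨e⟩ := h; exact absurd (commute_of_comm_iso x y e) hxy
    · obtain ⟨e⟩ := h
      have hx : x ∈ Subgroup.closure {x, y} := Subgroup.subset_closure (by simp)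
      have hy : y ∈ Subgroup.closure {x, y} := Subgroup.subset_closure (by simp)
      set H := Subgroup.closure {x, y} with hH
      set a : H := ⟨x, hx⟩ with ha
      set b : H := ⟨y, hy⟩ with hb
      have hxsq : x ^ 2 = 1 := by rw [← hx2]; exact pow_orderOf_eq_one x
      have hxne : x ≠ 1 := by
        intro h; rw [h, orderOf_one] at hx2; omega
      have ha2 : (e a) ^ 2 = 1 := by
        rw [← map_pow, ← map_one e]
        exact congrArg e (Subtype.ext hxsq)
      have hane : e a ≠ 1 := by
        intro h
        apply hxne
        have := e.injective (h.trans (map_one e).symm)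
        exact Subtype.ext_iff.mp this
      have habne : e a * e b ≠ e b * e a := by
        intro h
        apply hxy
        rw [← map_mul, ← map_mul] at h
        exact Subtype.ext_iff.mp (e.injective h)
      obtain ⟨⟨hb3, hbne⟩, hprod⟩ := A4_key (e a) (e b) ha2 hane habne
      have hy3 : y ^ 3 = 1 := by
        have : e (b ^ 3) = e 1 := by rw [map_pow, map_one]; exact hb3
        exact Subtype.ext_iff.mp (e.injective this)
      have hyne : y ≠ 1 := by
        intro h
        apply hbne
        rw [← map_one e]
        exact congrArg e (Subtype.ext h)
      haveI : Fact (Nat.Prime 3) := ⟨by norm_num⟩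
      refine ⟨orderOf_eq_prime hy3 hyne, ?_⟩
      have : e (a * (b⁻¹ * a * b) * (b⁻¹ * b⁻¹ * a * b * b)) = e 1 := by
        rw [map_one]
        simpa [map_mul, map_inv] using hprod
      exact Subtype.ext_iff.mp (e.injective this)
  refine ⟨key, fun x y hx hy => ?_⟩
  by_contra h
  obtain ⟨h3, -⟩ := key x y hx h
  rw [hy] at h3
  omega
end

section
/- Let G be a finite group with property (P), let P be a Sylow 2-subgroup of G and let Q be a Sylow 3-subgroup of G. Then every element of P has order dividing 4, Ω₁(P) ≤ Z(P), and every element of Q has order dividing 3. -/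
/-- `Ω₁(H)`: the subgroup generated by all elements of order 2. -/
def omegaOne (G : Type*) [Group G] : Subgroup G :=
  Subgroup.closure {x : G | orderOf x = 2}

private lemma d1 : ∀ z : Multiplicative (ZMod 2), z ^ 12 = 1 := by decide
private lemma d2 : ∀ z : Multiplicative (ZMod 2) × Multiplicative (ZMod 2), z ^ 12 = 1 := by decide
private lemma d3 : ∀ z : Multiplicative (ZMod 4), z ^ 12 = 1 := by decide
private lemma d4 : ∀ z : Multiplicative (ZMod 6), z ^ 12 = 1 := by decide
private lemma d5 : ∀ z : Multiplicative (ZMod 2) × Multiplicative (ZMod 4), z ^ 12 = 1 := by decide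
private lemma d6 : ∀ z : Multiplicative (ZMod 2) × Multiplicative (ZMod 6), z ^ 12 = 1 := by decide
set_option maxRecDepth 8000 in
private lemma d7 : ∀ z : alternatingGroup (Fin 4), z ^ 12 = 1 := by decide

/-- Transport `z ^ 12 = 1` through a `MulEquiv`. -/
private lemma exp12 {K : Type*} [Group K] (hk : ∀ z : K, z ^ 12 = 1)
    {H : Type*} [Group H] (e : H ≃* K) (h : H) : h ^ 12 = 1 := by
  apply e.injective
  rw [map_pow, map_one, hk]

/-- In a group with property (P), every element satisfies `y ^ 12 = 1`. -/
private lemma pow12 {G : Type*} [Group G] [Finite G] (hP : PropertyP G) (y : G) :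
    y ^ 12 = 1 := by
  classical
  have : Fintype G := Fintype.ofFinite G
  obtain ⟨x, hx⟩ : ∃ x : G, orderOf x = 2 := by
    refine exists_prime_orderOf_dvd_card 2 ?_
    rw [← Nat.card_eq_fintype_card]
    exact hP.1.two_dvd
  have hy : y ∈ Subgroup.closure {x, y} :=
    Subgroup.subset_closure (Set.mem_insert_of_mem _ rfl)
  have hb : (⟨y, hy⟩ : Subgroup.closure {x, y}) ^ 12 = 1 := by
    rcases hP.2 x y hx with h | h | h | h | h | h | h
    · obtain ⟨e⟩ := h; exact exp12 d1 e _
    · obtain ⟨e⟩ := h; exact exp12 d2 e _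
    · obtain ⟨e⟩ := h; exact exp12 d3 e _
    · obtain ⟨e⟩ := h; exact exp12 d4 e _
    · obtain ⟨e⟩ := h; exact exp12 d5 e _
    · obtain ⟨e⟩ := h; exact exp12 d6 e _
    · obtain ⟨e⟩ := h; exact exp12 d7 e _
  have := congrArg (Subtype.val) hb
  simpa using this

/-- A subgroup of a Sylow 2-subgroup cannot be isomorphic to `A₄`. -/
private lemma noA4 {G : Type*} [Group G] [Finite G] (P : Sylow 2 G)
    {H : Subgroup G} (hH : H ≤ (P : Subgroup G))
    (e : ↥H ≃* alternatingGroup (Fin 4)) : False := by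
  obtain ⟨z, hz3, hz1⟩ : ∃ z : alternatingGroup (Fin 4), z ^ 3 = 1 ∧ z ≠ 1 := by decide
  have hoz : orderOf z = 3 := orderOf_eq_prime hz3 hz1
  set h : ↥H := e.symm z with hdef
  have h3 : orderOf h = 3 := by
    rw [← hoz]
    exact orderOf_injective e.symm.toMonoidHom e.symm.injective z
  have hmem : (h : G) ∈ (P : Subgroup G) := hH h.2
  obtain ⟨k, hk⟩ := IsPGroup.iff_orderOf.mp P.2 (⟨(h : G), hmem⟩ : ↥(P : Subgroup G))
  rw [Subgroup.orderOf_mk, Subgroup.orderOf_coe, h3] at hk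
  rcases k with _ | k
  · simp at hk
  · have : (2 : ℕ) ∣ 3 := hk ▸ dvd_pow_self 2 (Nat.succ_ne_zero k)
    norm_num at this

/-- Transport commutativity through a `MulEquiv` to a commutative group. -/
private lemma commOf {H : Type*} [Group H] {K : Type*} [CommGroup K]
    (e : H ≃* K) (a b : H) : a * b = b * a :=
  e.injective (by rw [map_mul, map_mul, mul_comm])

/-- if `G` has property (P), `P` is a Sylow 2-subgroup and `Q` a Sylow
3-subgroup, then every element of `P` has order dividing 4, `Ω₁(P) ≤ Z(P)` and every
element of `Q` has order dividing 3. -/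
theorem stmt2 (G : Type*) [Group G] [Finite G] (hP : PropertyP G)
    (P : Sylow 2 G) (Q : Sylow 3 G) :
    (∀ x : ↥(P : Subgroup G), orderOf x ∣ 4) ∧
    omegaOne ↥(P : Subgroup G) ≤ Subgroup.center ↥(P : Subgroup G) ∧
    (∀ x : ↥(Q : Subgroup G), orderOf x ∣ 3) := by
  have h12 : ∀ g : G, orderOf g ∣ 12 := fun g =>
    orderOf_dvd_of_pow_eq_one (pow12 hP g)
  refine ⟨?_, ?_, ?_⟩
  · intro y
    obtain ⟨k, hk⟩ := IsPGroup.iff_orderOf.mp P.2 y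
    have hd : orderOf y ∣ 12 := (Subgroup.orderOf_coe y) ▸ h12 (y : G)
    rw [hk] at hd ⊢
    have hcop : Nat.Coprime (2 ^ k) 3 := Nat.Coprime.pow_left _ (by norm_num)
    exact hcop.dvd_of_dvd_mul_right (by exact_mod_cast hd)
  · rw [omegaOne, Subgroup.closure_le]
    intro x hx
    simp only [Set.mem_setOf_eq] at hx
    have hx' : orderOf (x : G) = 2 := by rw [Subgroup.orderOf_coe, hx]
    rw [SetLike.mem_coe, Subgroup.mem_center_iff]
    intro g
    have hxm : (x : G) ∈ Subgroup.closure {(x : G), (g : G)} :=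
      Subgroup.subset_closure (Set.mem_insert _ _)
    have hgm : (g : G) ∈ Subgroup.closure {(x : G), (g : G)} :=
      Subgroup.subset_closure (Set.mem_insert_of_mem _ rfl)
    have hle : Subgroup.closure {(x : G), (g : G)} ≤ (P : Subgroup G) := by
      rw [Subgroup.closure_le]
      rintro z (rfl | rfl)
      exacts [x.2, g.2]
    have hcomm : (x : G) * (g : G) = (g : G) * (x : G) := by
      rcases hP.2 (x : G) (g : G) hx' with h | h | h | h | h | h | h
      · obtain ⟨e⟩ := h; exact congrArg Subtype.val (commOf e ⟨_, hxm⟩ ⟨_, hgm⟩)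
      · obtain ⟨e⟩ := h; exact congrArg Subtype.val (commOf e ⟨_, hxm⟩ ⟨_, hgm⟩)
      · obtain ⟨e⟩ := h; exact congrArg Subtype.val (commOf e ⟨_, hxm⟩ ⟨_, hgm⟩)
      · obtain ⟨e⟩ := h; exact congrArg Subtype.val (commOf e ⟨_, hxm⟩ ⟨_, hgm⟩)
      · obtain ⟨e⟩ := h; exact congrArg Subtype.val (commOf e ⟨_, hxm⟩ ⟨_, hgm⟩)
      · obtain ⟨e⟩ := h; exact congrArg Subtype.val (commOf e ⟨_, hxm⟩ ⟨_, hgm⟩)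
      · obtain ⟨e⟩ := h; exact (noA4 P hle e).elim
    exact Subtype.ext (by simpa using hcomm.symm)
  · intro y
    obtain ⟨k, hk⟩ := IsPGroup.iff_orderOf.mp Q.2 y
    have hd : orderOf y ∣ 12 := (Subgroup.orderOf_coe y) ▸ h12 (y : G)
    rw [hk] at hd ⊢
    have hcop : Nat.Coprime (3 ^ k) 4 := Nat.Coprime.pow_left _ (by norm_num)
    have h34 : (3 : ℕ) ^ k ∣ 3 * 4 := by exact_mod_cast hd
    exact hcop.dvd_of_dvd_mul_right h34
end

section
/- Let G be a finite group with property (P). Then (a) every subgroup H ≤ G of even order has property (P), and (b) for every normal subgroup N of G whose order is a power of 3, the quotient group G/N has property (P). -/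
open Subgroup

/-- abbreviation for the 7-fold disjunction -/
def Is7 (Q : Type*) [Group Q] : Prop :=
  Nonempty (Q ≃* Multiplicative (ZMod 2)) ∨
  Nonempty (Q ≃* Multiplicative (ZMod 2) × Multiplicative (ZMod 2)) ∨
  Nonempty (Q ≃* Multiplicative (ZMod 4)) ∨
  Nonempty (Q ≃* Multiplicative (ZMod 6)) ∨
  Nonempty (Q ≃* Multiplicative (ZMod 2) × Multiplicative (ZMod 4)) ∨
  Nonempty (Q ≃* Multiplicative (ZMod 2) × Multiplicative (ZMod 6)) ∨
  Nonempty (Q ≃* alternatingGroup (Fin 4))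

lemma Is7.of_equiv {A B : Type*} [Group A] [Group B] (e : B ≃* A) (h : Is7 A) : Is7 B := by
  rcases h with h|h|h|h|h|h|h
  exacts [Or.inl ⟨e.trans h.some⟩, Or.inr (Or.inl ⟨e.trans h.some⟩),
    Or.inr (Or.inr (Or.inl ⟨e.trans h.some⟩)),
    Or.inr (Or.inr (Or.inr (Or.inl ⟨e.trans h.some⟩))),
    Or.inr (Or.inr (Or.inr (Or.inr (Or.inl ⟨e.trans h.some⟩)))),
    Or.inr (Or.inr (Or.inr (Or.inr (Or.inr (Or.inl ⟨e.trans h.some⟩))))),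
    Or.inr (Or.inr (Or.inr (Or.inr (Or.inr (Or.inr ⟨e.trans h.some⟩)))))]

lemma quotTriv {Ω : Type*} [Group Ω] [Finite Ω] (M : Subgroup Ω) [M.Normal]
    (h3 : IsPGroup 3 M) (hnd : ¬ (3 ∣ Nat.card Ω)) : Nonempty (Ω ⧸ M ≃* Ω) := by
  have : Fact (Nat.Prime 3) := ⟨by norm_num⟩
  obtain ⟨m, hm⟩ := h3.exists_card_eq
  have hdvd : Nat.card M ∣ Nat.card Ω := Subgroup.card_subgroup_dvd_card M
  have hm0 : m = 0 := by
    by_contra h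
    exact hnd ((dvd_pow_self 3 h).trans (hm ▸ hdvd))
  have hM : M = ⊥ := Subgroup.card_eq_one.mp (by rw [hm, hm0, pow_zero])
  subst hM
  exact ⟨QuotientGroup.quotientBot (G := Ω)⟩

lemma quotSurj {Ω T : Type*} [Group Ω] [Finite Ω] [Group T] (ψ : Ω →* T)
    (hs : Function.Surjective ψ) (M : Subgroup Ω) [M.Normal]
    (hle : M ≤ ψ.ker) (hcard : Nat.card M = Nat.card ψ.ker) :
    Nonempty (Ω ⧸ M ≃* T) := by
  have hMk : M = ψ.ker := Subgroup.eq_of_le_of_card_ge hle (le_of_eq hcard.symm)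
  subst hMk
  exact ⟨QuotientGroup.quotientKerEquivOfSurjective ψ hs⟩

lemma kerCard {Ω T : Type*} [Group Ω] [Finite Ω] [Group T] (ψ : Ω →* T)
    (hs : Function.Surjective ψ) :
    Nat.card Ω = Nat.card T * Nat.card ψ.ker := by
  rw [Subgroup.card_eq_card_quotient_mul_card_subgroup ψ.ker]
  congr 1
  exact Nat.card_congr (QuotientGroup.quotientKerEquivOfSurjective ψ hs).toEquiv

def psi6 : Multiplicative (ZMod 6) →* Multiplicative (ZMod 2) :=
  AddMonoidHom.toMultiplicative (ZMod.castHom (by norm_num : (2:ℕ) ∣ 6) (ZMod 2)).toAddMonoidHom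

lemma psi6_surj : Function.Surjective psi6 := by decide

lemma ordDvd3 {Ω : Type*} [Group Ω] [Finite Ω] {M : Subgroup Ω}
    (h3 : IsPGroup 3 M) {c : ℕ} (hc : Nat.card Ω = 3 * c) (hcop : Nat.Coprime 3 c)
    {g : Ω} (hg : g ∈ M) : g ^ 3 = 1 := by
  obtain ⟨n, hn⟩ := h3 ⟨g, hg⟩
  have hgn : g ^ 3 ^ n = 1 := by
    have := congrArg (Subgroup.subtype M) hn
    simpa using this
  have h1 : orderOf g ∣ 3 ^ n := orderOf_dvd_of_pow_eq_one hgn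
  have h2 : orderOf g ∣ 3 * c := hc ▸ orderOf_dvd_natCard g
  have hcop' : Nat.Coprime (orderOf g) c :=
    Nat.Coprime.coprime_dvd_left h1 (Nat.Coprime.pow_left n hcop)
  exact orderOf_dvd_iff_pow_eq_one.mp (hcop'.dvd_of_dvd_mul_right h2)

lemma pow3_le_one (m : ℕ) (h : (3:ℕ)^m ∣ 12) : m = 0 ∨ m = 1 := by
  rcases m with _|_|m
  · exact Or.inl rfl
  · exact Or.inr rfl
  · exfalso
    have h9 : (9:ℕ) ∣ 3 ^ (m+2) := by
      have : (3:ℕ) ^ (m+2) = 3 ^ m * 9 := by ring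
      rw [this]; exact dvd_mul_left 9 (3 ^ m)
    have : (9:ℕ) ∣ 12 := h9.trans h
    omega

lemma q2 (M : Subgroup (Multiplicative (ZMod 2))) [M.Normal] (h3 : IsPGroup 3 M) :
    Is7 (Multiplicative (ZMod 2) ⧸ M) := by
  have h : Nat.card (Multiplicative (ZMod 2)) = 2 := by simp [Nat.card_eq_fintype_card]
  exact Or.inl (quotTriv M h3 (by rw [h]; decide))

lemma q22 (M : Subgroup (Multiplicative (ZMod 2) × Multiplicative (ZMod 2))) [M.Normal]
    (h3 : IsPGroup 3 M) :
    Is7 ((Multiplicative (ZMod 2) × Multiplicative (ZMod 2)) ⧸ M) := by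
  have h : Nat.card (Multiplicative (ZMod 2) × Multiplicative (ZMod 2)) = 4 := by
    simp [Nat.card_eq_fintype_card]
  exact Or.inr (Or.inl (quotTriv M h3 (by rw [h]; decide)))

lemma q4 (M : Subgroup (Multiplicative (ZMod 4))) [M.Normal] (h3 : IsPGroup 3 M) :
    Is7 (Multiplicative (ZMod 4) ⧸ M) := by
  have h : Nat.card (Multiplicative (ZMod 4)) = 4 := by simp [Nat.card_eq_fintype_card]
  exact Or.inr (Or.inr (Or.inl (quotTriv M h3 (by rw [h]; decide))))

lemma q24 (M : Subgroup (Multiplicative (ZMod 2) × Multiplicative (ZMod 4))) [M.Normal]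
    (h3 : IsPGroup 3 M) :
    Is7 ((Multiplicative (ZMod 2) × Multiplicative (ZMod 4)) ⧸ M) := by
  have h : Nat.card (Multiplicative (ZMod 2) × Multiplicative (ZMod 4)) = 8 := by
    simp [Nat.card_eq_fintype_card]
  exact Or.inr (Or.inr (Or.inr (Or.inr (Or.inl (quotTriv M h3 (by rw [h]; decide))))))

lemma q6 (M : Subgroup (Multiplicative (ZMod 6))) [M.Normal] (h3 : IsPGroup 3 M) :
    Is7 (Multiplicative (ZMod 6) ⧸ M) := by
  have : Fact (Nat.Prime 3) := ⟨by norm_num⟩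
  have hcard6 : Nat.card (Multiplicative (ZMod 6)) = 6 := by simp [Nat.card_eq_fintype_card]
  have hcard2 : Nat.card (Multiplicative (ZMod 2)) = 2 := by simp [Nat.card_eq_fintype_card]
  obtain ⟨m, hm⟩ := h3.exists_card_eq
  have hdvd : (3:ℕ)^m ∣ 12 := by
    have := Subgroup.card_subgroup_dvd_card M
    rw [hcard6, hm] at this
    exact this.trans (by norm_num)
  rcases pow3_le_one m hdvd with h|h
  · have hM : M = ⊥ := Subgroup.card_eq_one.mp (by rw [hm, h, pow_zero])
    subst hM
    exact Or.inr (Or.inr (Or.inr (Or.inl ⟨QuotientGroup.quotientBot (G := Multiplicative (ZMod 6))⟩)))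
  · have hkey : ∀ g : Multiplicative (ZMod 6), g ^ 3 = 1 → psi6 g = 1 := by decide
    have hle : M ≤ psi6.ker := fun g hg => by
      rw [MonoidHom.mem_ker]
      exact hkey g (ordDvd3 h3 (c := 2) (by rw [hcard6]) (by norm_num) hg)
    have hkc : Nat.card psi6.ker = 3 := by
      have := kerCard psi6 psi6_surj
      rw [hcard6, hcard2] at this
      omega
    exact Or.inl (quotSurj psi6 psi6_surj M hle (by rw [hm, h, pow_one, hkc]))

def psi26 : Multiplicative (ZMod 2) × Multiplicative (ZMod 6) →*
    Multiplicative (ZMod 2) × Multiplicative (ZMod 2) :=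
  (MonoidHom.id (Multiplicative (ZMod 2))).prodMap psi6

lemma psi26_surj : Function.Surjective psi26 :=
  Function.Surjective.prodMap Function.surjective_id psi6_surj

lemma q26 (M : Subgroup (Multiplicative (ZMod 2) × Multiplicative (ZMod 6))) [M.Normal]
    (h3 : IsPGroup 3 M) :
    Is7 ((Multiplicative (ZMod 2) × Multiplicative (ZMod 6)) ⧸ M) := by
  have : Fact (Nat.Prime 3) := ⟨by norm_num⟩
  have hcard12 : Nat.card (Multiplicative (ZMod 2) × Multiplicative (ZMod 6)) = 12 := by
    simp [Nat.card_eq_fintype_card]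
  have hcard4 : Nat.card (Multiplicative (ZMod 2) × Multiplicative (ZMod 2)) = 4 := by
    simp [Nat.card_eq_fintype_card]
  obtain ⟨m, hm⟩ := h3.exists_card_eq
  have hdvd : (3:ℕ)^m ∣ 12 := by
    have := Subgroup.card_subgroup_dvd_card M
    rw [hcard12, hm] at this
    exact this
  rcases pow3_le_one m hdvd with h|h
  · have hM : M = ⊥ := Subgroup.card_eq_one.mp (by rw [hm, h, pow_zero])
    subst hM
    exact Or.inr (Or.inr (Or.inr (Or.inr (Or.inr (Or.inl ⟨QuotientGroup.quotientBot (G := Multiplicative (ZMod 2) × Multiplicative (ZMod 6))⟩)))))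
  · have hkey : ∀ g : Multiplicative (ZMod 2) × Multiplicative (ZMod 6),
        g ^ 3 = 1 → psi26 g = 1 := by decide
    have hle : M ≤ psi26.ker := fun g hg => by
      rw [MonoidHom.mem_ker]
      exact hkey g (ordDvd3 h3 (c := 4) (by rw [hcard12]) (by norm_num) hg)
    have hkc : Nat.card psi26.ker = 3 := by
      have := kerCard psi26 psi26_surj
      rw [hcard12, hcard4] at this
      omega
    exact Or.inr (Or.inl (quotSurj psi26 psi26_surj M hle (by rw [hm, h, pow_one, hkc])))

set_option maxHeartbeats 1000000 in
lemma qA4 (M : Subgroup (alternatingGroup (Fin 4))) [M.Normal] (h3 : IsPGroup 3 M) :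
    Is7 ((alternatingGroup (Fin 4)) ⧸ M) := by
  have : Fact (Nat.Prime 3) := ⟨by norm_num⟩
  have hcard : Nat.card (alternatingGroup (Fin 4)) = 12 := by
    rw [Nat.card_eq_fintype_card]; decide
  obtain ⟨m, hm⟩ := h3.exists_card_eq
  have hdvd : (3:ℕ)^m ∣ 12 := by
    have := Subgroup.card_subgroup_dvd_card M
    rw [hcard, hm] at this
    exact this
  rcases pow3_le_one m hdvd with h|h
  · have hM : M = ⊥ := Subgroup.card_eq_one.mp (by rw [hm, h, pow_zero])
    subst hM
    exact Or.inr (Or.inr (Or.inr (Or.inr (Or.inr (Or.inr ⟨QuotientGroup.quotientBot (G := alternatingGroup (Fin 4))⟩)))))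
  · exfalso
    obtain ⟨⟨c, hcM⟩, hg⟩ := exists_prime_orderOf_dvd_card' (G := M) 3 (by rw [hm, h, pow_one])
    rw [Subgroup.orderOf_mk] at hg
    have hc3 : orderOf c = 3 := hg
    have hzle : Subgroup.zpowers c ≤ M := Subgroup.zpowers_le.mpr hcM
    have hMz : Subgroup.zpowers c = M :=
      Subgroup.eq_of_le_of_card_ge hzle (by rw [Nat.card_zpowers, hc3, hm, h, pow_one])
    have hdec : ∀ c : alternatingGroup (Fin 4), c^3 = 1 → c ≠ 1 →
        ∃ a, a*c*a⁻¹ ≠ 1 ∧ a*c*a⁻¹ ≠ c ∧ a*c*a⁻¹ ≠ c^2 := by decide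
    obtain ⟨a, h1, h2, h3'⟩ := hdec c (by rw [← hc3]; exact pow_orderOf_eq_one c)
      (by intro hc1; rw [hc1, orderOf_one] at hc3; omega)
    have hconj : a * c * a⁻¹ ∈ Subgroup.zpowers c := by
      rw [hMz]
      exact ‹M.Normal›.conj_mem c hcM a
    have hfo : IsOfFinOrder c := orderOf_pos_iff.mp (by rw [hc3]; norm_num)
    rw [← hfo.mem_powers_iff_mem_zpowers] at hconj
    obtain ⟨n, hn⟩ := hconj
    have hn' : c ^ n = a * c * a⁻¹ := hn
    have hmod : c ^ (n % 3) = a * c * a⁻¹ := by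
      rw [show (3:ℕ) = orderOf c from hc3.symm, pow_mod_orderOf, hn']
    have : n % 3 = 0 ∨ n % 3 = 1 ∨ n % 3 = 2 := by omega
    rcases this with h|h|h <;> rw [h] at hmod
    · exact h1 (by rw [← hmod, pow_zero])
    · exact h2 (by rw [← hmod, pow_one])
    · exact h3' hmod.symm

/-- property (P) is inherited by subgroups of even order and by
quotients by normal subgroups of 3-power order. -/
theorem stmt3 (G : Type*) [Group G] [Finite G] (hP : PropertyP G) :
    (∀ H : Subgroup G, Even (Nat.card H) → PropertyP H) ∧
    (∀ N : Subgroup G, ∀ _hN : N.Normal, (∃ k : ℕ, Nat.card N = 3 ^ k) →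
      PropertyP (G ⧸ N)) := by
  constructor
  · intro H hH
    refine ⟨hH, ?_⟩
    intro x y hx
    have hx' : orderOf (x : G) = 2 := by rw [Subgroup.orderOf_coe, hx]
    have h7 : Is7 (Subgroup.closure {(x:G), (y:G)}) := hP.2 x y hx'
    have hmap : (Subgroup.closure ({x, y} : Set H)).map H.subtype
        = Subgroup.closure {(x:G), (y:G)} := by
      rw [MonoidHom.map_closure]
      congr 1
      exact Set.image_pair _ _ _
    have e : ↥(Subgroup.closure ({x, y} : Set H)) ≃* ↥(Subgroup.closure {(x:G), (y:G)}) :=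
      (Subgroup.equivMapOfInjective _ H.subtype H.subtype_injective).trans
        (MulEquiv.subgroupCongr hmap)
    exact Is7.of_equiv e h7
  · intro N hN hk
    obtain ⟨k, hk⟩ := hk
    haveI := hN
    have hN3 : IsPGroup 3 N := IsPGroup.of_card hk
    have hcards : Nat.card G = Nat.card (G ⧸ N) * Nat.card N :=
      Subgroup.card_eq_card_quotient_mul_card_subgroup N
    refine ⟨?_, ?_⟩
    · have h2 : 2 ∣ Nat.card G := even_iff_two_dvd.mp hP.1
      rw [hcards, hk] at h2
      rw [even_iff_two_dvd]
      exact (Nat.Coprime.pow_right k (by norm_num)).dvd_of_dvd_mul_right h2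
    · intro xb yb hxb
      set π := QuotientGroup.mk' N with hπdef
      obtain ⟨y0, hy0⟩ := QuotientGroup.mk'_surjective N yb
      obtain ⟨x0, hx0⟩ := QuotientGroup.mk'_surjective N xb
      have hdvd2 : 2 ∣ orderOf x0 := by
        have h := orderOf_map_dvd π x0
        rw [hx0, hxb] at h
        exact h
      have hx2N : x0 ^ 2 ∈ N := by
        have h1 : π (x0 ^ 2) = 1 := by rw [map_pow, hx0, ← hxb, pow_orderOf_eq_one]
        rwa [← QuotientGroup.ker_mk' N, MonoidHom.mem_ker]
      have hord2 : orderOf (x0 ^ 2) ∣ 3 ^ k := by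
        have h1 : orderOf (⟨x0 ^ 2, hx2N⟩ : N) ∣ 3 ^ k := hk ▸ orderOf_dvd_natCard _
        rwa [Subgroup.orderOf_mk] at h1
      have hpow : orderOf (x0 ^ 2) = orderOf x0 / 2 := by
        rw [orderOf_pow, Nat.gcd_eq_right hdvd2]
      obtain ⟨j, hjk, hj⟩ := (Nat.dvd_prime_pow (by norm_num : Nat.Prime 3)).mp
        (hpow ▸ hord2)
      have hordx0 : orderOf x0 = 2 * 3 ^ j := by
        have h0 := Nat.div_mul_cancel hdvd2
        omega
      have hordx : orderOf (x0 ^ 3 ^ j) = 2 := by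
        rw [orderOf_pow, hordx0, Nat.gcd_eq_right ⟨2, by ring⟩,
          Nat.mul_div_cancel _ (by positivity)]
      have hπx : π (x0 ^ 3 ^ j) = xb := by
        have hodd : 3 ^ j % 2 = 1 := Nat.odd_iff.mp (Odd.pow (by decide))
        rw [map_pow, hx0, ← pow_mod_orderOf, hxb, hodd, pow_one]
      set x := x0 ^ 3 ^ j with hxdef
      have hcase : Is7 (Subgroup.closure {x, y0}) := hP.2 x y0 hordx
      set K := Subgroup.closure {x, y0} with hKdef
      set φ : ↥K →* G ⧸ N := π.comp K.subtype with hφdef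
      have hrange : φ.range = Subgroup.closure {xb, yb} := by
        rw [hφdef, MonoidHom.range_comp, Subgroup.range_subtype, hKdef,
          MonoidHom.map_closure, Set.image_pair, hπx, hy0]
      have hker3 : IsPGroup 3 φ.ker := by
        intro gg
        have hgN : ((gg : ↥K) : G) ∈ N := by
          have h1 : φ (gg : ↥K) = 1 := gg.2
          exact (QuotientGroup.eq_one_iff _).mp h1
        obtain ⟨n, hn⟩ := hN3 ⟨_, hgN⟩
        refine ⟨n, ?_⟩
        have h2 : ((gg : ↥K) : G) ^ 3 ^ n = 1 := by
          have := congrArg (Subgroup.subtype N) hn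
          simpa using this
        have key : (((gg ^ 3 ^ n : ↥φ.ker) : ↥K) : G) = 1 := by push_cast; exact h2
        exact Subtype.ext (Subtype.ext key)
      have E0 : ↥(Subgroup.closure {xb, yb}) ≃* (↥K ⧸ φ.ker) :=
        (MulEquiv.subgroupCongr hrange.symm).trans
          (QuotientGroup.quotientKerEquivRange φ).symm
      show Is7 (Subgroup.closure {xb, yb})
      rcases hcase with h|h|h|h|h|h|h
      · have e := h.some
        haveI hMn : (φ.ker.map e.toMonoidHom).Normal :=
          Subgroup.Normal.map inferInstance e.toMonoidHom e.surjective
        exact Is7.of_equiv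
          (E0.trans (QuotientGroup.congr φ.ker (φ.ker.map e.toMonoidHom) e rfl))
          (q2 _ (hker3.map e.toMonoidHom))
      · have e := h.some
        haveI hMn : (φ.ker.map e.toMonoidHom).Normal :=
          Subgroup.Normal.map inferInstance e.toMonoidHom e.surjective
        exact Is7.of_equiv
          (E0.trans (QuotientGroup.congr φ.ker (φ.ker.map e.toMonoidHom) e rfl))
          (q22 _ (hker3.map e.toMonoidHom))
      · have e := h.some
        haveI hMn : (φ.ker.map e.toMonoidHom).Normal :=
          Subgroup.Normal.map inferInstance e.toMonoidHom e.surjective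
        exact Is7.of_equiv
          (E0.trans (QuotientGroup.congr φ.ker (φ.ker.map e.toMonoidHom) e rfl))
          (q4 _ (hker3.map e.toMonoidHom))
      · have e := h.some
        haveI hMn : (φ.ker.map e.toMonoidHom).Normal :=
          Subgroup.Normal.map inferInstance e.toMonoidHom e.surjective
        exact Is7.of_equiv
          (E0.trans (QuotientGroup.congr φ.ker (φ.ker.map e.toMonoidHom) e rfl))
          (q6 _ (hker3.map e.toMonoidHom))
      · have e := h.some
        haveI hMn : (φ.ker.map e.toMonoidHom).Normal :=
          Subgroup.Normal.map inferInstance e.toMonoidHom e.surjective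
        exact Is7.of_equiv
          (E0.trans (QuotientGroup.congr φ.ker (φ.ker.map e.toMonoidHom) e rfl))
          (q24 _ (hker3.map e.toMonoidHom))
      · have e := h.some
        haveI hMn : (φ.ker.map e.toMonoidHom).Normal :=
          Subgroup.Normal.map inferInstance e.toMonoidHom e.surjective
        exact Is7.of_equiv
          (E0.trans (QuotientGroup.congr φ.ker (φ.ker.map e.toMonoidHom) e rfl))
          (q26 _ (hker3.map e.toMonoidHom))
      · have e := h.some
        haveI hMn : (φ.ker.map e.toMonoidHom).Normal :=
          Subgroup.Normal.map inferInstance e.toMonoidHom e.surjective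
        exact Is7.of_equiv
          (E0.trans (QuotientGroup.congr φ.ker (φ.ker.map e.toMonoidHom) e rfl))
          (qA4 _ (hker3.map e.toMonoidHom))
end

section
/- Let G be a finite group with property (P) such that G is not a 2-group and Ω₁(G) is a proper subgroup of O₂(G). Then the Sylow 3-subgroups of G have order 3, and for every element g ∈ G of order 3 the automorphism of O₂(G)/Ω₁(G) induced by conjugation by g is fixed-point-free; that is, for every x ∈ O₂(G), if g⁻¹xg·x⁻¹ ∈ Ω₁(G) then x ∈ Ω₁(G). -/
set_option maxRecDepth 20000

/-- `O_p(G)`: the largest normal `p`-subgroup of `G` (the join of all normal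
`p`-subgroups). -/
def pCore (p : ℕ) (G : Type*) [Group G] : Subgroup G :=
  ⨆ P : {P : Subgroup G // P.Normal ∧ IsPGroup p ↥P}, (P : Subgroup G)

instance pCore_normal (p : ℕ) (G : Type*) [Group G] : (pCore p G).Normal := by
  constructor
  intro x hx g
  refine Subgroup.iSup_induction _ (C := fun y => g * y * g⁻¹ ∈ pCore p G) hx
    (fun P y hy => ?_) (by simpa using Subgroup.one_mem _) (fun y z hy hz => ?_)
  · exact Subgroup.mem_iSup_of_mem P (P.2.1.conj_mem y hy g)
  · have h : g * (y * z) * g⁻¹ = (g * y * g⁻¹) * (g * z * g⁻¹) := by group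
    show g * (y * z) * g⁻¹ ∈ pCore p G
    rw [h]; exact Subgroup.mul_mem _ hy hz

section Aux

open Subgroup Pointwise

private lemma A4_pow_six : ∀ z : alternatingGroup (Fin 4), z ^ 6 = 1 := by decide

private lemma A4_comm : ∀ a b : alternatingGroup (Fin 4), a ^ 2 = 1 → b ^ 4 = 1 →
    a * b = b * a := by decide

private lemma Z2_pow : ∀ z : Multiplicative (ZMod 2), z ^ 2 = 1 := by decide
private lemma Z22_pow : ∀ z : Multiplicative (ZMod 2) × Multiplicative (ZMod 2), z ^ 2 = 1 := by
  decide
private lemma Z4_pow : ∀ z : Multiplicative (ZMod 4), z ^ 4 = 1 := by decide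
private lemma Z6_pow : ∀ z : Multiplicative (ZMod 6), z ^ 6 = 1 := by decide
private lemma Z24_pow : ∀ z : Multiplicative (ZMod 2) × Multiplicative (ZMod 4), z ^ 4 = 1 := by
  decide
private lemma Z26_pow : ∀ z : Multiplicative (ZMod 2) × Multiplicative (ZMod 6), z ^ 6 = 1 := by
  decide

variable {G : Type*} [Group G]

private lemma pow_eq_one_of_equiv {C : Subgroup G} {K : Type*} [Group K]
    (e : ↥C ≃* K) {n : ℕ} (hK : ∀ z : K, z ^ n = 1) {y : G} (hy : y ∈ C) : y ^ n = 1 := by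
  have h : (⟨y, hy⟩ : C) ^ n = 1 := e.injective (by rw [map_pow, hK, map_one])
  have := congrArg Subtype.val h
  simpa using this

private lemma commute_of_equiv_comm {C : Subgroup G} {K : Type*} [CommGroup K]
    (e : ↥C ≃* K) {x y : G} (hx : x ∈ C) (hy : y ∈ C) : Commute x y := by
  have h : (⟨x, hx⟩ : C) * ⟨y, hy⟩ = ⟨y, hy⟩ * ⟨x, hx⟩ :=
    e.injective (by rw [map_mul, map_mul, mul_comm])
  have h2 : x * y = y * x := by simpa using congrArg Subtype.val h
  exact h2

lemma PropertyP.pow_four_or_six [Finite G] (hP : PropertyP G) (y : G) :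
    y ^ 4 = 1 ∨ y ^ 6 = 1 := by
  obtain ⟨x, hx⟩ : ∃ x : G, orderOf x = 2 := by
    letI := Fintype.ofFinite G
    refine exists_prime_orderOf_dvd_card 2 ?_
    rw [← Nat.card_eq_fintype_card]
    exact hP.1.two_dvd
  have hyC : y ∈ Subgroup.closure {x, y} := Subgroup.subset_closure (by simp)
  have sq : y ^ 2 = 1 → y ^ 4 = 1 := fun h => by
    have h4 : y ^ 4 = (y ^ 2) ^ 2 := by rw [← pow_mul]
    rw [h4, h, one_pow]
  rcases hP.2 x y hx with h|h|h|h|h|h|h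
  · obtain ⟨e⟩ := h; exact Or.inl (sq (pow_eq_one_of_equiv e Z2_pow hyC))
  · obtain ⟨e⟩ := h; exact Or.inl (sq (pow_eq_one_of_equiv e Z22_pow hyC))
  · obtain ⟨e⟩ := h; exact Or.inl (pow_eq_one_of_equiv e Z4_pow hyC)
  · obtain ⟨e⟩ := h; exact Or.inr (pow_eq_one_of_equiv e Z6_pow hyC)
  · obtain ⟨e⟩ := h; exact Or.inl (pow_eq_one_of_equiv e Z24_pow hyC)
  · obtain ⟨e⟩ := h; exact Or.inr (pow_eq_one_of_equiv e Z26_pow hyC)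
  · obtain ⟨e⟩ := h; exact Or.inr (pow_eq_one_of_equiv e A4_pow_six hyC)

lemma PropertyP.commute_invol (hP : PropertyP G) {x y : G}
    (hx : orderOf x = 2) (hy : y ^ 4 = 1) : Commute x y := by
  have hxC : x ∈ Subgroup.closure {x, y} := Subgroup.subset_closure (by simp)
  have hyC : y ∈ Subgroup.closure {x, y} := Subgroup.subset_closure (by simp)
  have hx2 : x ^ 2 = 1 := by rw [← hx]; exact pow_orderOf_eq_one x
  rcases hP.2 x y hx with h|h|h|h|h|h|h
  · obtain ⟨e⟩ := h; exact commute_of_equiv_comm e hxC hyC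
  · obtain ⟨e⟩ := h; exact commute_of_equiv_comm e hxC hyC
  · obtain ⟨e⟩ := h; exact commute_of_equiv_comm e hxC hyC
  · obtain ⟨e⟩ := h; exact commute_of_equiv_comm e hxC hyC
  · obtain ⟨e⟩ := h; exact commute_of_equiv_comm e hxC hyC
  · obtain ⟨e⟩ := h; exact commute_of_equiv_comm e hxC hyC
  · -- A₄ case
    obtain ⟨e⟩ := h
    have hx2' : (⟨x, hxC⟩ : Subgroup.closure {x, y}) ^ 2 = 1 := by
      apply Subtype.ext; simpa using hx2
    have hy4' : (⟨y, hyC⟩ : Subgroup.closure {x, y}) ^ 4 = 1 := by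
      apply Subtype.ext; simpa using hy
    have h1 : (e ⟨x, hxC⟩) ^ 2 = 1 := by rw [← map_pow, hx2', map_one]
    have h2 : (e ⟨y, hyC⟩) ^ 4 = 1 := by rw [← map_pow, hy4', map_one]
    have h3 := A4_comm _ _ h1 h2
    have h4 : (⟨x, hxC⟩ : Subgroup.closure {x, y}) * ⟨y, hyC⟩ = ⟨y, hyC⟩ * ⟨x, hxC⟩ :=
      e.injective (by rw [map_mul, map_mul, h3])
    have h5 : x * y = y * x := by simpa using congrArg Subtype.val h4
    exact h5

instance omegaOneNormal : (omegaOne G).Normal := by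
  constructor
  intro n hn g
  refine Subgroup.closure_induction (fun s hs => ?_) ?_ (fun a b _ _ ha hb => ?_)
    (fun a _ ha => ?_) hn
  · have hs' : orderOf s = 2 := hs
    refine Subgroup.subset_closure ?_
    have hs2 : s ^ 2 = 1 := by rw [← hs']; exact pow_orderOf_eq_one s
    have h1 : (g * s * g⁻¹) ^ 2 = 1 := by
      have h2 : (g * s * g⁻¹) ^ 2 = g * s ^ 2 * g⁻¹ := by rw [pow_two, pow_two]; group
      rw [h2, hs2]; group
    have hne : g * s * g⁻¹ ≠ 1 := by
      intro h
      have hs1 : s = 1 := by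
        have := congrArg (fun z => g⁻¹ * z * g) h
        simpa [mul_assoc] using this
      rw [hs1] at hs'; simp at hs'
    exact orderOf_eq_prime h1 hne
  · simpa using (omegaOne G).one_mem
  · have h : g * (a * b) * g⁻¹ = (g * a * g⁻¹) * (g * b * g⁻¹) := by group
    show g * (a * b) * g⁻¹ ∈ omegaOne G
    rw [h]; exact mul_mem ha hb
  · have h : g * a⁻¹ * g⁻¹ = (g * a * g⁻¹)⁻¹ := by group
    show g * a⁻¹ * g⁻¹ ∈ omegaOne G
    rw [h]; exact inv_mem ha

lemma mem_omegaOne_of_sq {x : G} (h : x ^ 2 = 1) : x ∈ omegaOne G := by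
  rcases eq_or_ne x 1 with rfl | hx1
  · exact one_mem _
  · exact Subgroup.subset_closure (orderOf_eq_prime h hx1)

lemma commute_omegaOne (hP : PropertyP G) {v y : G} (hv : v ∈ omegaOne G) (hy : y ^ 4 = 1) :
    Commute v y := by
  have hle : Subgroup.closure {x : G | orderOf x = 2} ≤ Subgroup.centralizer {y} := by
    refine (Subgroup.closure_le _).2 fun s hs => Subgroup.mem_centralizer_iff.mpr fun h hh => ?_
    rw [Set.mem_singleton_iff] at hh; subst hh
    exact ((hP.commute_invol hs hy).symm).eq
  have := Subgroup.mem_centralizer_iff.mp (hle hv) y rfl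
  exact this.symm

lemma omegaOne_comm (hP : PropertyP G) {u v : G} (hu : u ∈ omegaOne G) (hv : v ∈ omegaOne G) :
    Commute u v := by
  have hle : Subgroup.closure {x : G | orderOf x = 2} ≤ Subgroup.centralizer {v} := by
    refine (Subgroup.closure_le _).2 fun s hs => Subgroup.mem_centralizer_iff.mpr fun h hh => ?_
    rw [Set.mem_singleton_iff] at hh; subst hh
    have hs' : orderOf s = 2 := hs
    have hs4 : s ^ 4 = 1 := by
      have h2 : s ^ 2 = 1 := by rw [← hs']; exact pow_orderOf_eq_one s
      have h4 : s ^ 4 = (s ^ 2) ^ 2 := by rw [← pow_mul]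
      rw [h4, h2, one_pow]
    exact (commute_omegaOne hP hv hs4).eq
  have := Subgroup.mem_centralizer_iff.mp (hle hu) v rfl
  exact this.symm

lemma omegaOne_sq (hP : PropertyP G) {v : G} (hv : v ∈ omegaOne G) : v ^ 2 = 1 := by
  refine Subgroup.closure_induction (fun s hs => ?_) ?_ (fun a b ha hb iha ihb => ?_)
    (fun a ha iha => ?_) hv
  · have hs' : orderOf s = 2 := hs
    rw [← hs']; exact pow_orderOf_eq_one s
  · simp
  · have hc : Commute a b := omegaOne_comm hP ha hb
    rw [hc.mul_pow, iha, ihb, one_mul]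
  · rw [inv_pow, iha, inv_one]

lemma pCore_isPGroup (p : ℕ) [Fact p.Prime] (G : Type*) [Group G] [Finite G] :
    IsPGroup p (pCore p G) := by
  obtain ⟨P⟩ : Nonempty (Sylow p G) := inferInstance
  have hle : pCore p G ≤ ↑P := by
    refine iSup_le fun N => ?_
    obtain ⟨Q, hQ⟩ := N.2.2.exists_le_sylow
    obtain ⟨g, hg⟩ := MulAction.exists_smul_eq G Q P
    haveI := N.2.1
    calc (N : Subgroup G) = MulAut.conj g • (N : Subgroup G) := (Subgroup.Normal.conj_smul_eq_self g (N : Subgroup G)).symm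
      _ ≤ MulAut.conj g • (Q : Subgroup G) := by
          rw [Subgroup.pointwise_smul_def, Subgroup.pointwise_smul_def]
          exact Subgroup.map_mono hQ
      _ = ((g • Q : Sylow p G) : Subgroup G) := by rw [Sylow.coe_subgroup_smul]
      _ = ↑P := by rw [hg]
  exact P.isPGroup'.to_le hle

lemma pCore_pow_four [Finite G] (hP : PropertyP G) {x : G} (hx : x ∈ pCore 2 G) : x ^ 4 = 1 := by
  obtain ⟨k, hk⟩ := pCore_isPGroup 2 G ⟨x, hx⟩
  have hk' : x ^ (2 ^ k) = 1 := by
    have := congrArg Subtype.val hk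
    simpa using this
  rcases hP.pow_four_or_six x with h | h
  · exact h
  · have hd6 : orderOf x ∣ 6 := orderOf_dvd_of_pow_eq_one h
    have hdk : orderOf x ∣ 2 ^ k := orderOf_dvd_of_pow_eq_one hk'
    have hcop : Nat.Coprime (orderOf x) 3 :=
      Nat.Coprime.coprime_dvd_left hdk (Nat.Coprime.pow_left _ (by norm_num))
    have hd2 : orderOf x ∣ 2 := hcop.dvd_of_dvd_mul_right (by rw [show (2*3 : ℕ) = 6 by norm_num]; exact hd6)
    have h2 : x ^ 2 = 1 := orderOf_dvd_iff_pow_eq_one.mp hd2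
    have h4 : x ^ 4 = (x ^ 2) ^ 2 := by rw [← pow_mul]
    rw [h4, h2, one_pow]

private lemma mul_rot {a b : G} (h : a * b = b * a) (z : G) : a * (b * z) = b * (a * z) := by
  rw [← mul_assoc, h, mul_assoc]

private lemma mul_kill {a : G} (h : a * a = 1) (z : G) : a * (a * z) = z := by
  rw [← mul_assoc, h, one_mul]

private lemma mul_kill4 {a : G} (h : a * (a * (a * a)) = 1) (z : G) :
    a * (a * (a * (a * z))) = z := by
  have h1 : a * (a * (a * (a * z))) = (a * (a * (a * a))) * z := by simp only [mul_assoc]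
  rw [h1, h, one_mul]

private lemma pow4_expand (a : G) : a ^ 4 = a * (a * (a * a)) := by
  rw [pow_succ, pow_succ, pow_two]; simp only [mul_assoc]

private lemma pow6_expand (a : G) : a ^ 6 = a * (a * (a * (a * (a * a)))) := by
  rw [pow_succ, pow_succ, pow_succ, pow_succ, pow_two]; simp only [mul_assoc]

/-- Core fixed-point-freeness lemma. -/
lemma fpf [Finite G] (hP : PropertyP G) {g x : G} (hg : orderOf g = 3) (hx : x ∈ pCore 2 G)
    (hw : g⁻¹ * x * g * x⁻¹ ∈ omegaOne G) : x ∈ omegaOne G := by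
  have hg3 : g ^ 3 = 1 := by rw [← hg]; exact pow_orderOf_eq_one g
  have hg3' : g * (g * g) = 1 := by
    rw [pow_succ, pow_two] at hg3; simpa [mul_assoc] using hg3
  have hx4 : x ^ 4 = 1 := pCore_pow_four hP hx
  have hx4' : x * (x * (x * x)) = 1 := by rw [← pow4_expand]; exact hx4
  set w : G := g⁻¹ * x * g * x⁻¹ with hwdef
  set w' : G := g * w⁻¹ * g⁻¹ with hw'def
  set w'' : G := g * w' * g⁻¹ with hw''def
  have hw'V : w' ∈ omegaOne G := by
    rw [hw'def]; exact (omegaOneNormal).conj_mem _ (inv_mem hw) g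
  have hw''V : w'' ∈ omegaOne G := by
    rw [hw''def]; exact (omegaOneNormal).conj_mem _ hw'V g
  have cw'x : Commute w' x := commute_omegaOne hP hw'V hx4
  have cw''x : Commute w'' x := commute_omegaOne hP hw''V hx4
  have cw'w'' : Commute w' w'' := omegaOne_comm hP hw'V hw''V
  have hw'2 : w' * w' = 1 := by have := omegaOne_sq hP hw'V; rwa [pow_two] at this
  have hw''2 : w'' * w'' = 1 := by have := omegaOne_sq hP hw''V; rwa [pow_two] at this
  have e0 : g⁻¹ * x * g = w * x := by
    rw [hwdef]
    simp only [mul_assoc, inv_mul_cancel_left, mul_inv_cancel_left, inv_mul_cancel,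
      mul_inv_cancel, mul_one, one_mul]
  have hgx : g * x = w' * (x * g) := by
    rw [hw'def]
    have h1 : g * w⁻¹ * g⁻¹ * (x * g) = g * w⁻¹ * (g⁻¹ * x * g) := by simp only [mul_assoc]
    rw [h1, e0]
    simp only [mul_assoc, inv_mul_cancel_left]
  have hgw' : g * w' = w'' * g := by
    rw [hw''def]
    simp only [mul_assoc, inv_mul_cancel, mul_one]
  have r1 : ∀ z, g * (x * z) = w' * (x * (g * z)) := fun z => by
    rw [← mul_assoc, hgx]; simp only [mul_assoc]
  have r2 : ∀ z, g * (w' * z) = w'' * (g * z) := fun z => by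
    rw [← mul_assoc, hgw']; simp only [mul_assoc]
  have r3 : ∀ z, x * (w' * z) = w' * (x * z) := mul_rot (cw'x.eq.symm)
  have r4 : ∀ z, x * (w'' * z) = w'' * (x * z) := mul_rot (cw''x.eq.symm)
  have r5 : ∀ z, w'' * (w' * z) = w' * (w'' * z) := mul_rot (cw'w''.eq.symm)
  -- c³ computation, c = x * g
  have hc3 : x * (g * (x * (g * (x * g)))) = w'' * (x * (x * x)) := by
    calc x * (g * (x * (g * (x * g))))
        = x * (w' * (x * (g * (g * (x * g))))) := by rw [r1]
      _ = x * (w' * (x * (g * (w' * (x * (g * g)))))) := by rw [r1]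
      _ = x * (w' * (x * (w'' * (g * (x * (g * g)))))) := by rw [r2]
      _ = x * (w' * (x * (w'' * (w' * (x * (g * (g * g))))))) := by rw [r1]
      _ = x * (w' * (x * (w'' * (w' * (x * 1))))) := by rw [hg3']
      _ = x * (w' * (x * (w'' * (w' * x)))) := by rw [mul_one]
      _ = w' * (x * (x * (w'' * (w' * x)))) := by rw [r3]
      _ = w' * (x * (w'' * (x * (w' * x)))) := by rw [r4]
      _ = w' * (w'' * (x * (x * (w' * x)))) := by rw [r4]
      _ = w' * (w'' * (x * (w' * (x * x)))) := by rw [r3]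
      _ = w' * (w'' * (w' * (x * (x * x)))) := by rw [r3]
      _ = w' * (w' * (w'' * (x * (x * x)))) := by rw [r5]
      _ = w'' * (x * (x * x)) := by rw [mul_kill hw'2]
  have hc4 : x * (g * (x * (g * (x * (g * (x * g)))))) = w'' * g := by
    have h1 : x * (g * (x * (g * (x * (g * (x * g)))))) =
        (x * (g * (x * (g * (x * g))))) * (x * g) := by simp only [mul_assoc]
    rw [h1, hc3]
    have h2 : w'' * (x * (x * x)) * (x * g) = w'' * (x * (x * (x * (x * g)))) := by
      simp only [mul_assoc]
    rw [h2, mul_kill4 hx4']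
  have hc6 : x * (g * (x * (g * (x * (g * (x * (g * (x * (g * (x * g)))))))))) = x * x := by
    have h1 : x * (g * (x * (g * (x * (g * (x * (g * (x * (g * (x * g)))))))))) =
        (x * (g * (x * (g * (x * g))))) * (x * (g * (x * (g * (x * g))))) := by
      simp only [mul_assoc]
    rw [h1, hc3]
    have h2 : w'' * (x * (x * x)) * (w'' * (x * (x * x))) =
        w'' * (x * (x * (x * (w'' * (x * (x * x)))))) := by simp only [mul_assoc]
    rw [h2, r4, r4, r4, mul_kill hw''2, mul_kill4 hx4']
  rcases hP.pow_four_or_six (x * g) with h | h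
  · exfalso
    rw [pow4_expand] at h
    have hnorm : x * g * (x * g * (x * g * (x * g))) =
        x * (g * (x * (g * (x * (g * (x * g)))))) := by simp only [mul_assoc]
    rw [hnorm, hc4] at h
    have hgV : g ∈ omegaOne G := by
      have hg' : g = w''⁻¹ := eq_inv_of_mul_eq_one_right h
      rw [hg']; exact inv_mem hw''V
    have hg2 : g ^ 2 = 1 := omegaOne_sq hP hgV
    have hg1 : g = 1 := by
      have h3 : g ^ 3 = g ^ 2 * g := by rw [pow_succ]
      rw [hg3, hg2, one_mul] at h3
      exact h3.symm
    rw [hg1] at hg; simp at hg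
  · rw [pow6_expand] at h
    have hnorm : x * g * (x * g * (x * g * (x * g * (x * g * (x * g))))) =
        x * (g * (x * (g * (x * (g * (x * (g * (x * (g * (x * g)))))))))) := by
      simp only [mul_assoc]
    rw [hnorm, hc6] at h
    exact mem_omegaOne_of_sq (by rw [pow_two]; exact h)

/-! ### Conjugation algebra -/

private def cnj {Q : Type*} [Group Q] (q s : Q) : Q := q⁻¹ * s * q

private lemma cnj_def {Q : Type*} [Group Q] (q s : Q) : cnj q s = q⁻¹ * s * q := rfl

private lemma cnj_mul {Q : Type*} [Group Q] (q r s : Q) : cnj (q * r) s = cnj r (cnj q s) := by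
  simp only [cnj, mul_inv_rev, mul_assoc]

private lemma cnj_mul_arg {Q : Type*} [Group Q] (q s t : Q) :
    cnj q (s * t) = cnj q s * cnj q t := by
  simp only [cnj, mul_assoc, mul_inv_cancel_left]

private lemma cnj_cube {Q : Type*} [Group Q] {q : Q} (h : q ^ 3 = 1) (s : Q) :
    cnj q (cnj q (cnj q s)) = s := by
  have h3 : q * (q * q) = 1 := by
    rw [pow_succ, pow_two] at h; simpa [mul_assoc] using h
  have h1 : cnj q (cnj q (cnj q s)) = cnj (q * (q * q)) s := by
    rw [cnj_mul, cnj_mul]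
  rw [h1, h3, cnj_def]; simp

private lemma cnj_swap {Q : Type*} [Group Q] {q r : Q} (h : r * q = q * r) (s : Q) :
    cnj q (cnj r s) = cnj r (cnj q s) := by
  rw [← cnj_mul, h, cnj_mul]

/-- The abstract "no noncyclic group of exponent 3 acts fixed-point-freely" computation. -/
private lemma key_abelian {Q : Type*} [Group Q] (S : Subgroup Q)
    (h2 : ∀ s ∈ S, s * s = 1)
    (hnorm : ∀ s ∈ S, ∀ q : Q, cnj q s ∈ S)
    (T3 : Set Q)
    (hpow : ∀ γ ∈ T3, γ ^ 3 = 1)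
    (hfpf : ∀ γ ∈ T3, ∀ s ∈ S, cnj γ s = s → s = 1)
    {α β : Q} (hα : α ∈ T3) (hβ : β ∈ T3) (hαβ : α * β ∈ T3) (hαβ2 : α * β * β ∈ T3)
    (hc : β * α = α * β)
    {w : Q} (hw : w ∈ S) : w = 1 := by
  have hcomm : ∀ s ∈ S, ∀ t ∈ S, s * t = t * s := by
    intro s hs t ht
    have hst := h2 _ (S.mul_mem hs ht)
    have hs' : s⁻¹ = s := inv_eq_of_mul_eq_one_right (h2 s hs)
    have ht' : t⁻¹ = t := inv_eq_of_mul_eq_one_right (h2 t ht)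
    have h1 : (s * t)⁻¹ = s * t := inv_eq_of_mul_eq_one_right hst
    calc s * t = (s * t)⁻¹ := h1.symm
      _ = t⁻¹ * s⁻¹ := by rw [mul_inv_rev]
      _ = t * s := by rw [hs', ht']
  have N : ∀ γ ∈ T3, ∀ s ∈ S, s * cnj γ s * cnj γ (cnj γ s) = 1 := by
    intro γ hγ s hs
    have m1 : cnj γ s ∈ S := hnorm s hs γ
    have m2 : cnj γ (cnj γ s) ∈ S := hnorm _ m1 γ
    have mu : s * cnj γ s * cnj γ (cnj γ s) ∈ S := S.mul_mem (S.mul_mem hs m1) m2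
    refine hfpf γ hγ _ mu ?_
    have e1 : cnj γ (s * cnj γ s * cnj γ (cnj γ s)) = cnj γ s * cnj γ (cnj γ s) * s := by
      rw [cnj_mul_arg, cnj_mul_arg, cnj_cube (hpow γ hγ)]
    rw [e1]
    have hAB := hcomm _ (S.mul_mem m1 m2) s hs
    rw [hAB, mul_assoc]
  -- the nine conjugates
  have m10 : cnj α w ∈ S := hnorm w hw α
  have m20 : cnj α (cnj α w) ∈ S := hnorm _ m10 α
  have m11 : cnj β (cnj α w) ∈ S := hnorm _ m10 β
  have m12 : cnj β (cnj β (cnj α w)) ∈ S := hnorm _ m11 β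
  have m21 : cnj β (cnj α (cnj α w)) ∈ S := hnorm _ m20 β
  have m22 : cnj β (cnj β (cnj α (cnj α w))) ∈ S := hnorm _ m21 β
  have E1 : w * cnj α w * cnj α (cnj α w) = 1 := N α hα w hw
  have E5 : cnj α w * cnj β (cnj α w) * cnj β (cnj β (cnj α w)) = 1 := N β hβ _ m10
  have E6 : cnj α (cnj α w) * cnj β (cnj α (cnj α w)) * cnj β (cnj β (cnj α (cnj α w))) = 1 :=
    N β hβ _ m20
  have E3 : w * cnj β (cnj α w) * cnj β (cnj β (cnj α (cnj α w))) = 1 := by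
    have base := N (α * β) hαβ w hw
    have hX : cnj (α * β) w = cnj β (cnj α w) := cnj_mul α β w
    have hY : cnj (α * β) (cnj (α * β) w) = cnj β (cnj β (cnj α (cnj α w))) := by
      rw [hX, cnj_mul, cnj_swap hc]
    rw [hY, hX] at base
    exact base
  have E4 : w * cnj β (cnj β (cnj α w)) * cnj β (cnj α (cnj α w)) = 1 := by
    have base := N (α * β * β) hαβ2 w hw
    have hX : cnj (α * β * β) w = cnj β (cnj β (cnj α w)) := by rw [cnj_mul, cnj_mul]
    have hY : cnj (α * β * β) (cnj (α * β * β) w) = cnj β (cnj α (cnj α w)) := by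
      rw [hX, cnj_mul, cnj_mul, cnj_swap hc, cnj_swap hc, cnj_cube (hpow β hβ)]
    rw [hY, hX] at base
    exact base
  -- combine
  have minv : ∀ s ∈ S, s⁻¹ = s := fun s hs => inv_eq_of_mul_eq_one_right (h2 s hs)
  have split : ∀ u v z : Q, u ∈ S → u * v * z = 1 → v * z = u := by
    intro u v z hu h
    have h' : u * (v * z) = 1 := by rw [← mul_assoc]; exact h
    have h'' := eq_inv_of_mul_eq_one_right h'
    rw [minv u hu] at h''
    exact h''
  have ha1 : cnj β (cnj α w) * cnj β (cnj β (cnj α w)) = cnj α w := split _ _ _ m10 E5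
  have ha2 : cnj β (cnj α (cnj α w)) * cnj β (cnj β (cnj α (cnj α w))) = cnj α (cnj α w) :=
    split _ _ _ m20 E6
  have hw1 : cnj α w * cnj α (cnj α w) = w := split _ _ _ hw E1
  have h3 : cnj β (cnj α w) * cnj β (cnj β (cnj α (cnj α w))) = w := split _ _ _ hw E3
  have h4 : cnj β (cnj β (cnj α w)) * cnj β (cnj α (cnj α w)) = w := split _ _ _ hw E4
  -- rename for brevity
  set b1 := cnj β (cnj α w) with hb1
  set b2 := cnj β (cnj β (cnj α w)) with hb2
  set c1 := cnj β (cnj α (cnj α w)) with hc1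
  set c2 := cnj β (cnj β (cnj α (cnj α w))) with hc2
  have hrear : (b1 * b2) * (c1 * c2) = (b1 * c2) * (b2 * c1) := by
    calc (b1 * b2) * (c1 * c2) = b1 * (b2 * (c1 * c2)) := by simp only [mul_assoc]
      _ = b1 * (b2 * (c2 * c1)) := by rw [hcomm c1 m21 c2 m22]
      _ = b1 * ((b2 * c2) * c1) := by simp only [mul_assoc]
      _ = b1 * ((c2 * b2) * c1) := by rw [hcomm b2 m12 c2 m22]
      _ = (b1 * c2) * (b2 * c1) := by simp only [mul_assoc]
  have final : w = w * w := by
    calc w = cnj α w * cnj α (cnj α w) := hw1.symm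
      _ = (b1 * b2) * (c1 * c2) := by rw [ha1, ha2]
      _ = (b1 * c2) * (b2 * c1) := hrear
      _ = w * w := by rw [h3, h4]
  rw [h2 w hw] at final
  exact final

end Aux

/-- if `G` has property (P), is not a 2-group and `Ω₁(G) < O₂(G)`,
then the Sylow 3-subgroups of `G` have order 3 and every element of order 3 acts
by conjugation on `O₂(G)/Ω₁(G)` without nontrivial fixed points. -/
theorem stmt6 (G : Type*) [Group G] [Finite G] (hP : PropertyP G)
    (h2 : ¬ IsPGroup 2 G) (hlt : omegaOne G < pCore 2 G) :
    (∀ Q : Sylow 3 G, Nat.card (Q : Subgroup G) = 3) ∧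
    (∀ g : G, orderOf g = 3 → ∀ x ∈ pCore 2 G,
      g⁻¹ * x * g * x⁻¹ ∈ omegaOne G → x ∈ omegaOne G) := by
  haveI : Fact (Nat.Prime 3) := ⟨by norm_num⟩
  have part2 : ∀ g : G, orderOf g = 3 → ∀ x ∈ pCore 2 G,
      g⁻¹ * x * g * x⁻¹ ∈ omegaOne G → x ∈ omegaOne G :=
    fun g hg x hx hw => fpf hP hg hx hw
  refine ⟨?_, part2⟩
  -- 3 divides |G|
  have h3 : 3 ∣ Nat.card G := by
    by_contra h3
    apply h2
    intro y
    rcases hP.pow_four_or_six y with h | h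
    · exact ⟨2, by rw [show (2 : ℕ) ^ 2 = 4 by norm_num]; exact h⟩
    · have hd6 : orderOf y ∣ 6 := orderOf_dvd_of_pow_eq_one h
      have h3d : ¬ 3 ∣ orderOf y := fun hdv => h3 (dvd_trans hdv (orderOf_dvd_natCard y))
      have hcop : Nat.Coprime (orderOf y) 3 :=
        (Nat.coprime_comm.mp ((Nat.Prime.coprime_iff_not_dvd (by norm_num)).mpr h3d))
      have hd2 : orderOf y ∣ 2 :=
        hcop.dvd_of_dvd_mul_right (by rw [show (2 * 3 : ℕ) = 6 by norm_num]; exact hd6)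
      exact ⟨1, by rw [pow_one]; exact orderOf_dvd_iff_pow_eq_one.mp hd2⟩
  -- 9 does not divide |G|
  have h9 : ¬ (9 ∣ Nat.card G) := by
    intro h9
    obtain ⟨H, hH⟩ := Sylow.exists_subgroup_card_pow_prime 3 (n := 2)
      (by rw [show (3 : ℕ) ^ 2 = 9 by norm_num]; exact h9)
    have hp3 : IsPGroup 3 ↥H := IsPGroup.of_card hH
    haveI : Nontrivial ↥H := Finite.one_lt_card_iff_nontrivial.mp (by rw [hH]; norm_num)
    haveI := hp3.center_nontrivial
    obtain ⟨z, hz1⟩ := exists_ne (1 : Subgroup.center ↥H)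
    have hz0ne : (z : ↥H) ≠ 1 := fun h => hz1 (Subtype.ext h)
    -- all nontrivial elements of H have order 3 in G
    have hord : ∀ u : ↥H, u ≠ 1 → orderOf (u : G) = 3 := by
      intro u hu
      have h9d : orderOf u ∣ 9 := by
        have := orderOf_dvd_natCard u
        rwa [hH, show (3 : ℕ) ^ 2 = 9 by norm_num] at this
      have hcoe : orderOf (u : G) = orderOf u := Subgroup.orderOf_coe u
      have hd3 : orderOf u ∣ 3 := by
        rcases hP.pow_four_or_six (u : G) with h | h
        · have h4 : orderOf u ∣ 4 := by rw [← hcoe]; exact orderOf_dvd_of_pow_eq_one h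
          have hg : orderOf u ∣ Nat.gcd 9 4 := Nat.dvd_gcd h9d h4
          rw [show Nat.gcd 9 4 = 1 by norm_num] at hg
          exact dvd_trans hg (by norm_num)
        · have h6 : orderOf u ∣ 6 := by rw [← hcoe]; exact orderOf_dvd_of_pow_eq_one h
          have hg : orderOf u ∣ Nat.gcd 9 6 := Nat.dvd_gcd h9d h6
          rwa [show Nat.gcd 9 6 = 3 by norm_num] at hg
      have hne1 : orderOf u ≠ 1 := by simpa [orderOf_eq_one_iff] using hu
      rw [hcoe]
      rcases (Nat.Prime.eq_one_or_self_of_dvd (by norm_num) _ hd3) with h | h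
      · exact absurd h hne1
      · exact h
    -- an element outside ⟨z⟩
    have hzcard : Nat.card (Subgroup.zpowers (z : ↥H)) = 3 := by
      rw [Nat.card_zpowers, ← Subgroup.orderOf_coe]
      exact hord z hz0ne
    obtain ⟨a, ha⟩ : ∃ a : ↥H, a ∉ Subgroup.zpowers (z : ↥H) := by
      by_contra hcon
      push_neg at hcon
      have htop : Subgroup.zpowers (z : ↥H) = ⊤ := by
        ext u; simpa using hcon u
      rw [htop, Subgroup.card_top, hH] at hzcard
      norm_num at hzcard
    have hcommH : a * (z : ↥H) = (z : ↥H) * a := Subgroup.mem_center_iff.mp z.2 a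
    -- order-3 elements of G
    have hA : orderOf ((a : G)) = 3 :=
      hord a (fun h => ha (by rw [h]; exact one_mem _))
    have hB : orderOf (((z : ↥H) : G)) = 3 := hord _ hz0ne
    have hABel : orderOf ((a : G) * ((z : ↥H) : G)) = 3 := by
      rw [show (a : G) * ((z : ↥H) : G) = ((a * (z : ↥H) : ↥H) : G) from rfl]
      refine hord _ fun h => ha ?_
      have : a = (z : ↥H)⁻¹ := eq_inv_of_mul_eq_one_left h
      rw [this]; exact inv_mem (Subgroup.mem_zpowers _)
    have hAB2el : orderOf ((a : G) * ((z : ↥H) : G) * ((z : ↥H) : G)) = 3 := by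
      rw [show (a : G) * ((z : ↥H) : G) * ((z : ↥H) : G)
          = ((a * (z : ↥H) * (z : ↥H) : ↥H) : G) from rfl]
      refine hord _ fun h => ha ?_
      have h' : a * ((z : ↥H) * (z : ↥H)) = 1 := by rw [← mul_assoc]; exact h
      have : a = ((z : ↥H) * (z : ↥H))⁻¹ := eq_inv_of_mul_eq_one_left h'
      rw [this]; exact inv_mem (mul_mem (Subgroup.mem_zpowers _) (Subgroup.mem_zpowers _))
    have hcG : ((z : ↥H) : G) * (a : G) = (a : G) * ((z : ↥H) : G) := by
      have := congrArg Subtype.val hcommH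
      simpa using this.symm
    -- quotient setup
    set π := QuotientGroup.mk' (omegaOne G) with hπ
    set S : Subgroup (G ⧸ omegaOne G) := (pCore 2 G).map π with hSdef
    have hS2 : ∀ s ∈ S, s * s = 1 := by
      intro s hs
      obtain ⟨y, hy, rfl⟩ := hs
      have hyy : y * y ∈ omegaOne G := by
        apply mem_omegaOne_of_sq
        have h1 : (y * y) ^ 2 = y ^ 4 := by
          rw [pow_two, pow4_expand]; simp only [mul_assoc]
        rw [h1]; exact pCore_pow_four hP hy
      rw [← map_mul]
      exact (QuotientGroup.eq_one_iff _).mpr hyy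
    have hSnorm : ∀ s ∈ S, ∀ q : G ⧸ omegaOne G, cnj q s ∈ S := by
      intro s hs q
      have hn : S.Normal := Subgroup.Normal.map (pCore_normal 2 G) π
        (QuotientGroup.mk'_surjective _)
      have := hn.conj_mem s hs q⁻¹
      simpa [cnj_def, mul_assoc] using this
    set T3 : Set (G ⧸ omegaOne G) := {q | ∃ c : G, orderOf c = 3 ∧ π c = q} with hT3def
    have hpowT : ∀ γ ∈ T3, γ ^ 3 = 1 := by
      rintro γ ⟨c, hc3, rfl⟩
      rw [← map_pow]
      have : c ^ 3 = 1 := by rw [← hc3]; exact pow_orderOf_eq_one c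
      rw [this, map_one]
    have hfpfT : ∀ γ ∈ T3, ∀ s ∈ S, cnj γ s = s → s = 1 := by
      rintro γ ⟨c, hc3, rfl⟩ s hs hfix
      obtain ⟨y, hy, rfl⟩ := hs
      have hmem : c⁻¹ * y * c * y⁻¹ ∈ omegaOne G := by
        rw [← QuotientGroup.eq_one_iff (N := omegaOne G)]
        have hexp : ((c⁻¹ * y * c * y⁻¹ : G) : G ⧸ omegaOne G)
            = cnj (π c) (π y) * (π y)⁻¹ := by
          rw [cnj_def]
          rfl
        rw [hexp, hfix]
        simp
      have := part2 c hc3 y hy hmem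
      exact (QuotientGroup.eq_one_iff _).mpr this
    -- apply the key lemma
    obtain ⟨t, htT, htV⟩ := SetLike.exists_of_lt hlt
    have hwS : π t ∈ S := Subgroup.mem_map_of_mem π htT
    have hαT : π (a : G) ∈ T3 := ⟨(a : G), hA, rfl⟩
    have hβT : π ((z : ↥H) : G) ∈ T3 := ⟨_, hB, rfl⟩
    have hαβT : π (a : G) * π ((z : ↥H) : G) ∈ T3 := ⟨_, hABel, by rw [map_mul]⟩
    have hαβ2T : π (a : G) * π ((z : ↥H) : G) * π ((z : ↥H) : G) ∈ T3 :=
      ⟨_, hAB2el, by rw [map_mul, map_mul]⟩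
    have hcQ : π ((z : ↥H) : G) * π (a : G) = π (a : G) * π ((z : ↥H) : G) := by
      rw [← map_mul, ← map_mul, hcG]
    have := key_abelian S hS2 hSnorm T3 hpowT hfpfT hαT hβT hαβT hαβ2T hcQ hwS
    exact htV ((QuotientGroup.eq_one_iff t).mp this)
  -- conclude for each Sylow 3-subgroup
  intro Q
  obtain ⟨n, hn⟩ := IsPGroup.iff_card.mp Q.isPGroup'
  have hdvdQ : 3 ∣ Nat.card ↥(Q : Subgroup G) := by
    have hmul := Subgroup.card_mul_index (Q : Subgroup G)
    have hdd : 3 ∣ Nat.card ↥(Q : Subgroup G) * (Q : Subgroup G).index := by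
      rw [hmul]; exact h3
    rcases (Nat.Prime.dvd_mul (by norm_num)).mp hdd with h | h
    · exact h
    · exact absurd h Q.not_dvd_index
  have hn1 : n ≠ 0 := by
    rintro rfl
    rw [hn] at hdvdQ
    norm_num at hdvdQ
  have hn2 : n < 2 := by
    by_contra hge
    push_neg at hge
    apply h9
    have h92 : (9 : ℕ) = 3 ^ 2 := by norm_num
    rw [h92]
    calc (3 : ℕ) ^ 2 ∣ 3 ^ n := pow_dvd_pow 3 hge
      _ ∣ Nat.card ↥(Q : Subgroup G) := by rw [hn]
      _ ∣ Nat.card G := Subgroup.card_subgroup_dvd_card _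
  have hn' : n = 1 := by omega
  rw [hn, hn', pow_one]
end

section
/- Let G be a finite group with property (P) that is not a 2-group, and let Q be a Sylow 3-subgroup of G. If the normalizer N = N_G(Q) contains no element of order 4, then N is the internal direct product N = Q × E, where E is an elementary abelian 2-subgroup of G (possibly trivial). In particular, if Q is non-abelian then N_G(Q) = Q × E with E elementary abelian of exponent dividing 2. -/
open scoped commutatorElement

theorem eq_one_of_sq_eq_one_of_pow_three_eq_one {M : Type*} [Monoid M] {a : M}
    (h2 : a ^ 2 = 1) (h3 : a ^ 3 = 1) : a = 1 := by
  simpa using pow_gcd_eq_one.mpr ⟨h2, h3⟩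

theorem sq_eq_one_of_pow_four_eq_one {M : Type*} [Monoid M] {x : M} (h4 : x ^ 4 = 1)
    (hx : orderOf x ≠ 4) : x ^ 2 = 1 := by
  obtain ⟨i, hi, hxi⟩ := (Nat.dvd_prime_pow Nat.prime_two).mp
    (orderOf_dvd_of_pow_eq_one h4 : orderOf x ∣ 2 ^ 2)
  rw [← orderOf_dvd_iff_pow_eq_one, hxi]
  interval_cases i <;> simp_all

theorem Sylow.mem_of_mem_normalizer_of_pow_eq_one {G : Type*} [Group G] {p n : ℕ}
    [Fact p.Prime] (P : Sylow p G) {g : G} (hg : g ∈ Subgroup.normalizer (P : Set G))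
    (hgp : g ^ p ^ n = 1) : g ∈ P := by
  obtain ⟨i, -, hi⟩ := (Nat.dvd_prime_pow Fact.out).mp (orderOf_dvd_of_pow_eq_one hgp)
  have hpg : IsPGroup p (Subgroup.zpowers g) := IsPGroup.of_card ((Nat.card_zpowers g).trans hi)
  have hmem : g ∈ Subgroup.zpowers g ⊓ Subgroup.normalizer (P : Set G) :=
    ⟨Subgroup.mem_zpowers g, hg⟩
  rw [hpg.inf_normalizer_sylow P] at hmem
  exact hmem.2

theorem Subgroup.mul_comm_of_conj_eq_inv {G : Type*} [Group G] {H : Subgroup G} {x : G}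
    (hx : ∀ q ∈ H, x⁻¹ * q * x = q⁻¹) {a b : G} (ha : a ∈ H) (hb : b ∈ H) :
    a * b = b * a := by
  have hab : a⁻¹ * b⁻¹ = b⁻¹ * a⁻¹ :=
    calc a⁻¹ * b⁻¹ = (x⁻¹ * a * x) * (x⁻¹ * b * x) := by rw [hx a ha, hx b hb]
      _ = x⁻¹ * (a * b) * x := by group
      _ = b⁻¹ * a⁻¹ := by rw [hx _ (H.mul_mem ha hb), mul_inv_rev]
  simpa using (congrArg (·⁻¹) hab).symm

def Subgroup.sqEqOne {G : Type*} [Group G] (H : Subgroup G)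
    (hH : ∀ x ∈ H, ∀ y ∈ H, x ^ 2 = 1 → y ^ 2 = 1 → Commute x y) : Subgroup G where
  carrier := {x | x ∈ H ∧ x ^ 2 = 1}
  one_mem' := ⟨H.one_mem, one_pow 2⟩
  mul_mem' := fun ⟨hx, hx2⟩ ⟨hy, hy2⟩ =>
    ⟨H.mul_mem hx hy, by rw [(hH _ hx _ hy hx2 hy2).mul_pow, hx2, hy2, one_mul]⟩
  inv_mem' := fun ⟨hx, hx2⟩ => ⟨H.inv_mem hx, by rw [inv_pow, hx2, inv_one]⟩

/-- The identities shared by the seven groups allowed by property (P). -/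
def HasPropertyPIdentities (K : Type*) [Group K] : Prop :=
  (∀ a : K, a ^ 4 = 1 ∨ a ^ 6 = 1) ∧ (∀ a b : K, ⁅a, b⁆ ^ 2 = 1) ∧
    ∀ a b : K, a ^ 2 = 1 → b ^ 2 = 1 → a * b = b * a

namespace HasPropertyPIdentities

theorem of_mulEquiv {H K : Type*} [Group H] [Group K] (e : H ≃* K)
    (hK : HasPropertyPIdentities K) : HasPropertyPIdentities H := by
  obtain ⟨hpow, hcomm, hinv⟩ := hK
  refine ⟨fun a => ?_, fun a b => e.injective ?_, fun a b ha hb => e.injective ?_⟩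
  · rcases hpow (e a) with h | h
    · exact Or.inl (e.injective (by simpa using h))
    · exact Or.inr (e.injective (by simpa using h))
  · simpa [map_commutatorElement] using hcomm (e a) (e b)
  · simpa using hinv (e a) (e b) (by simp [← map_pow, ha]) (by simp [← map_pow, hb])

theorem of_commGroup {K : Type*} [CommGroup K] (hpow : ∀ a : K, a ^ 4 = 1 ∨ a ^ 6 = 1) :
    HasPropertyPIdentities K :=
  ⟨hpow, fun a b => by simp [commutatorElement_def], fun a b _ _ => mul_comm a b⟩

set_option maxRecDepth 2000 in
theorem alternatingGroup_fin_four : HasPropertyPIdentities (alternatingGroup (Fin 4)) :=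
  ⟨by decide, by decide, by decide⟩

end HasPropertyPIdentities

namespace PropertyP

variable {G : Type*} [Group G]

theorem hasPropertyPIdentities_closure (hP : PropertyP G) {x : G} (hx : orderOf x = 2)
    (y : G) : HasPropertyPIdentities (Subgroup.closure {x, y}) := by
  open HasPropertyPIdentities in
  rcases hP.2 x y hx with h | h | h | h | h | h | h <;> obtain ⟨e⟩ := h <;>
    refine of_mulEquiv e ?_
  all_goals first
    | exact alternatingGroup_fin_four
    | exact of_commGroup (by decide)

theorem commutatorElement_sq_eq_one (hP : PropertyP G) {x : G} (hx : x ^ 2 = 1) (y : G) :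
    ⁅x, y⁆ ^ 2 = 1 := by
  by_cases hx1 : x = 1
  · simp [hx1, commutatorElement_def]
  have hxy : x ∈ Subgroup.closure {x, y} := Subgroup.subset_closure (by simp)
  have hyx : y ∈ Subgroup.closure {x, y} := Subgroup.subset_closure (by simp)
  simpa [Subtype.ext_iff, commutatorElement_def] using
    (hP.hasPropertyPIdentities_closure (orderOf_eq_prime hx hx1) y).2.1 ⟨x, hxy⟩ ⟨y, hyx⟩

theorem commute_of_sq_eq_one (hP : PropertyP G) {x y : G} (hx : x ^ 2 = 1) (hy : y ^ 2 = 1) :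
    Commute x y := by
  by_cases hx1 : x = 1
  · simp [hx1]
  have hxy : x ∈ Subgroup.closure {x, y} := Subgroup.subset_closure (by simp)
  have hyx : y ∈ Subgroup.closure {x, y} := Subgroup.subset_closure (by simp)
  have h := (hP.hasPropertyPIdentities_closure (orderOf_eq_prime hx hx1) y).2.2
    ⟨x, hxy⟩ ⟨y, hyx⟩ (Subtype.ext (by simpa using hx)) (Subtype.ext (by simpa using hy))
  simpa [Commute, SemiconjBy, Subtype.ext_iff] using h

section Finite

variable [Finite G]

theorem pow_four_eq_one_or_pow_six_eq_one (hP : PropertyP G) (y : G) :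
    y ^ 4 = 1 ∨ y ^ 6 = 1 := by
  have : Fact (Nat.Prime 2) := ⟨Nat.prime_two⟩
  obtain ⟨x, hx⟩ := exists_prime_orderOf_dvd_card' 2 hP.1.two_dvd
  have hy : y ∈ Subgroup.closure {x, y} := Subgroup.subset_closure (by simp)
  simpa [Subtype.ext_iff] using (hP.hasPropertyPIdentities_closure hx y).1 ⟨y, hy⟩

theorem pow_twelve_eq_one (hP : PropertyP G) (y : G) : y ^ 12 = 1 := by
  rcases hP.pow_four_eq_one_or_pow_six_eq_one y with h | h
  · rw [show 12 = 4 * 3 from rfl, pow_mul, h, one_pow]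
  · rw [show 12 = 6 * 2 from rfl, pow_mul, h, one_pow]

theorem pow_three_eq_one_of_mem (hP : PropertyP G) {Q : Subgroup G} (hQ : IsPGroup 3 Q)
    {q : G} (hq : q ∈ Q) : q ^ 3 = 1 := by
  have : Fact (Nat.Prime 3) := ⟨Nat.prime_three⟩
  obtain ⟨k, hk⟩ := hQ.exists_orderOf_eq_pow ⟨q, hq⟩
  rw [Subgroup.orderOf_mk] at hk
  have hcop : (orderOf q).Coprime 4 := hk ▸ Nat.Coprime.pow_left k (by norm_num)
  exact orderOf_dvd_iff_pow_eq_one.mp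
    (hcop.dvd_of_dvd_mul_left (orderOf_dvd_of_pow_eq_one (hP.pow_twelve_eq_one q)))

theorem commute_of_mem_normalizer (hP : PropertyP G) {Q : Subgroup G} (hQ : IsPGroup 3 Q)
    {t : G} (ht : t ∈ Subgroup.normalizer (Q : Set G)) (ht2 : t ^ 2 = 1) {q : G} (hq : q ∈ Q) :
    Commute t q := by
  have hmem : ⁅t, q⁆ ∈ Q :=
    Q.mul_mem ((Subgroup.mem_normalizer_iff.mp ht q).mp hq) (Q.inv_mem hq)
  exact commutatorElement_eq_one_iff_commute.mp <| eq_one_of_sq_eq_one_of_pow_three_eq_one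
    (hP.commutatorElement_sq_eq_one ht2 q) (hP.pow_three_eq_one_of_mem hQ hmem)

theorem conj_eq_inv_of_orderOf_eq_four (hP : PropertyP G) {Q : Subgroup G} (hQ : IsPGroup 3 Q)
    {x : G} (hx : x ∈ Subgroup.normalizer (Q : Set G)) (hx4 : orderOf x = 4) {q : G}
    (hq : q ∈ Q) : x⁻¹ * q * x = q⁻¹ := by
  set c := x⁻¹ * q * x * q with hc
  have hy2 : (x ^ 2) ^ 2 = 1 := by
    rw [← pow_mul, show 2 * 2 = 4 from rfl, ← hx4, pow_orderOf_eq_one]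
  have hy1 : x ^ 2 ≠ 1 := pow_ne_one_of_lt_orderOf two_ne_zero (by omega)
  have hcQ : c ∈ Q := by
    refine Q.mul_mem ?_ hq
    simpa using (Subgroup.mem_normalizer_iff.mp (inv_mem hx) q).mp hq
  have hc3 : c ^ 3 = 1 := hP.pow_three_eq_one_of_mem hQ hcQ
  have hyc : Commute (x ^ 2) c := hP.commute_of_mem_normalizer hQ (pow_mem hx 2) hy2 hcQ
  have hsq : (x * q) ^ 2 = x ^ 2 * c := by rw [sq, sq, hc]; group
  have hc1 : c = 1 := by
    rcases hP.pow_four_eq_one_or_pow_six_eq_one (x * q) with h | h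
    · rw [show 4 = 2 * 2 from rfl, pow_mul, hsq, hyc.mul_pow, hy2, one_mul] at h
      exact eq_one_of_sq_eq_one_of_pow_three_eq_one h hc3
    · rw [show 6 = 2 * 3 from rfl, pow_mul, hsq, hyc.mul_pow, hc3, mul_one] at h
      exact absurd (eq_one_of_sq_eq_one_of_pow_three_eq_one hy2 h) hy1
  exact eq_inv_of_mul_eq_one_left hc1

theorem orderOf_ne_four_of_not_comm (hP : PropertyP G) {Q : Subgroup G} (hQ : IsPGroup 3 Q)
    (hcomm : ¬ ∀ a b : Q, a * b = b * a) :
    ∀ x ∈ Subgroup.normalizer (Q : Set G), orderOf x ≠ 4 := fun _ hx hx4 =>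
  hcomm fun a b => Subtype.ext <| Subgroup.mul_comm_of_conj_eq_inv
    (fun _ hq => hP.conj_eq_inv_of_orderOf_eq_four hQ hx hx4 hq) a.2 b.2

theorem exists_normalizer_eq_sup (hP : PropertyP G) (Q : Sylow 3 G)
    (h4 : ∀ x ∈ Subgroup.normalizer ((Q : Subgroup G) : Set G), orderOf x ≠ 4) :
    ∃ E : Subgroup G, (∀ x ∈ E, x ^ 2 = 1) ∧
      E ≤ Subgroup.normalizer ((Q : Subgroup G) : Set G) ∧ (Q : Subgroup G) ⊓ E = ⊥ ∧
      (∀ q ∈ (Q : Subgroup G), ∀ e ∈ E, q * e = e * q) ∧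
      (Q : Subgroup G) ⊔ E = Subgroup.normalizer ((Q : Subgroup G) : Set G) := by
  set N := Subgroup.normalizer ((Q : Subgroup G) : Set G)
  refine ⟨N.sqEqOne fun _ _ _ _ => hP.commute_of_sq_eq_one, fun _ hx => hx.2, fun _ hx => hx.1,
    ?_, ?_, ?_⟩
  · rw [eq_bot_iff]
    rintro x ⟨hxQ, -, hx2⟩
    exact eq_one_of_sq_eq_one_of_pow_three_eq_one hx2 (hP.pow_three_eq_one_of_mem Q.isPGroup' hxQ)
  · rintro q hq e ⟨heN, he2⟩
    exact (hP.commute_of_mem_normalizer Q.isPGroup' heN he2 hq).symm.eq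
  · refine le_antisymm (sup_le Subgroup.le_normalizer fun _ hx => hx.1) fun n hn => ?_
    have hsplit : n ^ 4 * n ^ 9 = n := by
      rw [← pow_add, show 4 + 9 = 12 + 1 from rfl, pow_succ, hP.pow_twelve_eq_one, one_mul]
    rw [← hsplit]
    refine Subgroup.mul_mem_sup
      (Q.mem_of_mem_normalizer_of_pow_eq_one (n := 1) (pow_mem hn 4) ?_)
      ⟨pow_mem hn 9, sq_eq_one_of_pow_four_eq_one ?_ (h4 _ (pow_mem hn 9))⟩
    · rw [← pow_mul, show 4 * 3 ^ 1 = 12 from rfl, hP.pow_twelve_eq_one]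
    · rw [← pow_mul, show 9 * 4 = 12 * 3 from rfl, pow_mul, hP.pow_twelve_eq_one, one_pow]

end Finite

end PropertyP

theorem stmt8_general (G : Type*) [Group G] [Finite G] (hP : PropertyP G)
    (Q : Sylow 3 G) :
    ((∀ x ∈ Subgroup.normalizer ((Q : Subgroup G) : Set G), orderOf x ≠ 4) →
      ∃ E : Subgroup G, (∀ x ∈ E, x ^ 2 = 1) ∧
        E ≤ Subgroup.normalizer ((Q : Subgroup G) : Set G) ∧ (Q : Subgroup G) ⊓ E = ⊥ ∧
        (∀ q ∈ (Q : Subgroup G), ∀ e ∈ E, q * e = e * q) ∧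
        (Q : Subgroup G) ⊔ E = Subgroup.normalizer ((Q : Subgroup G) : Set G)) ∧
    ((¬ ∀ a b : ↥(Q : Subgroup G), a * b = b * a) →
      ∃ E : Subgroup G, (∀ x ∈ E, x ^ 2 = 1) ∧
        E ≤ Subgroup.normalizer ((Q : Subgroup G) : Set G) ∧ (Q : Subgroup G) ⊓ E = ⊥ ∧
        (∀ q ∈ (Q : Subgroup G), ∀ e ∈ E, q * e = e * q) ∧
        (Q : Subgroup G) ⊔ E = Subgroup.normalizer ((Q : Subgroup G) : Set G)) :=
  ⟨hP.exists_normalizer_eq_sup Q,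
    fun hQ => hP.exists_normalizer_eq_sup Q (hP.orderOf_ne_four_of_not_comm Q.isPGroup' hQ)⟩

/-- if `G` has property (P), is not a 2-group, `Q` is a Sylow 3-subgroup
and `N = N_G(Q)` has no element of order 4, then `N` is the internal direct product
of `Q` with an elementary abelian 2-subgroup `E`; in particular this holds when `Q`
is non-abelian. -/
theorem stmt8 (G : Type*) [Group G] [Finite G] (hP : PropertyP G)
    (h2 : ¬ IsPGroup 2 G) (Q : Sylow 3 G) :
    ((∀ x ∈ Subgroup.normalizer ((Q : Subgroup G) : Set G), orderOf x ≠ 4) →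
      ∃ E : Subgroup G, (∀ x ∈ E, x ^ 2 = 1) ∧
        E ≤ Subgroup.normalizer ((Q : Subgroup G) : Set G) ∧ (Q : Subgroup G) ⊓ E = ⊥ ∧
        (∀ q ∈ (Q : Subgroup G), ∀ e ∈ E, q * e = e * q) ∧
        (Q : Subgroup G) ⊔ E = Subgroup.normalizer ((Q : Subgroup G) : Set G)) ∧
    ((¬ ∀ a b : ↥(Q : Subgroup G), a * b = b * a) →
      ∃ E : Subgroup G, (∀ x ∈ E, x ^ 2 = 1) ∧
        E ≤ Subgroup.normalizer ((Q : Subgroup G) : Set G) ∧ (Q : Subgroup G) ⊓ E = ⊥ ∧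
        (∀ q ∈ (Q : Subgroup G), ∀ e ∈ E, q * e = e * q) ∧
        (Q : Subgroup G) ⊔ E = Subgroup.normalizer ((Q : Subgroup G) : Set G)) :=
  stmt8_general G hP Q
end

section
/- Let G be a finite group with property (P) that is not a 2-group, and let Q be a Sylow 3-subgroup of G. If Q is abelian and the normalizer N_G(Q) contains no element of order 4, then G has a normal Sylow 2-subgroup, i.e. O₂(G) is a Sylow 2-subgroup of G. -/
set_option maxRecDepth 40000


/-- helper: transfer a pow statement across a MulEquiv -/
lemma pullPow {H K : Type*} [Group H] [Group K] (e : H ≃* K)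
    (hK : ∀ k : K, k ^ 4 = 1 ∨ k ^ 6 = 1) (h : H) : h ^ 4 = 1 ∨ h ^ 6 = 1 := by
  rcases hK (e h) with h1 | h1
  · left; apply e.injective; rw [map_pow, h1, map_one]
  · right; apply e.injective; rw [map_pow, h1, map_one]

/-- helper: transfer a commuting statement across a MulEquiv -/
lemma pullComm {H K : Type*} [Group H] [Group K] (e : H ≃* K)
    (hK : ∀ a b : K, b ^ 3 = 1 → a * b * a⁻¹ * b = b * (a * b * a⁻¹) → a * b = b * a)
    (a b : H) (hb : b ^ 3 = 1) (hc : a * b * a⁻¹ * b = b * (a * b * a⁻¹)) :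
    a * b = b * a := by
  apply e.injective
  rw [map_mul, map_mul]
  apply hK
  · rw [← map_pow, hb, map_one]
  · have := congrArg e hc
    simpa [map_mul, map_inv] using this

lemma propP_pow {G : Type*} [Group G] (hP : PropertyP G) (x y : G)
    (hx : orderOf x = 2) : y ^ 4 = 1 ∨ y ^ 6 = 1 := by
  have hy : y ∈ Subgroup.closure {x, y} :=
    Subgroup.subset_closure (Set.mem_insert_of_mem _ rfl)
  have key : ((⟨y, hy⟩ : Subgroup.closure {x, y}) : _) ^ 4 = 1 ∨
      (⟨y, hy⟩ : Subgroup.closure {x, y}) ^ 6 = 1 := by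
    rcases hP.2 x y hx with e | e | e | e | e | e | e <;>
      exact pullPow e.some (by decide) _
  rcases key with h | h
  · left; simpa using congrArg Subtype.val h
  · right; simpa using congrArg Subtype.val h

lemma propP_pow' {G : Type*} [Group G] [Finite G] (hP : PropertyP G) (y : G) :
    y ^ 4 = 1 ∨ y ^ 6 = 1 := by
  obtain ⟨x, hx⟩ := exists_prime_orderOf_dvd_card' (G := G) 2 (hP.1.two_dvd)
  exact propP_pow hP x y hx

lemma propP_comm {G : Type*} [Group G] (hP : PropertyP G) (x q : G)
    (hx : orderOf x = 2) (hq : q ^ 3 = 1)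
    (hc : x * q * x⁻¹ * q = q * (x * q * x⁻¹)) : x * q = q * x := by
  have hxm : x ∈ Subgroup.closure {x, q} :=
    Subgroup.subset_closure (Set.mem_insert _ _)
  have hqm : q ∈ Subgroup.closure {x, q} :=
    Subgroup.subset_closure (Set.mem_insert_of_mem _ rfl)
  set a : Subgroup.closure {x, q} := ⟨x, hxm⟩
  set b : Subgroup.closure {x, q} := ⟨q, hqm⟩
  have hb : b ^ 3 = 1 := by ext; simpa using hq
  have hc' : a * b * a⁻¹ * b = b * (a * b * a⁻¹) := by ext; simpa using hc
  have key : a * b = b * a := by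
    rcases hP.2 x q hx with e | e | e | e | e | e | e <;>
      exact pullComm e.some (by decide) a b hb hc'
  simpa using congrArg Subtype.val key

/-- if `G` has property (P), is not a 2-group, its Sylow 3-subgroup `Q`
is abelian and `N_G(Q)` has no element of order 4, then `G` has a normal Sylow
2-subgroup, i.e. `O₂(G)` is a Sylow 2-subgroup. -/
theorem stmt9 (G : Type*) [Group G] [Finite G] (hP : PropertyP G)
    (h2 : ¬ IsPGroup 2 G) (Q : Sylow 3 G)
    (hab : ∀ a b : ↥(Q : Subgroup G), a * b = b * a)
    (h4 : ∀ x ∈ Subgroup.normalizer ((Q : Subgroup G) : Set G), orderOf x ≠ 4) :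
    ∃ P : Sylow 2 G, (P : Subgroup G) = pCore 2 G := by
  classical
  -- every element of Q satisfies q^3 = 1
  have hq3 : ∀ q ∈ (Q : Subgroup G), q ^ 3 = 1 := by
    intro q hq
    obtain ⟨n, hn⟩ := Q.isPGroup' ⟨q, hq⟩
    have hdvd3 : orderOf q ∣ 3 ^ n := by
      rw [orderOf_dvd_iff_pow_eq_one]
      simpa using congrArg Subtype.val hn
    rcases propP_pow' hP q with h | h
    · have h1 : orderOf q ∣ 4 := orderOf_dvd_of_pow_eq_one h
      have : orderOf q = 1 := Nat.eq_one_of_dvd_coprimes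
        (Nat.Coprime.pow_right n (by norm_num)) h1 hdvd3
      rw [orderOf_eq_one_iff] at this
      simp [this]
    · have h1 : orderOf q ∣ 6 := orderOf_dvd_of_pow_eq_one h
      have hodd : Nat.Coprime (orderOf q) 2 :=
        Nat.Coprime.coprime_dvd_left hdvd3 (Nat.Coprime.pow_left n (by norm_num))
      have : orderOf q ∣ 3 := by
        have h6 : orderOf q ∣ 2 * 3 := by norm_num at h1 ⊢; exact h1
        exact (Nat.Coprime.dvd_of_dvd_mul_left hodd h6)
      exact orderOf_dvd_iff_pow_eq_one.mp this
  -- involutions in N(Q) centralize Q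
  have hinv : ∀ x ∈ Subgroup.normalizer ((Q : Subgroup G) : Set G), orderOf x = 2 →
      ∀ q ∈ (Q : Subgroup G), x * q = q * x := by
    intro x hxN hx2 q hq
    have hz : x * q * x⁻¹ ∈ (Q : Subgroup G) :=
      (Subgroup.mem_normalizer_iff.mp hxN q).mp hq
    have hc : x * q * x⁻¹ * q = q * (x * q * x⁻¹) := by
      simpa using congrArg Subtype.val (hab ⟨x * q * x⁻¹, hz⟩ ⟨q, hq⟩)
    exact propP_comm hP x q hx2 (hq3 q hq) hc
  -- 3-elements of N(Q) are in Q
  have h3elt : ∀ v ∈ Subgroup.normalizer ((Q : Subgroup G) : Set G), v ^ 3 = 1 → v ∈ (Q : Subgroup G) := by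
    intro v hv hv3
    have hvP : IsPGroup 3 (Subgroup.zpowers v) := by
      intro g
      refine ⟨1, ?_⟩
      obtain ⟨k, hk⟩ := Subgroup.mem_zpowers_iff.mp g.2
      ext
      have : ((g : G)) ^ 3 = 1 := by
        rw [← hk, ← zpow_natCast, ← zpow_mul, mul_comm, zpow_mul, zpow_natCast, hv3,
          one_zpow]
      simpa using this
    have hsup : IsPGroup 3 ↥(Subgroup.zpowers v ⊔ (Q : Subgroup G)) :=
      hvP.to_sup_of_normal_right' Q.isPGroup' (Subgroup.zpowers_le.mpr hv)
    have heq := Q.3 hsup le_sup_right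
    rw [← heq]
    exact Subgroup.mem_sup_left (Subgroup.mem_zpowers v)
  -- N(Q) ≤ C(Q)
  have hcent : Subgroup.normalizer ((Q : Subgroup G) : Set G) ≤ Subgroup.centralizer (Q : Set G) := by
    intro g hg
    rw [Subgroup.mem_centralizer_iff]
    intro q hq
    suffices h : g * q = q * g by rw [← h]
    rcases propP_pow' hP g with hgo | hgo
    · -- orderOf g ∣ 4, not 4, so g = 1 or orderOf g = 2
      have hd : orderOf g ∣ 4 := orderOf_dvd_of_pow_eq_one hgo
      obtain ⟨k, hk2, hko⟩ := (Nat.dvd_prime_pow Nat.prime_two).mp ((by norm_num : (4:ℕ) = 2 ^ 2) ▸ hd)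
      interval_cases k
      · rw [pow_zero, orderOf_eq_one_iff] at hko; simp [hko]
      · exact hinv g hg (by simpa using hko) q hq
      · exact absurd (by simpa using hko) (h4 g hg)
    · -- g^6 = 1 : split g = g^3 * g^4
      have hu2 : (g ^ 3) ^ 2 = 1 := by rw [← pow_mul]; exact hgo
      have hv3 : (g ^ 4) ^ 3 = 1 := by rw [← pow_mul]; norm_num; rw [show (12:ℕ) = 6*2 by rfl, pow_mul, hgo, one_pow]
      have huN : g ^ 3 ∈ Subgroup.normalizer ((Q : Subgroup G) : Set G) := pow_mem hg 3
      have hvN : g ^ 4 ∈ Subgroup.normalizer ((Q : Subgroup G) : Set G) := pow_mem hg 4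
      have hvQ : g ^ 4 ∈ (Q : Subgroup G) := h3elt _ hvN hv3
      have hvq : g ^ 4 * q = q * g ^ 4 := by
        simpa using congrArg Subtype.val (hab ⟨g ^ 4, hvQ⟩ ⟨q, hq⟩)
      have huq : g ^ 3 * q = q * g ^ 3 := by
        have hd : orderOf (g ^ 3) ∣ 2 := orderOf_dvd_of_pow_eq_one hu2
        rcases (Nat.dvd_prime Nat.prime_two).mp hd with h1 | h1
        · rw [orderOf_eq_one_iff] at h1; rw [h1]; group
        · exact hinv _ huN h1 q hq
      have hguv : g = g ^ 3 * g ^ 4 := by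
        rw [← pow_add]
        norm_num
        rw [show (7:ℕ) = 1 + 6 by rfl, pow_add, pow_one, hgo, mul_one]
      calc g * q = g ^ 3 * (g ^ 4 * q) := by rw [← mul_assoc, ← hguv]
        _ = g ^ 3 * (q * g ^ 4) := by rw [hvq]
        _ = (g ^ 3 * q) * g ^ 4 := by rw [mul_assoc]
        _ = q * (g ^ 3 * g ^ 4) := by rw [huq, mul_assoc]
        _ = q * g := by rw [← hguv]
  -- Burnside's normal p-complement theorem
  have hcomp := MonoidHom.ker_transferSylow_isComplement' Q hcent
  set K := (MonoidHom.transferSylow Q hcent).ker with hK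
  haveI : K.Normal := MonoidHom.normal_ker _
  -- K is a 2-group
  have hKcard : ¬ (3 : ℕ) ∣ Nat.card K :=
    MonoidHom.not_dvd_card_ker_transferSylow Q hcent
  have hK2 : IsPGroup 2 K := by
    intro k
    refine ⟨2, ?_⟩
    have hden : orderOf (k : G) ∣ Nat.card K := K.orderOf_dvd_natCard k.2
    have h3 : ¬ (3 : ℕ) ∣ orderOf (k : G) := fun h => hKcard (h.trans hden)
    have : (k : G) ^ 4 = 1 := by
      rcases propP_pow' hP (k : G) with h | h
      · exact h
      · have hd : orderOf (k : G) ∣ 6 := orderOf_dvd_of_pow_eq_one h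
        have hcop : Nat.Coprime (orderOf (k : G)) 3 :=
          Nat.coprime_comm.mp ((Nat.Prime.coprime_iff_not_dvd (by norm_num)).mpr h3)
        have : orderOf (k : G) ∣ 2 :=
          Nat.Coprime.dvd_of_dvd_mul_right hcop ((by norm_num : (6:ℕ) = 2 * 3) ▸ hd)
        calc (k:G) ^ 4 = ((k:G) ^ 2) ^ 2 := by rw [← pow_mul]
          _ = 1 := by rw [orderOf_dvd_iff_pow_eq_one.mp this, one_pow]
    ext
    simpa using this
  -- index of K is odd
  have hKind : ¬ (2 : ℕ) ∣ K.index := by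
    have hidx : K.index = Nat.card (Q : Subgroup G) := hcomp.symm.index_eq_card
    obtain ⟨n, hn⟩ := Q.isPGroup'.exists_card_eq
    rw [hidx, hn]
    intro hdvd
    exact absurd (Nat.Prime.dvd_of_dvd_pow Nat.prime_two hdvd) (by norm_num)
  -- K is a Sylow 2-subgroup
  refine ⟨hK2.toSylow hKind, ?_⟩
  have hKS : ((hK2.toSylow hKind : Subgroup G)) = K := rfl
  rw [hKS]
  apply le_antisymm
  · -- K ≤ pCore
    exact le_iSup (fun P : {P : Subgroup G // P.Normal ∧ IsPGroup 2 ↥P} =>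
      (P : Subgroup G)) ⟨K, inferInstance, hK2⟩
  · -- pCore ≤ K : every normal 2-subgroup is contained in K
    apply iSup_le
    rintro ⟨N, hNnorm, hN2⟩
    obtain ⟨S, hS⟩ := hN2.exists_le_sylow
    haveI : Unique (Sylow 2 G) :=
      Sylow.unique_of_normal (hK2.toSylow hKind) (by
        show K.Normal; infer_instance)
    have hSK : S = hK2.toSylow hKind := Subsingleton.elim _ _
    have : (S : Subgroup G) = K := by rw [hSK]; rfl
    exact this ▸ hS
end

section
/- Let G be a finite group with property (P) whose commutator subgroup G′ is nilpotent. Then G has a normal Sylow 2-subgroup or a normal Sylow 3-subgroup. Furthermore, if a Sylow 3-subgroup of G is non-abelian, then G has a normal Sylow 2-subgroup. -/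
set_option maxRecDepth 40000


namespace Stmt10Aux

open Subgroup

abbrev A4 := alternatingGroup (Fin 4)

lemma A4_pow : ∀ a : A4, a^3 = 1 ∨ a^2 = 1 := by decide
lemma A4_pow46 : ∀ a : A4, a^4 = 1 ∨ a^6 = 1 := by decide
lemma A4_inv_comm : ∀ a b : A4, a^2 = 1 → b^2 = 1 → a*b = b*a := by decide
lemma A4_three : ∀ a : A4, a^3 = 1 → a ≠ 1 →
    ∃ b : A4, (a * (b*a⁻¹*b⁻¹))^2 = 1 ∧ a*(b*a⁻¹*b⁻¹) ≠ 1 := by decide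

variable {G : Type*} [Group G]

lemma mem_cl_left (x y : G) : x ∈ Subgroup.closure {x, y} :=
  Subgroup.subset_closure (Set.mem_insert x {y})

lemma mem_cl_right (x y : G) : y ∈ Subgroup.closure {x, y} :=
  Subgroup.subset_closure (Set.mem_insert_of_mem x rfl)

section iso

variable {C : Subgroup G} {H : Type*} [Group H]

lemma mk_pow_eq_one {x : G} (hx : x ∈ C) {n : ℕ} (h : x^n = 1) :
    (⟨x, hx⟩ : C)^n = 1 := by
  ext
  simpa using h

lemma iso_pow_eq_one (e : ↥C ≃* H) {n : ℕ} {x : G} (hx : x ∈ C)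
    (h : (e ⟨x, hx⟩)^n = 1) : x^n = 1 := by
  have h2 : (⟨x, hx⟩ : C)^n = 1 := e.injective (by rw [map_pow, h, map_one])
  simpa using congrArg (fun z : C => (z : G)) h2

lemma iso_pow46 (e : ↥C ≃* H) (hH : ∀ a : H, a^4 = 1 ∨ a^6 = 1) {x : G} (hx : x ∈ C) :
    x^4 = 1 ∨ x^6 = 1 := by
  rcases hH (e ⟨x, hx⟩) with h | h
  · exact Or.inl (iso_pow_eq_one e hx h)
  · exact Or.inr (iso_pow_eq_one e hx h)

lemma iso_comm (e : ↥C ≃* H) {x y : G} (hx : x ∈ C) (hy : y ∈ C)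
    (h : e ⟨x, hx⟩ * e ⟨y, hy⟩ = e ⟨y, hy⟩ * e ⟨x, hx⟩) : x * y = y * x := by
  have h2 : (⟨x, hx⟩ : C) * ⟨y, hy⟩ = ⟨y, hy⟩ * ⟨x, hx⟩ :=
    e.injective (by rw [map_mul, map_mul, h])
  simpa using congrArg (fun z : C => (z : G)) h2

lemma iso_comm_comm {H' : Type*} [CommGroup H'] (e : ↥C ≃* H') {x y : G}
    (hx : x ∈ C) (hy : y ∈ C) : x * y = y * x :=
  iso_comm e hx hy (mul_comm _ _)

end iso

/-- From property (P): either x and y commute, or they generate a copy of A₄. -/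
lemma comm_cases (hP : PropertyP G) {x : G} (y : G) (hx : orderOf x = 2) :
    x*y = y*x ∨ Nonempty (↥(Subgroup.closure {x, y}) ≃* A4) := by
  have hxc := mem_cl_left x y
  have hyc := mem_cl_right x y
  rcases hP.2 x y hx with he|he|he|he|he|he|he
  case inl => obtain ⟨e⟩ := he; exact Or.inl (iso_comm_comm e hxc hyc)
  case inl => obtain ⟨e⟩ := he; exact Or.inl (iso_comm_comm e hxc hyc)
  case inl => obtain ⟨e⟩ := he; exact Or.inl (iso_comm_comm e hxc hyc)
  case inl => obtain ⟨e⟩ := he; exact Or.inl (iso_comm_comm e hxc hyc)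
  case inl => obtain ⟨e⟩ := he; exact Or.inl (iso_comm_comm e hxc hyc)
  case inl => obtain ⟨e⟩ := he; exact Or.inl (iso_comm_comm e hxc hyc)
  case inr => exact Or.inr he

/-- Every element satisfies x⁴ = 1 or x⁶ = 1. -/
lemma pow46 [Finite G] (hP : PropertyP G) (g : G) : g^4 = 1 ∨ g^6 = 1 := by
  have h2 : (2 : ℕ) ∣ Nat.card G := hP.1.two_dvd
  obtain ⟨t, ht⟩ := exists_prime_orderOf_dvd_card' 2 h2
  have hgc := mem_cl_right t g
  rcases hP.2 t g ht with he|he|he|he|he|he|he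
  case inl => obtain ⟨e⟩ := he; exact iso_pow46 e (by decide) hgc
  case inl => obtain ⟨e⟩ := he; exact iso_pow46 e (by decide) hgc
  case inl => obtain ⟨e⟩ := he; exact iso_pow46 e (by decide) hgc
  case inl => obtain ⟨e⟩ := he; exact iso_pow46 e (by decide) hgc
  case inl => obtain ⟨e⟩ := he; exact iso_pow46 e (by decide) hgc
  case inl => obtain ⟨e⟩ := he; exact iso_pow46 e (by decide) hgc
  case inr => obtain ⟨e⟩ := he; exact iso_pow46 e A4_pow46 hgc

/-- Elements of square one commute. -/
lemma comm_of_sq (hP : PropertyP G) {x y : G} (hx : x^2 = 1) (hy : y^2 = 1) :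
    x * y = y * x := by
  rcases eq_or_ne x 1 with rfl | hx1
  · rw [one_mul, mul_one]
  have hox : orderOf x = 2 := orderOf_eq_prime hx hx1
  rcases comm_cases hP y hox with h | he
  · exact h
  · obtain ⟨e⟩ := he
    have hxc := mem_cl_left x y
    have hyc := mem_cl_right x y
    refine iso_comm e hxc hyc (A4_inv_comm _ _ ?_ ?_)
    · rw [← map_pow, mk_pow_eq_one hxc hx, map_one]
    · rw [← map_pow, mk_pow_eq_one hyc hy, map_one]

/-- An element of square one commutes with any element of order 4. -/
lemma comm_sq_four (hP : PropertyP G) {x y : G} (hx : x^2 = 1) (hy : orderOf y = 4) :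
    x * y = y * x := by
  rcases eq_or_ne x 1 with rfl | hx1
  · rw [one_mul, mul_one]
  have hox : orderOf x = 2 := orderOf_eq_prime hx hx1
  rcases comm_cases hP y hox with h | he
  · exact h
  · exfalso
    obtain ⟨e⟩ := he
    have hyc := mem_cl_right x y
    rcases A4_pow (e ⟨y, hyc⟩) with h3 | h3
    · have : y^3 = 1 := iso_pow_eq_one e hyc h3
      have : orderOf y ∣ 3 := orderOf_dvd_of_pow_eq_one this
      rw [hy] at this
      norm_num at this
    · have : y^2 = 1 := iso_pow_eq_one e hyc h3
      have : orderOf y ∣ 2 := orderOf_dvd_of_pow_eq_one this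
      rw [hy] at this
      norm_num at this

/-- An element of square one commutes with every element of a normal subgroup
without involutions. -/
lemma comm_sq_normal (hP : PropertyP G) {K : Subgroup G} (hKn : K.Normal)
    (hK2 : ∀ w : G, w ∈ K → w^2 = 1 → w = 1) {x u : G} (hx : x^2 = 1) (hu : u ∈ K) :
    x * u = u * x := by
  rcases eq_or_ne x 1 with rfl | hx1
  · rw [one_mul, mul_one]
  rcases eq_or_ne u 1 with rfl | hu1
  · rw [one_mul, mul_one]
  have hox : orderOf x = 2 := orderOf_eq_prime hx hx1
  rcases comm_cases hP u hox with h | he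
  · exact h
  · exfalso
    obtain ⟨e⟩ := he
    have hxc := mem_cl_left x u
    have huc := mem_cl_right x u
    set a : A4 := e ⟨u, huc⟩ with ha
    have ha1 : a ≠ 1 := by
      intro h
      have h2 : (⟨u, huc⟩ : ↥(Subgroup.closure {x,u})) = 1 := by
        have h3 := congrArg e.symm h
        rw [ha, MulEquiv.symm_apply_apply, map_one] at h3
        exact h3
      exact hu1 (by simpa using congrArg (fun z : ↥(Subgroup.closure {x,u}) => (z : G)) h2)
    have ha3 : a^3 = 1 := by
      rcases A4_pow a with h | h
      · exact h
      · exact absurd (hK2 u hu (iso_pow_eq_one e huc h)) hu1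
    obtain ⟨b, hb1, hb2⟩ := A4_three a ha3 ha1
    set bh : ↥(Subgroup.closure {x,u}) := e.symm b with hbh
    have heb : e bh = b := e.apply_symm_apply b
    -- the element w = u * (b u⁻¹ b⁻¹) in G
    set w : G := u * ((bh : G) * u⁻¹ * (bh : G)⁻¹) with hw
    have hwc : w ∈ Subgroup.closure {x, u} :=
      mul_mem huc (mul_mem (mul_mem bh.2 (inv_mem huc)) (inv_mem bh.2))
    have hwmk : (⟨w, hwc⟩ : ↥(Subgroup.closure {x,u})) = ⟨u, huc⟩ * (bh * ⟨u, huc⟩⁻¹ * bh⁻¹) := by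
      ext; simp [hw]
    have hew : e ⟨w, hwc⟩ = a * (b * a⁻¹ * b⁻¹) := by
      rw [hwmk, map_mul, map_mul, map_mul, map_inv, map_inv, heb, ha]
    have hwK : w ∈ K := mul_mem hu (hKn.conj_mem _ (inv_mem hu) _)
    have hw2 : w^2 = 1 := iso_pow_eq_one e hwc (by rw [hew]; exact hb1)
    have hwne : w ≠ 1 := by
      intro h
      apply hb2
      rw [← hew]
      have : (⟨w, hwc⟩ : ↥(Subgroup.closure {x,u})) = 1 := by ext; simpa using h
      rw [this, map_one]
    exact hwne (hK2 w hwK hw2)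

/-- An element of order 4 inverts every element of a normal subgroup without
involutions. -/
lemma order4_inverts [Finite G] (hP : PropertyP G) {K : Subgroup G} (hKn : K.Normal)
    (hK2 : ∀ w : G, w ∈ K → w^2 = 1 → w = 1) {h : G} (hh : orderOf h = 4)
    {u : G} (hu : u ∈ K) : h⁻¹ * u * h = u⁻¹ := by
  have hh4 : h^4 = 1 := by rw [← hh]; exact pow_orderOf_eq_one h
  have hz2 : (h^2)^2 = 1 := by rw [← pow_mul]; exact hh4
  have hz1 : h^2 ≠ 1 := by
    intro hc
    have := orderOf_dvd_of_pow_eq_one hc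
    rw [hh] at this
    norm_num at this
  have hzK : h^2 ∉ K := fun hc => hz1 (hK2 _ hc hz2)
  -- quotient by K
  haveI := hKn
  set π := QuotientGroup.mk' K with hπ
  have hπu : π u = 1 := (QuotientGroup.eq_one_iff u).2 hu
  have hπh4 : orderOf (π h) = 4 := by
    have hdvd : orderOf (π h) ∣ 4 := orderOf_dvd_of_pow_eq_one (by rw [← map_pow, hh4, map_one])
    rcases (Nat.dvd_prime_pow Nat.prime_two).1 (show orderOf (π h) ∣ 2^2 from hdvd) with ⟨i, hi, hio⟩
    interval_cases i
    · exfalso; apply hzK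
      rw [pow_zero] at hio
      have h1 : π h = 1 := orderOf_eq_one_iff.1 hio
      have h2 : π (h^2) = 1 := by rw [map_pow, h1, one_pow]
      exact (QuotientGroup.eq_one_iff _).1 h2
    · exfalso; apply hzK
      have h1 : (π h)^2 = 1 := by
        have := pow_orderOf_eq_one (π h)
        rwa [hio, pow_one] at this
      have h2 : π (h^2) = 1 := by rw [map_pow, h1]
      exact (QuotientGroup.eq_one_iff _).1 h2
    · rw [hio]; norm_num
  have h4dvd : 4 ∣ orderOf (h * u) := by
    have : π (h * u) = π h := by rw [map_mul, hπu, mul_one]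
    calc (4:ℕ) = orderOf (π (h*u)) := by rw [this, hπh4]
    _ ∣ orderOf (h*u) := orderOf_map_dvd π (h*u)
  have hhu4 : (h*u)^4 = 1 := by
    rcases pow46 hP (h*u) with h46 | h46
    · exact h46
    · exfalso
      have h6 : orderOf (h*u) ∣ 6 := orderOf_dvd_of_pow_eq_one h46
      have := Nat.dvd_trans h4dvd h6
      norm_num at this
  -- algebraic expansion
  set u' := h⁻¹ * u * h with hu'
  have hu'K : u' ∈ K := by
    have := hKn.conj_mem u hu h⁻¹
    simpa [hu', mul_assoc] using this
  have hzcomm : (h^2) * (u' * u) = (u' * u) * (h^2) := by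
    exact comm_sq_normal hP hKn hK2 hz2 (mul_mem hu'K hu)
  have e1 : (h*u)^2 = (h^2) * (u' * u) := by
    rw [hu', pow_two]; group
  have e2 : (h*u)^4 = ((h^2) * (u' * u))^2 := by
    rw [← e1, ← pow_mul]
  have e3 : ((h^2) * (u' * u))^2 = (h^2)^2 * (u' * u)^2 := (Commute.mul_pow hzcomm 2)
  have e4 : (u' * u)^2 = 1 := by
    have := hhu4
    rw [e2, e3, hz2, one_mul] at this
    exact this
  have e5 : u' * u = 1 := hK2 _ (mul_mem hu'K hu) e4
  exact eq_inv_of_mul_eq_one_left e5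

end Stmt10Aux

namespace Stmt10Aux

open Subgroup Pointwise

variable {G : Type*} [Group G]

lemma pgroup_of_pow {K : Subgroup G} (p n : ℕ)
    (hn : ∀ x : G, x ∈ K → x^(p^n) = 1) : IsPGroup p K :=
  fun g => ⟨n, by ext; simpa using hn ↑g g.2⟩

lemma no_invol {K : Subgroup G} (hK : IsPGroup 3 K) :
    ∀ w : G, w ∈ K → w^2 = 1 → w = 1 := by
  intro w hw h2
  obtain ⟨k, hk⟩ := hK ⟨w, hw⟩
  have hk' : w^(3^k) = 1 := by
    have := congrArg (fun z : K => (z : G)) hk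
    simpa using this
  have d1 : orderOf w ∣ 3^k := orderOf_dvd_of_pow_eq_one hk'
  have d2 : orderOf w ∣ 2 := orderOf_dvd_of_pow_eq_one h2
  have : orderOf w = 1 := Nat.eq_one_of_dvd_coprimes
    (Nat.Coprime.pow_left k (by norm_num)).symm d2 d1
  exact orderOf_eq_one_iff.1 this

open scoped commutatorElement in
lemma normal_of_commutator_le {P : Subgroup G} (h : commutator G ≤ P) : P.Normal := by
  constructor
  intro n hn g
  have h1 : ⁅g, n⁆ ∈ P := by
    apply h
    rw [_root_.commutator_def]
    exact Subgroup.commutator_mem_commutator (Subgroup.mem_top g) (Subgroup.mem_top n)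
  have h2 : ⁅g, n⁆ * n ∈ P := mul_mem h1 hn
  have h3 : ⁅g, n⁆ * n = g * n * g⁻¹ := by
    rw [commutatorElement_def]; group
  rwa [h3] at h2

/-- If `x ∈ P₂` where `P₂` is a Sylow 2-subgroup, then `x² = 1` or `x` has order 4. -/
lemma sq_or_four [Finite G] (hP : PropertyP G) (P₂ : Sylow 2 G) :
    ∀ x : G, x ∈ P₂ → x^2 = 1 ∨ orderOf x = 4 := by
  intro x hx
  obtain ⟨k, hk⟩ := P₂.2 ⟨x, hx⟩
  have hk' : x^(2^k) = 1 := by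
    have := congrArg (fun z : ↥(P₂ : Subgroup G) => (z : G)) hk
    simpa using this
  have d1 : orderOf x ∣ 2^k := orderOf_dvd_of_pow_eq_one hk'
  obtain ⟨i, hik, hio⟩ := (Nat.dvd_prime_pow Nat.prime_two).1 d1
  have hx4 : x^4 = 1 := by
    rcases pow46 hP x with h | h
    · exact h
    · have d6 : orderOf x ∣ 6 := orderOf_dvd_of_pow_eq_one h
      rw [hio] at d6
      have hi2 : i ≤ 2 := by
        by_contra hgt
        push_neg at hgt
        have h8 : (2:ℕ)^3 ∣ 2^i := pow_dvd_pow 2 hgt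
        have := dvd_trans h8 d6
        norm_num at this
      have hd2 : orderOf x ∣ 2 := by
        rw [hio]
        interval_cases i
        · norm_num
        · norm_num
        · exfalso; norm_num at d6
      have hx2 : x^2 = 1 := orderOf_dvd_iff_pow_eq_one.1 hd2
      rw [show (4:ℕ) = 2*2 from rfl, pow_mul, hx2, one_pow]
  have d4 : orderOf x ∣ 4 := orderOf_dvd_of_pow_eq_one hx4
  have hile : i ≤ 2 := by
    by_contra hgt
    push_neg at hgt
    have h8 : (2:ℕ)^3 ∣ 2^i := pow_dvd_pow 2 hgt
    rw [← hio] at h8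
    have := dvd_trans h8 d4
    norm_num at this
  interval_cases i
  · left
    have h1 : x = 1 := orderOf_eq_one_iff.1 (by simpa using hio)
    rw [h1]; simp
  · left
    exact orderOf_dvd_iff_pow_eq_one.1 (by rw [hio]; norm_num)
  · right
    rw [hio]; norm_num

end Stmt10Aux

namespace Stmt10Aux

open Subgroup Pointwise

variable {G : Type*} [Group G]

lemma key [Finite G] (hP : PropertyP G) (hnil : Group.IsNilpotent ↥(commutator G)) :
    (∃ P : Sylow 2 G, (P : Subgroup G).Normal) ∨
    (∃ Q : Sylow 3 G, (Q : Subgroup G).Normal ∧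
      ∀ a b : G, a ∈ (Q : Subgroup G) → b ∈ (Q : Subgroup G) → a*b = b*a) := by
  haveI hf3 : Fact (Nat.Prime 3) := ⟨by norm_num⟩
  -- the Sylow 3-subgroup of the commutator subgroup, pushed into G
  obtain ⟨R⟩ : Nonempty (Sylow 3 ↥(commutator G)) := inferInstance
  have hRn : (R : Subgroup ↥(commutator G)).Normal := by
    have htfae := isNilpotent_of_finite_tfae (G := ↥(commutator G))
    have h03 := htfae.out 0 3
    exact h03.mp hnil 3 hf3 R
  haveI hRc : (R : Subgroup ↥(commutator G)).Characteristic :=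
    Sylow.characteristic_of_normal R hRn
  set T : Subgroup G := (R : Subgroup ↥(commutator G)).map (commutator G).subtype with hTdef
  have hTn : T.Normal := ConjAct.normal_of_characteristic_of_normal
  have hT3 : IsPGroup 3 T := R.isPGroup'.map _
  by_cases hT : T = ⊥
  · -- Case A : the commutator subgroup is a 2-group
    left
    have h2H : IsPGroup 2 (commutator G) := by
      apply pgroup_of_pow 2 2
      intro x hxc
      rcases pow46 hP x with h | h
      · simpa using h
      · -- x^6 = 1 ; show the 3-part is trivial
        have hy : (x^2)^3 = 1 := by rw [← pow_mul]; exact h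
        have hyH : x^2 ∈ commutator G := pow_mem hxc 2
        -- the cyclic subgroup generated by x^2 inside the commutator subgroup
        set y : ↥(commutator G) := ⟨x^2, hyH⟩ with hydef
        have hy3 : y^3 = 1 := by ext; simpa using hy
        have h3y : IsPGroup 3 (Subgroup.zpowers y) := by
          apply pgroup_of_pow 3 1
          intro z hz
          have hdz : orderOf z ∣ orderOf y := orderOf_dvd_of_mem_zpowers hz
          have hdy : orderOf y ∣ 3 := orderOf_dvd_of_pow_eq_one hy3
          simpa using orderOf_dvd_iff_pow_eq_one.1 (dvd_trans hdz hdy)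
        obtain ⟨S', hS'⟩ := h3y.exists_le_sylow
        obtain ⟨g, hg⟩ := MulAction.exists_smul_eq ↥(commutator G) R S'
        have hRbot : (R : Subgroup ↥(commutator G)) = ⊥ := by
          rw [hTdef] at hT
          rwa [Subgroup.map_eq_bot_iff_of_injective _ (Subgroup.subtype_injective _)] at hT
        have hS'bot : (S' : Subgroup ↥(commutator G)) = ⊥ := by
          rw [← hg, Sylow.smul_def, Sylow.pointwise_smul_def, hRbot]
          simp
        have hybot : y ∈ (⊥ : Subgroup ↥(commutator G)) := by
          rw [← hS'bot]
          exact hS' (Subgroup.mem_zpowers y)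
        have hy1 : y = 1 := Subgroup.mem_bot.1 hybot
        have hx2 : x^2 = 1 := by
          have := congrArg (fun z : ↥(commutator G) => (z : G)) hy1
          simpa [hydef] using this
        rw [show (2:ℕ)^2 = 2*2 from rfl, pow_mul, hx2, one_pow]
    obtain ⟨P, hPle⟩ := h2H.exists_le_sylow
    exact ⟨P, normal_of_commutator_le hPle⟩
  · -- Case B : T ≠ ⊥
    obtain ⟨u₀s, hu₀s⟩ := Subgroup.ne_bot_iff_exists_ne_one.1 hT
    set u₀ : G := ↑u₀s with hu₀def
    have hu₀T : u₀ ∈ T := u₀s.2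
    have hu₀ne : u₀ ≠ 1 := by
      intro hc
      rw [hu₀def, OneMemClass.coe_eq_one] at hc
      exact hu₀s hc
    have hT2 : ∀ w : G, w ∈ T → w^2 = 1 → w = 1 := no_invol hT3
    by_cases h4 : ∃ h : G, orderOf h = 4
    · -- Case B2 : there is an element of order 4
      obtain ⟨h, hh4⟩ := h4
      -- a Sylow 2-subgroup containing h
      have hzp : IsPGroup 2 (Subgroup.zpowers h) := by
        apply pgroup_of_pow 2 2
        intro z hz
        have hdz : orderOf z ∣ orderOf h := orderOf_dvd_of_mem_zpowers hz
        rw [hh4] at hdz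
        simpa using orderOf_dvd_iff_pow_eq_one.1 hdz
      obtain ⟨P₂, hP₂le⟩ := hzp.exists_le_sylow
      have hhP₂ : h ∈ P₂ := hP₂le (Subgroup.mem_zpowers h)
      -- squares of products of order-4 elements of P₂
      have sq4 : ∀ x y : G, x ∈ P₂ → y ∈ P₂ → orderOf x = 4 → orderOf y = 4 →
          (x*y)^2 = 1 := by
        intro x y hxm hym hxo hyo
        rcases sq_or_four hP P₂ (x*y) (mul_mem hxm hym) with h2 | ho4
        · exact h2
        · exfalso
          have i1 : x⁻¹ * u₀ * x = u₀⁻¹ := order4_inverts hP hTn hT2 hxo hu₀T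
          have i2 : y⁻¹ * u₀ * y = u₀⁻¹ := order4_inverts hP hTn hT2 hyo hu₀T
          have i3 : (x*y)⁻¹ * u₀ * (x*y) = u₀⁻¹ := order4_inverts hP hTn hT2 ho4 hu₀T
          have e1 : (x*y)⁻¹ * u₀ * (x*y) = y⁻¹ * (x⁻¹ * u₀ * x) * y := by group
          rw [i1] at e1
          have e2 : y⁻¹ * u₀⁻¹ * y = (y⁻¹ * u₀ * y)⁻¹ := by group
          rw [e2, i2, inv_inv] at e1
          have : u₀⁻¹ = u₀ := i3.symm.trans e1
          have hsq : u₀^2 = 1 := by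
            rw [pow_two]
            nth_rewrite 2 [← this]
            simp
          exact hu₀ne (hT2 u₀ hu₀T hsq)
      -- P₂ is commutative
      have hcommP : ∀ x y : G, x ∈ P₂ → y ∈ P₂ → x*y = y*x := by
        intro x y hxm hym
        rcases sq_or_four hP P₂ x hxm with hx2 | hx4
        · rcases sq_or_four hP P₂ y hym with hy2 | hy4
          · exact comm_of_sq hP hx2 hy2
          · exact comm_sq_four hP hx2 hy4
        · rcases sq_or_four hP P₂ y hym with hy2 | hy4
          · exact (comm_sq_four hP hy2 hx4).symm
          · have ha2 : (x*y)^2 = 1 := sq4 x y hxm hym hx4 hy4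
            have hay : (x*y)*y = y*(x*y) := comm_sq_four hP ha2 hy4
            calc x*y = (x*y) := rfl
            _ = (x*y)*y*y⁻¹ := by group
            _ = y*(x*y)*y⁻¹ := by rw [hay]
            _ = y*x*(y*y⁻¹) := by group
            _ = y*x := by simp
      -- no element of order 3 normalizes P₂
      have hnor3 : ∀ r : G, r ∈ Subgroup.normalizer (P₂ : Subgroup G) → orderOf r = 3 → False := by
        intro r hr hr3
        have hmem := Subgroup.mem_normalizer_iff.mp hr
        have hr3' : r^3 = 1 := by rw [← hr3]; exact pow_orderOf_eq_one r
        set h1 : G := r*h*r⁻¹ with hh1def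
        set h2e : G := r*h1*r⁻¹ with hh2def
        have hh1m : h1 ∈ P₂ := (hmem h).1 hhP₂
        have hh2m : h2e ∈ P₂ := (hmem h1).1 hh1m
        have hh1o : orderOf h1 = 4 := by
          rw [hh1def]
          have : r*h*r⁻¹ = (MulAut.conj r) h := rfl
          rw [this, MulEquiv.orderOf_eq, hh4]
        have hh2o : orderOf h2e = 4 := by
          rw [hh2def]
          have : r*h1*r⁻¹ = (MulAut.conj r) h1 := rfl
          rw [this, MulEquiv.orderOf_eq, hh1o]
        set a : G := h*h1 with hadef
        have ha2 : a^2 = 1 := sq4 h h1 hhP₂ hh1m hh4 hh1o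
        have ham : a ∈ P₂ := mul_mem hhP₂ hh1m
        set c : G := a*h2e with hcdef
        have hcm : c ∈ P₂ := mul_mem ham hh2m
        have hcomm_ah : a * h2e = h2e * a := hcommP a h2e ham hh2m
        have hc2 : c^2 = h2e^2 := by
          have : (a*h2e)^2 = a^2*h2e^2 := Commute.mul_pow hcomm_ah 2
          rw [hcdef, this, ha2, one_mul]
        have hc2ne : c^2 ≠ 1 := by
          rw [hc2]
          intro hcon
          have := orderOf_dvd_of_pow_eq_one hcon
          rw [hh2o] at this
          norm_num at this
        have hc4 : c^4 = 1 := by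
          have h44 : c^4 = (c^2)^2 := by rw [← pow_mul]
          rw [h44, hc2, ← pow_mul]
          rw [show 2*2 = 4 from rfl, ← hh2o]
          exact pow_orderOf_eq_one h2e
        -- r commutes with c
        have hrc : r * c = c * r := by
          have e1 : r*c*r⁻¹ = (r*h*r⁻¹)*(r*h1*r⁻¹)*(r*h2e*r⁻¹) := by
            rw [hcdef, hadef]; group
          have hrrr : r*r*r = 1 := by
            have h3 := hr3'
            rwa [pow_succ, pow_succ, pow_one] at h3
          have e2 : r*h2e*r⁻¹ = h := by
            calc r*h2e*r⁻¹ = (r*r*r)*h*((r*r*r)⁻¹) := by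
                  rw [hh2def, hh1def]; simp [mul_assoc]
            _ = h := by rw [hrrr]; simp
          -- so r*c*r⁻¹ = h1 * h2e * h
          have e3 : r*c*r⁻¹ = h1 * h2e * h := by
            rw [e1, e2, ← hh1def, ← hh2def]
          have e4 : h1 * h2e * h = c := by
            have hsw := hcommP (h1*h2e) h (mul_mem hh1m hh2m) hhP₂
            calc h1*h2e*h = h*(h1*h2e) := hsw
            _ = h*h1*h2e := by rw [← mul_assoc]
            _ = c := by rw [hcdef, hadef]
          have e5 : r*c*r⁻¹ = c := e3.trans e4
          calc r * c = (r*c*r⁻¹)*r := by group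
          _ = c * r := by rw [e5]
        have hCrc : Commute c r := hrc.symm
        have hx4 : (c*r)^4 = r := by
          rw [hCrc.mul_pow, hc4, one_mul]
          rw [show (4:ℕ) = 3+1 from rfl, pow_succ, hr3', one_mul]
        have hx6 : (c*r)^6 = c^2 := by
          rw [hCrc.mul_pow]
          have : r^6 = 1 := by
            rw [show (6:ℕ) = 3*2 from rfl, pow_mul, hr3', one_pow]
          rw [this, mul_one]
          have : c^6 = c^4 * c^2 := by rw [← pow_add]
          rw [this, hc4, one_mul]
        rcases pow46 hP (c*r) with hcon | hcon
        · rw [hx4] at hcon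
          exact absurd hr3 (by rw [hcon]; norm_num)
        · rw [hx6] at hcon
          exact hc2ne hcon
      -- the normalizer of P₂ equals P₂
      have hNeq : Subgroup.normalizer (P₂ : Subgroup G) = (P₂ : Subgroup G) := by
        apply P₂.3 _ Subgroup.le_normalizer
        apply pgroup_of_pow 2 2
        intro x hx
        rcases pow46 hP x with hh | hh
        · simpa using hh
        · have hd6 : orderOf x ∣ 6 := orderOf_dvd_of_pow_eq_one hh
          have hpos : 0 < orderOf x := orderOf_pos x
          have hle : orderOf x ≤ 6 := Nat.le_of_dvd (by norm_num) hd6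
          have hno3 : orderOf x ≠ 3 := fun hcon => hnor3 x hx hcon
          have hno6 : orderOf x ≠ 6 := by
            intro hcon
            apply hnor3 (x^2) (pow_mem hx 2)
            rw [orderOf_pow, hcon]
            norm_num
          have hd2 : orderOf x ∣ 2 := by
            interval_cases (orderOf x) <;> first
              | (exact absurd rfl hno3)
              | (exact absurd rfl hno6)
              | decide
              | (exact absurd hd6 (by decide))
          have hx2 : x^2 = 1 := orderOf_dvd_iff_pow_eq_one.1 hd2
          rw [show (2:ℕ)^2 = 2*2 from rfl, pow_mul, hx2, one_pow]
      have hcent : Subgroup.normalizer (P₂ : Subgroup G) ≤ Subgroup.centralizer (P₂ : Set G) := by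
        rw [hNeq]
        intro g hg
        rw [Subgroup.mem_centralizer_iff]
        intro m hm
        exact hcommP m g hm hg
      -- Burnside transfer
      set K := (MonoidHom.transferSylow P₂ hcent).ker with hKdef
      have hKn : K.Normal := MonoidHom.normal_ker _
      have hK2 : ∀ w : G, w ∈ K → w^2 = 1 → w = 1 := by
        intro w hw h2
        have hzw : IsPGroup 2 (Subgroup.zpowers w) := by
          apply pgroup_of_pow 2 1
          intro z hz
          have hdz : orderOf z ∣ orderOf w := orderOf_dvd_of_mem_zpowers hz
          have hdw : orderOf w ∣ 2 := orderOf_dvd_of_pow_eq_one h2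
          simpa using orderOf_dvd_iff_pow_eq_one.1 (dvd_trans hdz hdw)
        have hdisj := MonoidHom.ker_transferSylow_disjoint P₂ hcent _ hzw
        have : w ∈ K ⊓ Subgroup.zpowers w := ⟨hw, Subgroup.mem_zpowers w⟩
        have := hdisj.le_bot this
        exact Subgroup.mem_bot.1 this
      have hK3 : IsPGroup 3 K := by
        apply pgroup_of_pow 3 1
        intro w hw
        rcases pow46 hP w with hh | hh
        · have h2 : (w^2)^2 = 1 := by rw [← pow_mul]; exact hh
          have hw2 : w^2 = 1 := hK2 _ (pow_mem hw 2) h2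
          have hw1 : w = 1 := hK2 _ hw hw2
          rw [hw1]; simp
        · have h2 : (w^3)^2 = 1 := by rw [← pow_mul]; exact hh
          have hw3 : w^3 = 1 := hK2 _ (pow_mem hw 3) h2
          simpa using hw3
      obtain ⟨Q₃, hQ₃le⟩ := hK3.exists_le_sylow
      have hcompl := MonoidHom.ker_transferSylow_isComplement' P₂ hcent
      -- the quotient G/K is a 2-group
      haveI := hKn
      have hcm : Nat.card K * Nat.card ↥(P₂ : Subgroup G) = Nat.card G := hcompl.card_mul
      have hcq : Nat.card G = Nat.card (G ⧸ K) * Nat.card K :=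
        Subgroup.card_eq_card_quotient_mul_card_subgroup K
      have hKpos : 0 < Nat.card K := Nat.card_pos
      have hcardq : Nat.card (G ⧸ K) = Nat.card ↥(P₂ : Subgroup G) := by
        have : Nat.card (G ⧸ K) * Nat.card K = Nat.card ↥(P₂ : Subgroup G) * Nat.card K := by
          rw [← hcq]
          rw [← hcm]
          ring
        exact Nat.eq_of_mul_eq_mul_right hKpos this
      have hquot2 : IsPGroup 2 (G ⧸ K) := by
        apply IsPGroup.of_card
        rw [hcardq, Sylow.card_eq_multiplicity]
      have hQ₃K : (Q₃ : Subgroup G) ≤ K := by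
        intro x hx
        obtain ⟨j, hj⟩ := Q₃.2 ⟨x, hx⟩
        have hj' : x^(3^j) = 1 := by
          have := congrArg (fun z : ↥(Q₃ : Subgroup G) => (z : G)) hj
          simpa using this
        obtain ⟨m, hm⟩ := hquot2 (QuotientGroup.mk' K x)
        have d3 : orderOf (QuotientGroup.mk' K x) ∣ 3^j :=
          orderOf_dvd_of_pow_eq_one (by rw [← map_pow, hj', map_one])
        have d2 : orderOf (QuotientGroup.mk' K x) ∣ 2^m := orderOf_dvd_of_pow_eq_one hm
        have hco : Nat.Coprime (3^j) (2^m) :=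
          Nat.Coprime.pow j m (by norm_num)
        have : orderOf (QuotientGroup.mk' K x) = 1 :=
          Nat.eq_one_of_dvd_coprimes hco d3 d2
        have hone : QuotientGroup.mk' K x = 1 := orderOf_eq_one_iff.1 this
        exact (QuotientGroup.eq_one_iff x).1 hone
      have hKQ : (Q₃ : Subgroup G) = K := le_antisymm hQ₃K hQ₃le
      right
      refine ⟨Q₃, by rw [hKQ]; exact hKn, ?_⟩
      intro a b ha hb
      rw [hKQ] at ha hb
      have ia : h⁻¹ * a * h = a⁻¹ := order4_inverts hP hKn hK2 hh4 ha
      have ib : h⁻¹ * b * h = b⁻¹ := order4_inverts hP hKn hK2 hh4 hb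
      have iab : h⁻¹ * (a*b) * h = (a*b)⁻¹ :=
        order4_inverts hP hKn hK2 hh4 (mul_mem ha hb)
      have e1 : h⁻¹ * (a*b) * h = (h⁻¹*a*h) * (h⁻¹*b*h) := by group
      rw [ia, ib] at e1
      have e2 : a⁻¹ * b⁻¹ = (a*b)⁻¹ := e1.symm.trans iab
      have e3 : (a*b)⁻¹ = b⁻¹*a⁻¹ := mul_inv_rev a b
      have e4 : a⁻¹ * b⁻¹ = b⁻¹ * a⁻¹ := e2.trans e3
      have := congrArg (fun z : G => z⁻¹) e4
      simpa [mul_inv_rev] using this.symm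
    · -- Case B1 : no element of order 4
      left
      push_neg at h4
      set W : Subgroup G := Subgroup.closure {x : G | x^2 = 1} with hWdef
      have hWsq : ∀ w : G, w ∈ W → w^2 = 1 := by
        intro w hw
        induction hw using Subgroup.closure_induction with
        | mem z hz => exact hz
        | one => simp
        | mul z₁ z₂ hz₁ hz₂ ih₁ ih₂ =>
          have hc := comm_of_sq hP ih₁ ih₂
          calc (z₁*z₂)^2 = z₁*(z₂*z₁)*z₂ := by rw [pow_two]; simp [mul_assoc]
          _ = z₁*(z₁*z₂)*z₂ := by rw [← hc]
          _ = (z₁*z₁)*(z₂*z₂) := by simp [mul_assoc]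
          _ = 1 := by rw [← pow_two, ← pow_two, ih₁, ih₂, one_mul]
        | inv z hz ih =>
          rw [inv_pow, ih, inv_one]
      have hWn : W.Normal := by
        constructor
        intro n hn g
        apply Subgroup.subset_closure
        have hn2 := hWsq n hn
        show (g*n*g⁻¹)^2 = 1
        calc (g*n*g⁻¹)^2 = g*(n*n)*g⁻¹ := by rw [pow_two]; simp [mul_assoc]
        _ = 1 := by rw [← pow_two, hn2]; simp
      have hW2 : IsPGroup 2 W := pgroup_of_pow 2 1 (by simpa using hWsq)
      obtain ⟨P, hPle⟩ := hW2.exists_le_sylow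
      have hPW : (P : Subgroup G) ≤ W := by
        intro x hx
        rcases sq_or_four hP P x hx with h2 | ho
        · exact Subgroup.subset_closure h2
        · exact absurd ho (h4 x)
      have hPeq : (P : Subgroup G) = W := le_antisymm hPW hPle
      exact ⟨P, by rw [hPeq]; exact hWn⟩

end Stmt10Aux

/-- if `G` has property (P) and its commutator subgroup is nilpotent,
then `G` has a normal Sylow 2-subgroup or a normal Sylow 3-subgroup; furthermore if
a Sylow 3-subgroup is non-abelian then `G` has a normal Sylow 2-subgroup. -/
theorem stmt10 (G : Type*) [Group G] [Finite G] (hP : PropertyP G)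
    (hnil : Group.IsNilpotent ↥(commutator G)) :
    ((∃ P : Sylow 2 G, (P : Subgroup G).Normal) ∨
      (∃ Q : Sylow 3 G, (Q : Subgroup G).Normal)) ∧
    ((∃ Q : Sylow 3 G, ¬ ∀ a b : ↥(Q : Subgroup G), a * b = b * a) →
      ∃ P : Sylow 2 G, (P : Subgroup G).Normal) := by
  have hkey := Stmt10Aux.key hP hnil
  constructor
  · rcases hkey with ⟨P, hp⟩ | ⟨Q, hq, _⟩
    · exact Or.inl ⟨P, hp⟩
    · exact Or.inr ⟨Q, hq⟩
  · intro hyp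
    rcases hkey with ⟨P, hp⟩ | ⟨Q, hq, hcomm⟩
    · exact ⟨P, hp⟩
    · exfalso
      obtain ⟨Q', hQ'⟩ := hyp
      apply hQ'
      intro a b
      haveI : Fact (Nat.Prime 3) := ⟨by norm_num⟩
      obtain ⟨g, hg⟩ := MulAction.exists_smul_eq G Q Q'
      have hmem : ∀ x : G, x ∈ (Q' : Subgroup G) → g⁻¹ * x * g ∈ (Q : Subgroup G) := by
        intro x hx
        rw [← hg, Sylow.smul_def] at hx
        have := Subgroup.mem_pointwise_smul_iff_inv_smul_mem.mp hx
        simpa using this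
      have ha := hmem a a.2
      have hb := hmem b b.2
      have hcab := hcomm _ _ ha hb
      have e2 : g⁻¹*((a:G)*b)*g = g⁻¹*((b:G)*a)*g := by
        calc g⁻¹*((a:G)*b)*g = (g⁻¹*(a:G)*g)*(g⁻¹*(b:G)*g) := by group
        _ = (g⁻¹*(b:G)*g)*(g⁻¹*(a:G)*g) := hcab
        _ = g⁻¹*((b:G)*a)*g := by group
      have e3 : (a:G) * b = (b:G) * a := by
        have := congrArg (fun z => g * z * g⁻¹) e2
        simpa [mul_assoc] using this
      exact Subtype.ext (by push_cast; exact e3)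
end

section
/- Every finite group G with property (P) has a normal Sylow 2-subgroup or a normal Sylow 3-subgroup. -/
set_option maxRecDepth 40000

/-- The bundle of elementary facts that hold in each of the seven groups of property (P). -/
def GoodGroup (K : Type*) [Group K] : Prop :=
  (∀ a b : K, a*a = 1 → b^4 = 1 → a*b = b*a) ∧
  (∀ b : K, b^4 = 1 ∨ b^6 = 1) ∧
  (∀ a b : K, a*a = 1 → a*b ≠ b*a → b^3 = 1) ∧
  (∀ a b : K, a*a = 1 → b^6 = 1 → b^2 ≠ 1 → b^3 ≠ 1 → a*b = b*a)

lemma good1 : GoodGroup (Multiplicative (ZMod 2)) := ⟨by decide, by decide, by decide, by decide⟩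
lemma good2 : GoodGroup (Multiplicative (ZMod 2) × Multiplicative (ZMod 2)) :=
  ⟨by decide, by decide, by decide, by decide⟩
lemma good3 : GoodGroup (Multiplicative (ZMod 4)) := ⟨by decide, by decide, by decide, by decide⟩
lemma good4 : GoodGroup (Multiplicative (ZMod 6)) := ⟨by decide, by decide, by decide, by decide⟩
lemma good5 : GoodGroup (Multiplicative (ZMod 2) × Multiplicative (ZMod 4)) :=
  ⟨by decide, by decide, by decide, by decide⟩
lemma good6 : GoodGroup (Multiplicative (ZMod 2) × Multiplicative (ZMod 6)) :=
  ⟨by decide, by decide, by decide, by decide⟩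
lemma good7 : GoodGroup (alternatingGroup (Fin 4)) := ⟨by decide, by decide, by decide, by decide⟩

section Transfer

variable {G : Type*} [Group G]

/-- Pull the `GoodGroup` facts back along a `MulEquiv` from the closure of `{x, y}`. -/
lemma goodGroup_pull {x y : G} {K : Type*} [Group K]
    (e : ↥(Subgroup.closure ({x, y} : Set G)) ≃* K) (hK : GoodGroup K) :
    (x*x = 1 → y^4 = 1 → x*y = y*x) ∧ (y^4 = 1 ∨ y^6 = 1) ∧
    (x*x = 1 → x*y ≠ y*x → y^3 = 1) ∧
    (x*x = 1 → y^6 = 1 → y^2 ≠ 1 → y^3 ≠ 1 → x*y = y*x) := by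
  have hxm : x ∈ Subgroup.closure ({x, y} : Set G) := Subgroup.subset_closure (by simp)
  have hym : y ∈ Subgroup.closure ({x, y} : Set G) := Subgroup.subset_closure (by simp)
  set H := Subgroup.closure ({x, y} : Set G) with hH
  set X : ↥H := ⟨x, hxm⟩ with hX
  set Y : ↥H := ⟨y, hym⟩ with hY
  have cpow : ∀ (n : ℕ), (y^n = 1) ↔ (e Y)^n = 1 := by
    intro n
    rw [← map_pow, (MulEquiv.map_eq_one_iff e)]
    constructor
    · intro h; exact Subtype.ext (by simpa using h)
    · intro h; simpa using congrArg Subtype.val h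
  have cmul : (x*y = y*x) ↔ (e X)*(e Y) = (e Y)*(e X) := by
    rw [← map_mul, ← map_mul, e.injective.eq_iff]
    constructor
    · intro h; exact Subtype.ext (by simpa using h)
    · intro h; simpa using congrArg Subtype.val h
  have cx : x*x = 1 → (e X)*(e X) = 1 := by
    intro h
    rw [← map_mul, (MulEquiv.map_eq_one_iff e)]
    exact Subtype.ext (by simpa using h)
  obtain ⟨k1, k2, k3, k4⟩ := hK
  refine ⟨?_, ?_, ?_, ?_⟩
  · intro hx hy
    exact cmul.2 (k1 _ _ (cx hx) ((cpow 4).1 hy))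
  · rcases k2 (e Y) with h | h
    · exact Or.inl ((cpow 4).2 h)
    · exact Or.inr ((cpow 6).2 h)
  · intro hx hnc
    exact (cpow 3).2 (k3 _ _ (cx hx) (fun h => hnc (cmul.2 h)))
  · intro hx h6 h2 h3
    exact cmul.2 (k4 _ _ (cx hx) ((cpow 6).1 h6)
      (fun h => h2 ((cpow 2).2 h)) (fun h => h3 ((cpow 3).2 h)))

end Transfer

section PFacts

variable {G : Type*} [Group G]

lemma P_facts (hP : PropertyP G) (x y : G) (hx : orderOf x = 2) :
    (x*x = 1 → y^4 = 1 → x*y = y*x) ∧ (y^4 = 1 ∨ y^6 = 1) ∧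
    (x*x = 1 → x*y ≠ y*x → y^3 = 1) ∧
    (x*x = 1 → y^6 = 1 → y^2 ≠ 1 → y^3 ≠ 1 → x*y = y*x) := by
  rcases hP.2 x y hx with h|h|h|h|h|h|h <;> obtain ⟨e⟩ := h
  · exact goodGroup_pull e good1
  · exact goodGroup_pull e good2
  · exact goodGroup_pull e good3
  · exact goodGroup_pull e good4
  · exact goodGroup_pull e good5
  · exact goodGroup_pull e good6
  · exact goodGroup_pull e good7

lemma order_two_of (x : G) (hx2 : x*x = 1) (hx1 : x ≠ 1) : orderOf x = 2 :=
  orderOf_eq_prime (by rw [pow_two]; exact hx2) hx1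

/-- every involution commutes with every element whose 4th power is 1 -/
lemma comm24 (hP : PropertyP G) (x y : G) (hx : x*x = 1) (hy : y^4 = 1) : x*y = y*x := by
  by_cases h1 : x = 1
  · subst h1; rw [one_mul, mul_one]
  · exact (P_facts hP x y (order_two_of x hx h1)).1 hx hy

/-- the order dichotomy: every element has `y⁴=1` or `y⁶=1` -/
lemma dich46 (hP : PropertyP G) (t : G) (ht2 : t*t = 1) (ht1 : t ≠ 1) (y : G) :
    y^4 = 1 ∨ y^6 = 1 :=
  (P_facts hP t y (order_two_of t ht2 ht1)).2.1

/-- if an involution does not commute with `y`, then `y³ = 1` -/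
lemma cube_noncomm (hP : PropertyP G) (x y : G) (hx : x*x = 1) (hnc : x*y ≠ y*x) : y^3 = 1 := by
  by_cases h1 : x = 1
  · exact absurd (by rw [h1, one_mul, mul_one]) hnc
  · exact (P_facts hP x y (order_two_of x hx h1)).2.2.1 hx hnc

/-- every involution commutes with every element of order 6 -/
lemma comm6 (hP : PropertyP G) (x y : G) (hx : x*x = 1) (h6 : y^6 = 1) (h2 : y^2 ≠ 1)
    (h3 : y^3 ≠ 1) : x*y = y*x := by
  by_cases h1 : x = 1
  · subst h1; rw [one_mul, mul_one]
  · exact (P_facts hP x y (order_two_of x hx h1)).2.2.2 hx h6 h2 h3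

end PFacts

section OneTwoThree

open Pointwise

variable {H : Type*} [Group H]

lemma inv_eq_self_of_sq {x : H} (h : x^2 = 1) : x⁻¹ = x :=
  inv_eq_of_mul_eq_one_right (by rw [← pow_two]; exact h)

/-- In a group of exponent dividing 6 where every element has order 1, 2 or 3, a nontrivial
involution and a nontrivial cube-root of 1 never commute. -/
lemma no_mixed_comm (ord : ∀ h : H, h^2 = 1 ∨ h^3 = 1) {a e : H}
    (ha2 : a^2 = 1) (ha1 : a ≠ 1) (he3 : e^3 = 1) (he1 : e ≠ 1) (hcm : a*e = e*a) : False := by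
  have hcm' : Commute a e := hcm
  rcases ord (a*e) with h | h
  · rw [hcm'.mul_pow, ha2, one_mul] at h
    exact he1 (by calc e = e^3 * (e^2)⁻¹ := by group
                 _ = 1 := by rw [he3, h]; simp)
  · rw [hcm'.mul_pow, he3, mul_one] at h
    exact ha1 (by calc a = a^3 * (a^2)⁻¹ := by group
                 _ = 1 := by rw [h, ha2]; simp)

lemma zpowers_isPGroup (p : ℕ) {x : H} (hx : x^p = 1) : IsPGroup p (Subgroup.zpowers x) := by
  intro g
  refine ⟨1, ?_⟩
  obtain ⟨m, hm⟩ := Subgroup.mem_zpowers_iff.mp g.2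
  have hg : (g : H) ^ p = 1 := by
    rw [← hm, ← zpow_natCast, ← zpow_mul, mul_comm, zpow_mul, zpow_natCast, hx, one_zpow]
  refine Subtype.ext ?_
  rw [pow_one]
  push_cast
  simpa using hg

lemma mem_of_normal_sylow {p : ℕ} [Fact p.Prime] [Finite H] (P : Sylow p H)
    (hN : (P : Subgroup H).Normal) {x : H} (hx : x^p = 1) : x ∈ (P : Subgroup H) := by
  obtain ⟨Q, hQ⟩ := (zpowers_isPGroup p hx).exists_le_sylow
  haveI := Sylow.unique_of_normal P hN
  have hQP : Q = P := Subsingleton.elim Q P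
  rw [← hQP]
  exact hQ (Subgroup.mem_zpowers x)

lemma sylow_coe_eq {p : ℕ} (P : Sylow p H) {S : Subgroup H} (hS : IsPGroup p S)
    (hle : (P : Subgroup H) ≤ S) : (P : Subgroup H) = S :=
  (P.3 hS hle).symm

/-- Y': an "S3-configuration" and an "A4-configuration" cannot coexist in a finite group
all of whose elements have order 1, 2 or 3. -/
lemma Yprime [Finite H] (ord : ∀ h : H, h^2 = 1 ∨ h^3 = 1)
    {t t' : H} (ht : t^2 = 1) (ht' : t'^2 = 1) (htt' : t*t' ≠ t'*t)
    {w c : H} (hw : w^2 = 1) (hc : c^3 = 1) (hwc3 : (w*c)^3 = 1)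
    (hwcn : w*c ≠ c*w) : False := by
  classical
  haveI : Fact (Nat.Prime 2) := ⟨Nat.prime_two⟩
  have hw1 : w ≠ 1 := by rintro rfl; exact hwcn (by rw [one_mul, mul_one])
  have hc1 : c ≠ 1 := by rintro rfl; exact hwcn (by rw [one_mul, mul_one])
  have ht1 : t ≠ 1 := by rintro rfl; exact htt' (by rw [one_mul, mul_one])
  set ρ := t*t' with hρdef
  clear_value ρ
  have htinv : t⁻¹ = t := inv_eq_self_of_sq ht
  have ht'inv : t'⁻¹ = t' := inv_eq_self_of_sq ht'
  have hρ2 : ρ^2 ≠ 1 := by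
    intro h
    apply htt'
    have h2 : ρ⁻¹ = ρ := inv_eq_self_of_sq h
    calc ρ = ρ⁻¹ := h2.symm
    _ = t'*t := by rw [hρdef, mul_inv_rev, htinv, ht'inv]
  have hρ3 : ρ^3 = 1 := (ord ρ).resolve_left hρ2
  have hρ1 : ρ ≠ 1 := fun h => hρ2 (by rw [h, one_pow])
  have htρ : t*ρ*t = ρ⁻¹ := by
    rw [hρdef, mul_inv_rev, htinv, ht'inv]
    calc t*(t*t')*t = (t*t)*(t'*t) := by group
    _ = t'*t := by rw [← pow_two, ht, one_mul]
  -- the Klein four group coming from the A4-configuration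
  set w₁ := c*w*c⁻¹ with hw₁def
  clear_value w₁
  have hw₁sq : w₁^2 = 1 := by
    rw [hw₁def, conj_pow, hw]
    simp
  have hw₁1 : w₁ ≠ 1 := by
    rw [hw₁def]
    intro h
    apply hw1
    have : c⁻¹ * (c*w*c⁻¹) * c = c⁻¹ * 1 * c := by rw [h]
    simpa [mul_assoc] using this
  have hww₁ : w₁ ≠ w := by
    intro h
    apply hwcn
    have h3 : w₁*c = w*c := by rw [h]
    rw [hw₁def] at h3
    have h5 : c*w*(c⁻¹*c) = w*c := by
      calc c*w*(c⁻¹*c) = c*w*c⁻¹*c := by group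
      _ = w*c := h3
    simpa using h5.symm
  have hcin : c⁻¹ = c^2 :=
    inv_eq_of_mul_eq_one_right (by rw [← pow_succ']; exact hc)
  have hccinv : c⁻¹*c⁻¹ = c := by
    rw [hcin]
    calc c^2*c^2 = c^3*c := by group
    _ = c := by rw [hc, one_mul]
  have hkey : w*w₁*(c⁻¹*w*c) = 1 := by
    have h5 : w*w₁*(c⁻¹*w*c) = w*c*w*(c⁻¹*c⁻¹)*w*c := by rw [hw₁def]; group
    rw [h5, hccinv]
    calc w*c*w*c*w*c = (w*c)^3 := by simp [pow_succ, mul_assoc]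
    _ = 1 := hwc3
  have hw₂sq : (c⁻¹*w*c)^2 = 1 := by
    rw [show c⁻¹*w*c = c⁻¹*w*(c⁻¹)⁻¹ by rw [inv_inv], conj_pow, hw]
    simp
  have hprodsq : (w*w₁)^2 = 1 := by
    have h1 : w*w₁ = (c⁻¹*w*c)⁻¹ := by
      rw [eq_inv_iff_mul_eq_one]
      simpa [mul_assoc] using hkey
    rw [h1, inv_pow, hw₂sq, inv_one]
  have hwinv : w⁻¹ = w := inv_eq_self_of_sq hw
  have hw₁inv : w₁⁻¹ = w₁ := inv_eq_self_of_sq hw₁sq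
  have hcomm_ww₁ : w*w₁ = w₁*w := by
    calc w*w₁ = (w*w₁)⁻¹ := (inv_eq_self_of_sq hprodsq).symm
    _ = w₁⁻¹*w⁻¹ := by rw [mul_inv_rev]
    _ = w₁*w := by rw [hwinv, hw₁inv]
  -- Sylow 2-subgroup containing t
  obtain ⟨P₁, hP₁⟩ := (zpowers_isPGroup 2 ht).exists_le_sylow
  have htP₁ : t ∈ (P₁ : Subgroup H) := hP₁ (Subgroup.mem_zpowers t)
  -- the subgroup generated by w, w₁ is an elementary abelian 2-group
  set V := Subgroup.closure ({w, w₁} : Set H) with hVdef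
  have hgencent : ({w, w₁} : Set H) ⊆ ↑(Subgroup.centralizer {w, w₁}) := by
    intro z hz
    refine Subgroup.mem_centralizer_iff.mpr ?_
    intro g hg
    simp only [Set.mem_insert_iff, Set.mem_singleton_iff] at hz hg
    rcases hz with rfl | rfl <;> rcases hg with rfl | rfl
    · rfl
    · exact hcomm_ww₁.symm
    · exact hcomm_ww₁
    · rfl
  have hVcent : V ≤ Subgroup.centralizer {w, w₁} := (Subgroup.closure_le _).mpr hgencent
  have hVcomm : ∀ a ∈ V, ∀ b ∈ V, a*b = b*a := by
    intro a ha b hb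
    have hb' := Subgroup.mem_centralizer_iff.mp (hVcent hb)
    have h2 : V ≤ Subgroup.centralizer {b} := by
      refine (Subgroup.closure_le _).mpr ?_
      intro z hz
      refine Subgroup.mem_centralizer_iff.mpr ?_
      intro g hg
      simp only [Set.mem_insert_iff, Set.mem_singleton_iff] at hz hg
      have hzb : z*b = b*z := by
        rcases hz with h | h
        · rw [h]; exact hb' w (by simp)
        · rw [h]; exact hb' w₁ (by simp)
      rw [hg]
      exact hzb.symm
    exact (Subgroup.mem_centralizer_iff.mp (h2 ha) b (by simp)).symm
  have hVsq : ∀ x ∈ V, x^2 = 1 := by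
    intro x hx
    induction hx using Subgroup.closure_induction with
    | mem z hz => rcases hz with rfl | rfl
                  · exact hw
                  · exact hw₁sq
    | one => exact one_pow 2
    | mul a b ha hb iha ihb =>
      have hab : a*b = b*a := hVcomm a ha b hb
      have : Commute a b := hab
      rw [this.mul_pow, iha, ihb, one_mul]
    | inv a ha iha => rw [inv_pow, iha, inv_one]
  have hVp : IsPGroup 2 V := by
    intro g
    refine ⟨1, Subtype.ext ?_⟩
    rw [pow_one]
    push_cast
    simpa using hVsq (g : H) g.2
  obtain ⟨P₂, hP₂⟩ := hVp.exists_le_sylow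
  obtain ⟨g, hg⟩ := MulAction.exists_smul_eq H P₂ P₁
  -- transport w, w₁ into P₁
  have hmem : ∀ z ∈ V, g*z*g⁻¹ ∈ (P₁ : Subgroup H) := by
    intro z hz
    have h1 : z ∈ (P₂ : Subgroup H) := hP₂ hz
    have h2 : MulAut.conj g z ∈ MulAut.conj g • (P₂ : Subgroup H) :=
      Subgroup.smul_mem_pointwise_smul z (MulAut.conj g) (P₂ : Subgroup H) h1
    have h3 : (↑(g • P₂) : Subgroup H) = MulAut.conj g • (P₂ : Subgroup H) :=
      Sylow.coe_subgroup_smul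
    rw [← h3, hg] at h2
    simpa [MulAut.smul_def, MulAut.conj_apply] using h2
  set w' := g*w*g⁻¹ with hw'def
  clear_value w'
  set w₁' := g*w₁*g⁻¹ with hw₁'def
  clear_value w₁'
  have hw'P₁ : w' ∈ (P₁ : Subgroup H) := by
    rw [hw'def]; exact hmem w (Subgroup.subset_closure (by simp))
  have hw₁'P₁ : w₁' ∈ (P₁ : Subgroup H) := by
    rw [hw₁'def]; exact hmem w₁ (Subgroup.subset_closure (by simp))
  have hw'sq : w'^2 = 1 := by
    rw [hw'def, conj_pow, hw]
    simp
  have hw₁'sq : w₁'^2 = 1 := by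
    rw [hw₁'def, conj_pow, hw₁sq]
    simp
  have hw'1 : w' ≠ 1 := by
    rw [hw'def]
    intro h
    apply hw1
    have : g⁻¹ * (g*w*g⁻¹) * g = g⁻¹ * 1 * g := by rw [h]
    simpa [mul_assoc] using this
  have hw₁'1 : w₁' ≠ 1 := by
    rw [hw₁'def]
    intro h
    apply hw₁1
    have : g⁻¹ * (g*w₁*g⁻¹) * g = g⁻¹ * 1 * g := by rw [h]
    simpa [mul_assoc] using this
  have hww' : w' ≠ w₁' := by
    rw [hw'def, hw₁'def]
    intro h
    apply hww₁
    have h1 : g⁻¹ * (g*w*g⁻¹) * g = g⁻¹ * (g*w₁*g⁻¹) * g := by rw [h]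
    have h2 : w = w₁ := by simpa [mul_assoc] using h1
    exact h2.symm
  -- every element of P₁ is an involution, and P₁ is abelian
  have hPsq : ∀ x : H, x ∈ (P₁ : Subgroup H) → x^2 = 1 := by
    intro x hx
    rcases ord x with h | h
    · exact h
    · obtain ⟨k, hk⟩ := P₁.2 ⟨x, hx⟩
      have hxk : x^(2^k) = 1 := by
        have := congrArg (Subtype.val) hk
        push_cast at this
        simpa using this
      have h1 : orderOf x ∣ 2^k := orderOf_dvd_of_pow_eq_one hxk
      have h2 : orderOf x ∣ 3 := orderOf_dvd_of_pow_eq_one h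
      have h3 : orderOf x ∣ 1 := by
        have := Nat.dvd_gcd h2 h1
        have hg : Nat.gcd 3 (2^k) = 1 := Nat.Coprime.gcd_eq_one (Nat.Coprime.pow_right _ (by norm_num))
        rwa [hg] at this
      have : x = 1 := orderOf_eq_one_iff.mp (Nat.dvd_one.mp h3)
      rw [this, one_pow]
  have hPcomm : ∀ x y : H, x ∈ (P₁ : Subgroup H) → y ∈ (P₁ : Subgroup H) → x*y = y*x := by
    intro x y hx hy
    have hxy : (x*y)^2 = 1 := hPsq _ (mul_mem hx hy)
    have hxi : x⁻¹ = x := inv_eq_self_of_sq (hPsq x hx)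
    have hyi : y⁻¹ = y := inv_eq_self_of_sq (hPsq y hy)
    calc x*y = (x*y)⁻¹ := (inv_eq_self_of_sq hxy).symm
    _ = y⁻¹*x⁻¹ := mul_inv_rev x y
    _ = y*x := by rw [hxi, hyi]
  -- select v ∈ P₁, an involution different from 1 and t
  obtain ⟨v, hvP₁, hv2, hv1, hvt⟩ : ∃ v, v ∈ (P₁ : Subgroup H) ∧ v^2 = 1 ∧ v ≠ 1 ∧ v ≠ t := by
    by_cases h : w' = t
    · exact ⟨w₁', hw₁'P₁, hw₁'sq, hw₁'1, by rw [← h]; exact fun hh => hww' hh.symm⟩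
    · exact ⟨w', hw'P₁, hw'sq, hw'1, h⟩
  have htv : t*v = v*t := hPcomm t v htP₁ hvP₁
  have hvinv : v⁻¹ = v := inv_eq_self_of_sq hv2
  have hu2 : (t*v)^2 = 1 := by
    have : Commute t v := htv
    rw [this.mul_pow, ht, hv2, one_mul]
  have hu1 : t*v ≠ 1 := by
    intro h
    apply hvt
    have : v = t⁻¹ := eq_inv_of_mul_eq_one_left (by rw [← h]; exact htv.symm)
    rw [this, htinv]
  -- v does not invert ρ
  have hvρnotinv : ¬ (v*ρ*v = ρ⁻¹) := by
    intro hinv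
    -- then t*v commutes with ρ, contradiction with no_mixed_comm
    have h1 : (t*v)*ρ*(t*v)⁻¹ = ρ := by
      rw [mul_inv_rev, htinv, hvinv]
      calc t*v*ρ*(v*t) = t*(v*ρ*v)*t := by group
      _ = t*ρ⁻¹*t := by rw [hinv]
      _ = ρ := by
          calc t*ρ⁻¹*t = t⁻¹*ρ⁻¹*t⁻¹ := by rw [htinv]
          _ = (t*ρ*t)⁻¹ := by group
          _ = ρ := by rw [htρ, inv_inv]
    have h2 : (t*v)*ρ = ρ*(t*v) := by
      have := h1
      rw [mul_inv_rev, htinv, hvinv] at this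
      calc (t*v)*ρ = ((t*v)*ρ*(v*t))*(t*v) := by
            have h4 : (v*t)*(t*v) = 1 := by
              calc (v*t)*(t*v) = v*(t*t)*v := by group
              _ = 1 := by rw [← pow_two, ht, mul_one, ← pow_two, hv2]
            rw [mul_assoc ((t*v)*ρ), h4, mul_one]
      _ = ρ*(t*v) := by rw [this]
    exact no_mixed_comm ord hu2 hu1 hρ3 hρ1 h2
  -- hence (vρ)³ = 1 and (vρ⁻¹)³ = 1
  have hvρ1 : v*ρ ≠ 1 := by
    intro h
    have : v = ρ⁻¹ := eq_inv_of_mul_eq_one_left h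
    rw [this] at hv2
    rw [inv_pow, inv_eq_one] at hv2
    exact hρ2 hv2
  have hvρ3 : (v*ρ)^3 = 1 := by
    rcases ord (v*ρ) with h | h
    · exfalso
      apply hvρnotinv
      have h1 : v*ρ*v*ρ = 1 := by
        have := h
        calc v*ρ*v*ρ = (v*ρ)^2 := by simp [pow_two, mul_assoc]
        _ = 1 := this
      calc v*ρ*v = (v*ρ*v*ρ)*ρ⁻¹ := by group
      _ = ρ⁻¹ := by rw [h1, one_mul]
    · exact h
  have hvρi1 : v*ρ⁻¹ ≠ 1 := by
    intro h
    have : v = ρ := by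
      have h2 : v = (ρ⁻¹)⁻¹ := eq_inv_of_mul_eq_one_left h
      rwa [inv_inv] at h2
    rw [this] at hv2
    exact hρ2 hv2
  have hvρi3 : (v*ρ⁻¹)^3 = 1 := by
    rcases ord (v*ρ⁻¹) with h | h
    · exfalso
      apply hvρnotinv
      have h1 : v*ρ⁻¹*v*ρ⁻¹ = 1 := by
        calc v*ρ⁻¹*v*ρ⁻¹ = (v*ρ⁻¹)^2 := by simp [pow_two, mul_assoc]
        _ = 1 := h
      have h2 : v*ρ⁻¹*v = ρ := by
        calc v*ρ⁻¹*v = (v*ρ⁻¹*v*ρ⁻¹)*ρ := by group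
        _ = ρ := by rw [h1, one_mul]
      have h4 : (v*ρ⁻¹*v)⁻¹ = ρ⁻¹ := by rw [h2]
      calc v*ρ*v = (v*ρ⁻¹*v)⁻¹ := by rw [mul_inv_rev, mul_inv_rev, inv_inv, hvinv]; group
      _ = ρ⁻¹ := h4
    · exact h
  -- E1 and E2
  have key1 : ρ*v*ρ*v*ρ = v := by
    have h2 : v*(ρ*v*ρ*v*ρ) = 1 := by
      calc v*(ρ*v*ρ*v*ρ) = (v*ρ)^3 := by simp [pow_succ, mul_assoc]
      _ = 1 := hvρ3
    have h3 := eq_inv_of_mul_eq_one_right h2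
    rw [hvinv] at h3
    exact h3
  have hE1 : v*ρ*v = ρ⁻¹*v*ρ⁻¹ := by
    have h4 : ρ*(v*ρ*v)*ρ = ρ*(ρ⁻¹*v*ρ⁻¹)*ρ := by
      calc ρ*(v*ρ*v)*ρ = ρ*v*ρ*v*ρ := by group
      _ = v := key1
      _ = ρ*(ρ⁻¹*v*ρ⁻¹)*ρ := by group
    exact mul_left_cancel (mul_right_cancel h4)
  have key2 : ρ⁻¹*v*ρ⁻¹*v*ρ⁻¹ = v := by
    have h2 : v*(ρ⁻¹*v*ρ⁻¹*v*ρ⁻¹) = 1 := by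
      calc v*(ρ⁻¹*v*ρ⁻¹*v*ρ⁻¹) = (v*ρ⁻¹)^3 := by simp [pow_succ, mul_assoc]
      _ = 1 := hvρi3
    have h3 := eq_inv_of_mul_eq_one_right h2
    rw [hvinv] at h3
    exact h3
  have hE2 : v*ρ⁻¹*v = ρ*v*ρ := by
    have h4 : ρ⁻¹*(v*ρ⁻¹*v)*ρ⁻¹ = ρ⁻¹*(ρ*v*ρ)*ρ⁻¹ := by
      calc ρ⁻¹*(v*ρ⁻¹*v)*ρ⁻¹ = ρ⁻¹*v*ρ⁻¹*v*ρ⁻¹ := by group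
      _ = v := key2
      _ = ρ⁻¹*(ρ*v*ρ)*ρ⁻¹ := by group
    exact mul_left_cancel (mul_right_cancel h4)
  -- conjugation by t
  have htt : t*t = 1 := by rw [← pow_two]; exact ht
  have hconj : ∀ a b : H, (t*a*t)*(t*b*t) = t*(a*b)*t := by
    intro a b
    calc (t*a*t)*(t*b*t) = t*a*(t*t)*b*t := by group
    _ = t*(a*b)*t := by rw [htt]; group
  have htρi : t*ρ⁻¹*t = ρ := by
    calc t*ρ⁻¹*t = t⁻¹*ρ⁻¹*t⁻¹ := by rw [htinv]
    _ = (t*ρ*t)⁻¹ := by group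
    _ = ρ := by rw [htρ, inv_inv]
  have htvt : t*v*t = v := by
    rw [htv, mul_assoc, htt, mul_one]
  have huρu : (t*v)*ρ*(t*v) = ρ*v*ρ := by
    calc (t*v)*ρ*(t*v) = t*v*ρ*(v*t) := by rw [← htv]
    _ = t*(v*ρ*v)*t := by group
    _ = t*(ρ⁻¹*v*ρ⁻¹)*t := by rw [hE1]
    _ = t*(ρ⁻¹*(v*ρ⁻¹))*t := by group
    _ = (t*ρ⁻¹*t)*(t*(v*ρ⁻¹)*t) := (hconj _ _).symm
    _ = (t*ρ⁻¹*t)*((t*v*t)*(t*ρ⁻¹*t)) := by rw [hconj v ρ⁻¹]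
    _ = ρ*(v*ρ) := by rw [htρi, htvt]
    _ = ρ*v*ρ := by group
  set u := t*v with hudef
  clear_value u
  have huinv : u⁻¹ = u := inv_eq_self_of_sq hu2
  have huρ1 : u*ρ ≠ 1 := by
    intro h
    have h2 : u = ρ⁻¹ := eq_inv_of_mul_eq_one_left h
    rw [h2, inv_pow, inv_eq_one] at hu2
    exact hρ2 hu2
  rcases ord (u*ρ) with h | h
  · -- u inverts ρ : then ρ*v*ρ = ρ⁻¹ forces v = 1
    have h1 : u*ρ*u*ρ = 1 := by
      calc u*ρ*u*ρ = (u*ρ)^2 := by simp [pow_two, mul_assoc]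
      _ = 1 := h
    have h2 : u*ρ*u = ρ⁻¹ := by
      calc u*ρ*u = (u*ρ*u*ρ)*ρ⁻¹ := by group
      _ = ρ⁻¹ := by rw [h1, one_mul]
    have h3 : ρ*v*ρ = ρ⁻¹ := by rw [← huρu]; exact h2
    have hρρρ : ρ*ρ*ρ = 1 := by
      rw [← hρ3]; simp [pow_succ, mul_assoc]
    have h4 : v = 1 := by
      calc v = ρ⁻¹*(ρ*v*ρ)*ρ⁻¹ := by group
      _ = ρ⁻¹*ρ⁻¹*ρ⁻¹ := by rw [h3]
      _ = (ρ*ρ*ρ)⁻¹ := by group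
      _ = 1 := by rw [hρρρ, inv_one]
    exact hv1 h4
  · -- (uρ)³ = 1
    have keyu : ρ*u*ρ*u*ρ = u := by
      have h2 : u*(ρ*u*ρ*u*ρ) = 1 := by
        calc u*(ρ*u*ρ*u*ρ) = (u*ρ)^3 := by simp [pow_succ, mul_assoc]
        _ = 1 := h
      have h3 := eq_inv_of_mul_eq_one_right h2
      rw [huinv] at h3
      exact h3
    have hEu : u*ρ*u = ρ⁻¹*u*ρ⁻¹ := by
      have h4 : ρ*(u*ρ*u)*ρ = ρ*(ρ⁻¹*u*ρ⁻¹)*ρ := by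
        calc ρ*(u*ρ*u)*ρ = ρ*u*ρ*u*ρ := by group
        _ = u := keyu
        _ = ρ*(ρ⁻¹*u*ρ⁻¹)*ρ := by group
      exact mul_left_cancel (mul_right_cancel h4)
    have h2 : ρ*v*ρ = ρ⁻¹*u*ρ⁻¹ := by rw [← huρu]; exact hEu
    have hρρρ : ρ*ρ*ρ = 1 := by
      rw [← hρ3]; simp [pow_succ, mul_assoc]
    have hρsq : ρ*ρ = ρ⁻¹ := eq_inv_of_mul_eq_one_left hρρρ
    have h4 : u = ρ⁻¹*v*ρ⁻¹ := by
      calc u = ρ*(ρ⁻¹*u*ρ⁻¹)*ρ := by group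
      _ = ρ*(ρ*v*ρ)*ρ := by rw [← h2]
      _ = (ρ*ρ)*v*(ρ*ρ) := by group
      _ = ρ⁻¹*v*ρ⁻¹ := by rw [hρsq]
    have h9 : t*v = ρ⁻¹*v*ρ⁻¹ := by rw [← hudef]; exact h4
    have ht4 : t = ρ⁻¹*v*ρ⁻¹*v := by
      calc t = (t*v)*v⁻¹ := by group
      _ = (ρ⁻¹*v*ρ⁻¹)*v := by rw [h9, hvinv]
      _ = ρ⁻¹*v*ρ⁻¹*v := by group
    have h5 : (ρ⁻¹*v*ρ⁻¹*v)*(ρ⁻¹*v*ρ⁻¹*v) = ρ⁻¹*v := by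
      calc (ρ⁻¹*v*ρ⁻¹*v)*(ρ⁻¹*v*ρ⁻¹*v) = ρ⁻¹*v*ρ⁻¹*(v*ρ⁻¹*v)*ρ⁻¹*v := by group
      _ = ρ⁻¹*v*ρ⁻¹*(ρ*v*ρ)*ρ⁻¹*v := by rw [hE2]
      _ = ρ⁻¹*(v*v*v) := by group
      _ = ρ⁻¹*(v^2*v) := by simp [pow_two, mul_assoc]
      _ = ρ⁻¹*v := by rw [hv2, one_mul]
    have h6 : ρ⁻¹*v = 1 := by
      rw [← h5, ← ht4, ← pow_two, ht]
    have h7 : v = ρ := by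
      have h8 := congrArg (fun z => ρ * z) h6
      simpa using h8
    rw [h7] at hv2
    exact hρ2 hv2

end OneTwoThree

lemma pow_card_sylow {H : Type*} [Group H] {p : ℕ} (P : Sylow p H) {x : H}
    (hx : x ∈ (P : Subgroup H)) : ∃ k, x^(p^k) = 1 := by
  obtain ⟨k, hk⟩ := P.2 ⟨x, hx⟩
  refine ⟨k, ?_⟩
  have := congrArg Subtype.val hk
  push_cast at this
  simpa using this

lemma eq_one_of_pows {H : Type*} [Group H] {x : H} {p q k : ℕ} (hco : Nat.Coprime q p)
    (hxk : x^(p^k) = 1) (hq : x^q = 1) : x = 1 := by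
  have h1 : orderOf x ∣ p^k := orderOf_dvd_of_pow_eq_one hxk
  have h2 : orderOf x ∣ q := orderOf_dvd_of_pow_eq_one hq
  have h4 : orderOf x ∣ Nat.gcd q (p^k) := Nat.dvd_gcd h2 h1
  have hg : Nat.gcd q (p^k) = 1 := Nat.Coprime.gcd_eq_one (Nat.Coprime.pow_right _ hco)
  rw [hg, Nat.dvd_one] at h4
  exact orderOf_eq_one_iff.mp h4

/-- Lemma Y: a finite group in which every element satisfies `h² = 1` or `h³ = 1` has a normal
Sylow 2-subgroup or a normal Sylow 3-subgroup. -/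
theorem lemY {H : Type*} [Group H] [Finite H] (ord : ∀ h : H, h^2 = 1 ∨ h^3 = 1) :
    (∃ P : Sylow 2 H, (P : Subgroup H).Normal) ∨ (∃ P : Sylow 3 H, (P : Subgroup H).Normal) := by
  classical
  haveI : Fact (Nat.Prime 2) := ⟨Nat.prime_two⟩
  haveI : Fact (Nat.Prime 3) := ⟨Nat.prime_three⟩
  by_cases hcomm : ∀ a b : H, a^2 = 1 → b^2 = 1 → a*b = b*a
  · -- all involutions commute: they form a normal Sylow 2-subgroup
    left
    set W : Subgroup H :=
      { carrier := {h : H | h^2 = 1}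
        mul_mem' := by
          intro a b ha hb
          have h : Commute a b := hcomm a b ha hb
          show (a*b)^2 = 1
          rw [h.mul_pow]
          rw [show a^2 = 1 from ha, show b^2 = 1 from hb, one_mul]
        one_mem' := one_pow 2
        inv_mem' := by
          intro a ha
          show (a⁻¹)^2 = 1
          rw [inv_pow, show a^2 = 1 from ha, inv_one] } with hWdef
    have hWnormal : W.Normal := by
      constructor
      intro n hn g
      show (g*n*g⁻¹)^2 = 1
      rw [conj_pow, show n^2 = 1 from hn]
      simp
    have hWp : IsPGroup 2 W := fun x =>
      ⟨1, Subtype.ext (by rw [pow_one]; push_cast; exact x.2)⟩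
    obtain ⟨P⟩ : Nonempty (Sylow 2 H) := inferInstance
    have hle : (P : Subgroup H) ≤ W := by
      intro x hx
      show x^2 = 1
      rcases ord x with h | h
      · exact h
      · obtain ⟨k, hk⟩ := pow_card_sylow P hx
        rw [eq_one_of_pows (by norm_num) hk h, one_pow]
    exact ⟨P, by rw [sylow_coe_eq P hWp hle]; exact hWnormal⟩
  · push_neg at hcomm
    obtain ⟨t, t', ht2, ht'2, htt'⟩ := hcomm
    by_cases hinv : ∀ a e : H, a^2 = 1 → e^3 = 1 → a ≠ 1 → e ≠ 1 → a*e*a = e⁻¹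
    · -- every involution inverts every 3-element: the 3-elements form a normal Sylow 3-subgroup
      right
      set K : Subgroup H :=
        { carrier := {h : H | h^3 = 1}
          mul_mem' := by
            intro a b ha hb
            have ha' : a^3 = 1 := ha
            have hb' : b^3 = 1 := hb
            show (a*b)^3 = 1
            rcases ord (a*b) with h | h
            · by_cases hab1 : a*b = 1
              · rw [hab1, one_pow]
              by_cases ha1 : a = 1
              · rw [ha1, one_mul]; exact hb'
              by_cases hb1 : b = 1
              · rw [hb1, mul_one]; exact ha'
              exfalso
              have hgag : (a*b)*a*(a*b) = a⁻¹ := hinv (a*b) a h ha' hab1 ha1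
              have hginv : (a*b)⁻¹ = a*b := inv_eq_self_of_sq h
              have hgag2 : (a*b)*a⁻¹*(a*b) = a := by
                have h5 : ((a*b)*a*(a*b))⁻¹ = a := by rw [hgag, inv_inv]
                calc (a*b)*a⁻¹*(a*b) = (a*b)⁻¹*a⁻¹*(a*b)⁻¹ := by rw [hginv]
                _ = ((a*b)*a*(a*b))⁻¹ := by group
                _ = a := h5
              have hb2 : b^2 = 1 := by
                have hbeq : b = a⁻¹*(a*b) := by group
                calc b^2 = (a⁻¹*(a*b))^2 := by rw [← hbeq]
                _ = a⁻¹*((a*b)*a⁻¹*(a*b)) := by simp [pow_two, mul_assoc]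
                _ = a⁻¹*a := by rw [hgag2]
                _ = 1 := by simp
              have hbone : b = 1 := by
                calc b = b^3*(b^2)⁻¹ := by group
                _ = 1 := by rw [hb', hb2]; simp
              exact hb1 hbone
            · exact h
          one_mem' := one_pow 3
          inv_mem' := by
            intro a ha
            show (a⁻¹)^3 = 1
            rw [inv_pow, show a^3 = 1 from ha, inv_one] } with hKdef
    -- K is normal, a 3-group, and contains every Sylow 3-subgroup
      have hKnormal : K.Normal := by
        constructor
        intro n hn g
        show (g*n*g⁻¹)^3 = 1
        rw [conj_pow, show n^3 = 1 from hn]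
        simp
      have hKp : IsPGroup 3 K := fun x =>
        ⟨1, Subtype.ext (by rw [pow_one]; push_cast; exact x.2)⟩
      obtain ⟨P⟩ : Nonempty (Sylow 3 H) := inferInstance
      have hle : (P : Subgroup H) ≤ K := by
        intro x hx
        show x^3 = 1
        rcases ord x with h | h
        · obtain ⟨k, hk⟩ := pow_card_sylow P hx
          rw [eq_one_of_pows (by norm_num) hk h, one_pow]
        · exact h
      exact ⟨P, by rw [sylow_coe_eq P hKp hle]; exact hKnormal⟩
    · -- there is an A4-configuration: contradiction with the S3-configuration
      exfalso
      push_neg at hinv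
      obtain ⟨w, e, hw2, he3, hw1, he1, hwe⟩ := hinv
      have hnc : w*e ≠ e*w := fun h => no_mixed_comm ord hw2 hw1 he3 he1 h
      have hwc3 : (w*e)^3 = 1 := by
        rcases ord (w*e) with h | h
        · exfalso
          apply hwe
          have h1 : w*e*w*e = 1 := by
            calc w*e*w*e = (w*e)^2 := by simp [pow_two, mul_assoc]
            _ = 1 := h
          calc w*e*w = (w*e*w*e)*e⁻¹ := by group
          _ = e⁻¹ := by rw [h1, one_mul]
        · exact h
      exact Yprime ord ht2 ht'2 htt' hw2 he3 hwc3 hnc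

lemma zpowers_isPGroup' {H : Type*} [Group H] (p : ℕ) {k : ℕ} {x : H} (hx : x^(p^k) = 1) :
    IsPGroup p (Subgroup.zpowers x) := by
  intro g
  refine ⟨k, ?_⟩
  obtain ⟨m, hm⟩ := Subgroup.mem_zpowers_iff.mp g.2
  have hg : (g : H) ^ (p^k) = 1 := by
    rw [← hm, ← zpow_natCast, ← zpow_mul, mul_comm, zpow_mul, zpow_natCast, hx, one_zpow]
  refine Subtype.ext ?_
  push_cast
  simpa using hg

lemma mem_of_normal_sylow' {H : Type*} [Group H] {p : ℕ} [Fact p.Prime] [Finite H]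
    (P : Sylow p H) (hN : (P : Subgroup H).Normal) {x : H} {k : ℕ} (hx : x^(p^k) = 1) :
    x ∈ (P : Subgroup H) := by
  obtain ⟨Q, hQ⟩ := (zpowers_isPGroup' p hx).exists_le_sylow
  haveI := Sylow.unique_of_normal P hN
  have hQP : Q = P := Subsingleton.elim Q P
  rw [← hQP]
  exact hQ (Subgroup.mem_zpowers x)

lemma cube_of_pow3 {H : Type*} [Group H] {x : H} {k : ℕ} (hk : x^(3^k) = 1)
    (h46 : x^4 = 1 ∨ x^6 = 1) : x^3 = 1 := by
  rcases h46 with h4 | h6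
  · rw [eq_one_of_pows (by norm_num) hk h4, one_pow]
  · have hd1 : orderOf x ∣ 3^k := orderOf_dvd_of_pow_eq_one hk
    have hd2 : orderOf x ∣ 6 := orderOf_dvd_of_pow_eq_one h6
    obtain ⟨j, hj, hoe⟩ := (Nat.dvd_prime_pow Nat.prime_three).mp hd1
    have hj1 : j ≤ 1 := by
      by_contra hj2
      push_neg at hj2
      have h9 : (9:ℕ) ∣ 3^j := by
        calc (9:ℕ) = 3^2 := by norm_num
        _ ∣ 3^j := pow_dvd_pow 3 hj2
      have h96 : (9:ℕ) ∣ 6 := dvd_trans (hoe ▸ h9) hd2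
      norm_num at h96
    have h3 : orderOf x ∣ 3 := by
      rw [hoe]
      interval_cases j
      · norm_num
      · norm_num
    exact orderOf_dvd_iff_pow_eq_one.mp h3

lemma pow4_of_pow2 {H : Type*} [Group H] {x : H} {k : ℕ} (hk : x^(2^k) = 1)
    (h46 : x^4 = 1 ∨ x^6 = 1) : x^4 = 1 := by
  rcases h46 with h4 | h6
  · exact h4
  · have hd1 : orderOf x ∣ 2^k := orderOf_dvd_of_pow_eq_one hk
    have hd2 : orderOf x ∣ 6 := orderOf_dvd_of_pow_eq_one h6
    obtain ⟨j, hj, hoe⟩ := (Nat.dvd_prime_pow Nat.prime_two).mp hd1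
    have hj1 : j ≤ 1 := by
      by_contra hj2
      push_neg at hj2
      have h9 : (4:ℕ) ∣ 2^j := by
        calc (4:ℕ) = 2^2 := by norm_num
        _ ∣ 2^j := pow_dvd_pow 2 hj2
      have h96 : (4:ℕ) ∣ 6 := dvd_trans (hoe ▸ h9) hd2
      norm_num at h96
    have h3 : orderOf x ∣ 2 := by
      rw [hoe]
      interval_cases j
      · norm_num
      · norm_num
    have h2 : x^2 = 1 := orderOf_dvd_iff_pow_eq_one.mp h3
    calc x^4 = (x^2)^2 := by rw [← pow_mul]
    _ = 1 := by rw [h2, one_pow]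

/-- every finite group with property (P) has a normal Sylow 2-subgroup
or a normal Sylow 3-subgroup. -/
theorem stmt12 (G : Type*) [Group G] [Finite G] (hP : PropertyP G) :
    (∃ P : Sylow 2 G, (P : Subgroup G).Normal) ∨
    (∃ Q : Sylow 3 G, (Q : Subgroup G).Normal) := by
  classical
  haveI : Fact (Nat.Prime 2) := ⟨Nat.prime_two⟩
  haveI : Fact (Nat.Prime 3) := ⟨Nat.prime_three⟩
  obtain ⟨t₀, ht₀⟩ : ∃ t₀ : G, orderOf t₀ = 2 :=
    exists_prime_orderOf_dvd_card' 2 (even_iff_two_dvd.mp hP.1)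
  have ht₀2 : t₀*t₀ = 1 := by
    have h := pow_orderOf_eq_one t₀
    rw [ht₀, pow_two] at h
    exact h
  have ht₀1 : t₀ ≠ 1 := by
    intro h
    rw [h, orderOf_one] at ht₀
    norm_num at ht₀
  have hdich : ∀ y : G, y^4 = 1 ∨ y^6 = 1 := dich46 hP t₀ ht₀2 ht₀1
  -- T : the set of solutions of g² = 1 is a subgroup since involutions commute
  set T : Subgroup G :=
    { carrier := {g : G | g*g = 1}
      mul_mem' := by
        intro a b ha hb
        have ha' : a*a = 1 := ha
        have hb' : b*b = 1 := hb
        have hb4 : b^4 = 1 := by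
          calc b^4 = (b*b)*(b*b) := by simp [pow_succ, mul_assoc]
          _ = 1 := by rw [hb']; simp
        have hcomm : a*b = b*a := comm24 hP a b ha' hb4
        show (a*b)*(a*b) = 1
        calc (a*b)*(a*b) = a*(b*a)*b := by group
        _ = a*(a*b)*b := by rw [← hcomm]
        _ = (a*a)*(b*b) := by group
        _ = 1 := by rw [ha', hb', one_mul]
      one_mem' := by
        show (1:G)*1 = 1
        simp
      inv_mem' := by
        intro a ha
        have ha' : a*a = 1 := ha
        show a⁻¹*a⁻¹ = 1
        have hai : a⁻¹ = a := inv_eq_of_mul_eq_one_right ha'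
        rw [hai]
        exact ha' } with hTdef
  haveI hTnormal : T.Normal := by
    constructor
    intro n hn g
    have hn' : n*n = 1 := hn
    show (g*n*g⁻¹)*(g*n*g⁻¹) = 1
    calc (g*n*g⁻¹)*(g*n*g⁻¹) = g*(n*n)*g⁻¹ := by group
    _ = 1 := by rw [hn']; simp
  -- every element of the quotient squares or cubes to 1
  have hordbar : ∀ h : G ⧸ T, h^2 = 1 ∨ h^3 = 1 := by
    intro h
    obtain ⟨g, rfl⟩ := QuotientGroup.mk'_surjective T h
    rcases hdich g with h4 | h6
    · left
      rw [← map_pow]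
      show ((g^2 : G) : G ⧸ T) = 1
      rw [QuotientGroup.eq_one_iff]
      show (g^2)*(g^2) = 1
      calc (g^2)*(g^2) = g^4 := by rw [← pow_add]
      _ = 1 := h4
    · right
      rw [← map_pow]
      show ((g^3 : G) : G ⧸ T) = 1
      rw [QuotientGroup.eq_one_iff]
      show (g^3)*(g^3) = 1
      calc (g^3)*(g^3) = g^6 := by rw [← pow_add]
      _ = 1 := h6
  by_cases hAB : ∀ s g : G, s*s = 1 → s*g = g*s
  · -- CASE A : all involutions are central
    rcases lemY hordbar with ⟨Pbar, hPbar⟩ | ⟨Qbar, hQbar⟩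
    · -- lift the normal Sylow 2-subgroup
      left
      set K : Subgroup G := Subgroup.comap (QuotientGroup.mk' T) (Pbar : Subgroup (G ⧸ T))
        with hKdef
      have hKnormal : K.Normal := Subgroup.Normal.comap hPbar _
      have hKp : IsPGroup 2 K := by
        intro x
        obtain ⟨k, hk⟩ := pow_card_sylow Pbar (Subgroup.mem_comap.mp x.2)
        have h1 : ((x : G)^(2^k) : G) ∈ T := by
          have h2 : QuotientGroup.mk' T ((x:G)^(2^k)) = 1 := by rw [map_pow]; exact hk
          have h3 := (QuotientGroup.eq_one_iff ((x:G)^(2^k))).mp h2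
          exact h3
        have h2 : ((x:G)^(2^k))*((x:G)^(2^k)) = 1 := h1
        refine ⟨k+1, Subtype.ext ?_⟩
        push_cast
        calc (x:G)^(2^(k+1)) = ((x:G)^(2^k))^2 := by rw [← pow_mul, ← pow_succ]
        _ = 1 := by rw [pow_two]; exact h2
      obtain ⟨P⟩ : Nonempty (Sylow 2 G) := inferInstance
      have hle : (P : Subgroup G) ≤ K := by
        intro x hx
        obtain ⟨k, hk⟩ := pow_card_sylow P hx
        have h1 : (QuotientGroup.mk' T x)^(2^k) = 1 := by rw [← map_pow, hk, map_one]
        exact Subgroup.mem_comap.mpr (mem_of_normal_sylow' Pbar hPbar h1)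
      exact ⟨P, by rw [sylow_coe_eq P hKp hle]; exact hKnormal⟩
    · -- lift the normal Sylow 3-subgroup, using that T is central
      right
      set K : Subgroup G := Subgroup.comap (QuotientGroup.mk' T) (Qbar : Subgroup (G ⧸ T))
        with hKdef
      have hKnormal : K.Normal := Subgroup.Normal.comap hQbar _
      have hmem : ∀ x : K, QuotientGroup.mk' T (x:G) ∈ (Qbar : Subgroup (G ⧸ T)) :=
        fun x => Subgroup.mem_comap.mp x.2
      set f : ↥K →* ↥(Qbar : Subgroup (G ⧸ T)) :=
        ((QuotientGroup.mk' T).comp K.subtype).codRestrict _ hmem with hfdef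
      have hker : f.ker ≤ Subgroup.center ↥K := by
        intro x hx
        rw [Subgroup.mem_center_iff]
        intro k
        have h2 : QuotientGroup.mk' T (x:G) = 1 := by
          rw [MonoidHom.mem_ker] at hx
          exact congrArg Subtype.val hx
        have h1 : (x:G) ∈ T := (QuotientGroup.eq_one_iff (x:G)).mp h2
        have h3 : (x:G)*(x:G) = 1 := h1
        exact Subtype.ext (hAB (x:G) (k:G) h3).symm
      have hnil : Group.IsNilpotent ↥K :=
        haveI := IsPGroup.isNilpotent Qbar.2; isNilpotent_of_ker_le_center f hker
      haveI : Group.IsNilpotent ↥K := hnil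
      have hnc : NormalizerCondition ↥K := normalizerCondition_of_isNilpotent
      obtain ⟨P₃⟩ : Nonempty (Sylow 3 ↥K) := inferInstance
      have hP₃normal : (P₃ : Subgroup ↥K).Normal := Sylow.normal_of_normalizerCondition hnc P₃
      have hcube_mem : ∀ x : ↥K, (x:G)^3 = 1 → x ∈ (P₃ : Subgroup ↥K) := by
        intro x hx3
        have hx3' : x^(3^1) = 1 := by
          rw [pow_one]
          exact Subtype.ext (by push_cast; exact hx3)
        exact mem_of_normal_sylow' P₃ hP₃normal hx3'
      have hclosed : ∀ a b : G, a ∈ K → b ∈ K → a^3 = 1 → b^3 = 1 → (a*b)^3 = 1 := by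
        intro a b haK hbK ha3 hb3
        have h1 : (⟨a, haK⟩ : ↥K) ∈ (P₃ : Subgroup ↥K) := hcube_mem _ ha3
        have h2 : (⟨b, hbK⟩ : ↥K) ∈ (P₃ : Subgroup ↥K) := hcube_mem _ hb3
        have h3 : ((⟨a, haK⟩ : ↥K) * (⟨b, hbK⟩ : ↥K)) ∈ (P₃ : Subgroup ↥K) := mul_mem h1 h2
        obtain ⟨k, hk⟩ := pow_card_sylow P₃ h3
        have hk' : (a*b)^(3^k) = 1 := by
          have h4 := congrArg Subtype.val hk
          push_cast at h4
          simpa using h4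
        exact cube_of_pow3 hk' (hdich (a*b))
      set Q : Subgroup G :=
        { carrier := {g : G | g ∈ K ∧ g^3 = 1}
          mul_mem' := by
            intro a b ha hb
            exact ⟨mul_mem ha.1 hb.1, hclosed a b ha.1 hb.1 ha.2 hb.2⟩
          one_mem' := ⟨one_mem K, one_pow 3⟩
          inv_mem' := by
            intro a ha
            exact ⟨inv_mem ha.1, by rw [inv_pow, ha.2, inv_one]⟩ } with hQdef
      have hQnormal : Q.Normal := by
        constructor
        intro n hn g
        refine ⟨hKnormal.conj_mem n hn.1 g, ?_⟩
        rw [conj_pow, hn.2]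
        simp
      have hQp : IsPGroup 3 Q := fun x =>
        ⟨1, Subtype.ext (by rw [pow_one]; push_cast; exact x.2.2)⟩
      obtain ⟨P⟩ : Nonempty (Sylow 3 G) := inferInstance
      have hle : (P : Subgroup G) ≤ Q := by
        intro x hx
        obtain ⟨k, hk⟩ := pow_card_sylow P hx
        have hx3 : x^3 = 1 := cube_of_pow3 hk (hdich x)
        have hmkmem : QuotientGroup.mk' T x ∈ (Qbar : Subgroup (G ⧸ T)) := by
          have h1 : (QuotientGroup.mk' T x)^(3^1) = 1 := by
            rw [pow_one, ← map_pow, hx3, map_one]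
          exact mem_of_normal_sylow' Qbar hQbar h1
        exact ⟨Subgroup.mem_comap.mpr hmkmem, hx3⟩
      exact ⟨P, by rw [sylow_coe_eq P hQp hle]; exact hQnormal⟩
  · -- CASE B : some involution fails to be central
    push_neg at hAB
    obtain ⟨t, y, ht2, hty⟩ := hAB
    have ht1 : t ≠ 1 := by
      rintro rfl
      exact hty (by rw [one_mul, mul_one])
    have hy3 : y^3 = 1 := cube_noncomm hP t y ht2 hty
    have hy1 : y ≠ 1 := by
      rintro rfl
      exact hty (by rw [one_mul, mul_one])
    have hy2 : y^2 ≠ 1 := by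
      intro h
      apply hy1
      calc y = y^3*(y^2)⁻¹ := by group
      _ = 1 := by rw [hy3, h]; simp
    -- B1 : no nontrivial involution commutes with y
    have hB1 : ∀ s : G, s*s = 1 → s ≠ 1 → s*y ≠ y*s := by
      intro s hs2 hs1 hcomm
      have hs2' : s^2 = 1 := by rw [pow_two]; exact hs2
      have hcomm' : Commute y s := (show Commute s y from hcomm).symm
      have hy6 : y^6 = 1 := by
        rw [show (6:ℕ) = 3*2 from by norm_num, pow_mul, hy3, one_pow]
      have hs6 : s^6 = 1 := by
        rw [show (6:ℕ) = 2*3 from by norm_num, pow_mul, hs2', one_pow]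
      have hu6 : (y*s)^6 = 1 := by
        rw [hcomm'.mul_pow, hy6, hs6, one_mul]
      have hu2 : (y*s)^2 ≠ 1 := by
        rw [hcomm'.mul_pow, hs2', mul_one]
        exact hy2
      have hu3 : (y*s)^3 ≠ 1 := by
        rw [hcomm'.mul_pow, hy3, one_mul]
        rw [show s^3 = s^2*s from by rw [← pow_succ]]
        rw [hs2', one_mul]
        exact hs1
      have hcom : t*(y*s) = (y*s)*t := comm6 hP t (y*s) ht2 hu6 hu2 hu3
      have hcomt : Commute t (y*s) := hcom
      have h4 : t*(y*s)^4 = (y*s)^4*t := (hcomt.pow_right 4).eq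
      have hu4 : (y*s)^4 = y := by
        rw [hcomm'.mul_pow]
        rw [show y^4 = y^3*y from by rw [← pow_succ], hy3, one_mul]
        rw [show s^4 = (s^2)^2 from by rw [← pow_mul], hs2', one_pow, mul_one]
      rw [hu4] at h4
      exact hty h4
    by_cases h4ex : ∃ v : G, v^4 = 1 ∧ v^2 ≠ 1
    · -- there is an element of order 4
      obtain ⟨v₀, hv₀4, hv₀2⟩ := h4ex
      have hv₀sq : (v₀^2)*(v₀^2) = 1 := by
        calc (v₀^2)*(v₀^2) = v₀^4 := by rw [← pow_add]
        _ = 1 := hv₀4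
      have hσy : (v₀^2)*y ≠ y*(v₀^2) := hB1 (v₀^2) hv₀sq hv₀2
      have hkey3 : (v₀*y)^3 = 1 := by
        apply cube_noncomm hP (v₀^2) (v₀*y) hv₀sq
        intro hco
        apply hσy
        have h1 : v₀*((v₀^2)*y) = v₀*(y*(v₀^2)) := by
          calc v₀*((v₀^2)*y) = (v₀^2)*(v₀*y) := by group
          _ = (v₀*y)*(v₀^2) := hco
          _ = v₀*(y*(v₀^2)) := by group
        exact mul_left_cancel h1
      -- pass to the quotient
      have hbar2 : (QuotientGroup.mk' T v₀)^2 = 1 := by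
        rw [← map_pow]
        show ((v₀^2 : G) : G ⧸ T) = 1
        rw [QuotientGroup.eq_one_iff]
        exact hv₀sq
      have hbarv1 : QuotientGroup.mk' T v₀ ≠ 1 := by
        intro h
        have h1 : (v₀ : G) ∈ T := (QuotientGroup.eq_one_iff _).mp h
        have h2 : v₀*v₀ = 1 := h1
        apply hv₀2
        rw [pow_two]
        exact h2
      have hbary3 : (QuotientGroup.mk' T y)^3 = 1 := by
        rw [← map_pow]
        show ((y^3 : G) : G ⧸ T) = 1
        rw [QuotientGroup.eq_one_iff]
        rw [hy3]
        exact one_mem T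
      have hbary1 : QuotientGroup.mk' T y ≠ 1 := by
        intro h
        have h1 : (y : G) ∈ T := (QuotientGroup.eq_one_iff _).mp h
        have h2 : y*y = 1 := h1
        apply hy2
        rw [pow_two]
        exact h2
      have hbarvy3 : ((QuotientGroup.mk' T v₀)*(QuotientGroup.mk' T y))^3 = 1 := by
        rw [← map_mul, ← map_pow]
        show (((v₀*y)^3 : G) : G ⧸ T) = 1
        rw [QuotientGroup.eq_one_iff]
        rw [hkey3]
        exact one_mem T
      have hbarnc : (QuotientGroup.mk' T v₀)*(QuotientGroup.mk' T y) ≠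
          (QuotientGroup.mk' T y)*(QuotientGroup.mk' T v₀) := by
        intro h
        exact no_mixed_comm hordbar hbar2 hbarv1 hbary3 hbary1 h
      have hcommbar : ∀ a b : G ⧸ T, a^2 = 1 → b^2 = 1 → a*b = b*a := by
        intro a b ha hb
        by_contra hab
        exact Yprime hordbar ha hb hab hbar2 hbary3 hbarvy3 hbarnc
      -- the involutions of the quotient form a normal subgroup; its preimage is the
      -- normal Sylow 2-subgroup of G
      left
      set Wbar : Subgroup (G ⧸ T) :=
        { carrier := {h : G ⧸ T | h^2 = 1}
          mul_mem' := by
            intro a b ha hb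
            have h : Commute a b := hcommbar a b ha hb
            show (a*b)^2 = 1
            rw [h.mul_pow]
            rw [show a^2 = 1 from ha, show b^2 = 1 from hb, one_mul]
          one_mem' := one_pow 2
          inv_mem' := by
            intro a ha
            show (a⁻¹)^2 = 1
            rw [inv_pow, show a^2 = 1 from ha, inv_one] } with hWdef
      have hWnormal : Wbar.Normal := by
        constructor
        intro n hn g
        show (g*n*g⁻¹)^2 = 1
        rw [conj_pow, show n^2 = 1 from hn]
        simp
      set S : Subgroup G := Subgroup.comap (QuotientGroup.mk' T) Wbar with hSdef
      have hSnormal : S.Normal := Subgroup.Normal.comap hWnormal _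
      have hSp : IsPGroup 2 S := by
        intro x
        refine ⟨2, Subtype.ext ?_⟩
        push_cast
        have h1 : (QuotientGroup.mk' T (x:G))^2 = 1 := x.2
        have h2 : ((x:G)^2 : G) ∈ T := by
          have h3 : QuotientGroup.mk' T ((x:G)^2) = 1 := by rw [map_pow]; exact h1
          exact (QuotientGroup.eq_one_iff _).mp h3
        have h3 : ((x:G)^2)*((x:G)^2) = 1 := h2
        calc (x:G)^(2^2) = ((x:G)^2)*((x:G)^2) := by rw [show ((2:ℕ)^2) = 2+2 from rfl, pow_add]
        _ = 1 := h3
      obtain ⟨P⟩ : Nonempty (Sylow 2 G) := inferInstance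
      have hle : (P : Subgroup G) ≤ S := by
        intro x hx
        obtain ⟨k, hk⟩ := pow_card_sylow P hx
        have hx4 : x^4 = 1 := pow4_of_pow2 hk (hdich x)
        show QuotientGroup.mk' T x ∈ Wbar
        show (QuotientGroup.mk' T x)^2 = 1
        rw [← map_pow]
        show ((x^2 : G) : G ⧸ T) = 1
        rw [QuotientGroup.eq_one_iff]
        show (x^2)*(x^2) = 1
        calc (x^2)*(x^2) = x^4 := by rw [← pow_add]
        _ = 1 := hx4
      exact ⟨P, by rw [sylow_coe_eq P hSp hle]; exact hSnormal⟩
    · -- no element of order 4 : T itself is a normal Sylow 2-subgroup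
      left
      push_neg at h4ex
      have hTp : IsPGroup 2 T := by
        intro x
        refine ⟨1, Subtype.ext ?_⟩
        push_cast
        have h2 : (x:G)^2 = 1 := by rw [pow_two]; exact x.2
        calc (x:G)^(2^1) = (x:G)^2 := by norm_num
        _ = 1 := h2
      obtain ⟨P⟩ : Nonempty (Sylow 2 G) := inferInstance
      have hle : (P : Subgroup G) ≤ T := by
        intro x hx
        obtain ⟨k, hk⟩ := pow_card_sylow P hx
        have hx4 : x^4 = 1 := pow4_of_pow2 hk (hdich x)
        have hx2 : x^2 = 1 := h4ex x hx4
        show x*x = 1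
        rw [← pow_two]
        exact hx2
      exact ⟨P, by rw [sylow_coe_eq P hTp hle]; exact hTnormal⟩
end
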